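/- arXiv:1701.07013 — 13 statements merged into one kernel-verified Lean document; each statement's English description precedes it below -/
import Mathlib

section
/- If for every x ∈ ℝ², x₁² - x₂² ≥ 0 implies x₁²(x₁² - x₂²) ≥ 0, then there is no real number t ≥ 0 such that x₁²(x₁² - x₂²) - t(x₁² - x₂²) ≥ 0 for all (x₁, x₂) ∈ ℝ². (In fact the inclusion of sets holds, and no such t exists.) -/
theorem stmt_0 :
    (∀ x : ℝ × ℝ, 0 ≤ x.1 ^ 2 - x.2 ^ 2 → 0 ≤ x.1 ^ 2 * (x.1 ^ 2 - x.2 ^ 2)) ∧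
    ¬ ∃ t : ℝ, 0 ≤ t ∧ ∀ x : ℝ × ℝ,
      0 ≤ x.1 ^ 2 * (x.1 ^ 2 - x.2 ^ 2) - t * (x.1 ^ 2 - x.2 ^ 2) := by
  constructor
  · intro x h
    exact mul_nonneg (sq_nonneg _) h
  · rintro ⟨t, ht, h⟩
    rcases eq_or_lt_of_le ht with rfl | ht
    · have := h (1, 2)
      norm_num at this
    · have := h (Real.sqrt (t / 2), 0)
      have hs : (Real.sqrt (t / 2)) ^ 2 = t / 2 := Real.sq_sqrt (by linarith)
      simp only at this
      rw [hs] at this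
      nlinarith
end

section
/- Let f, g be real polynomials of degree at most 2 in n variables, and suppose there exists a point x' ∈ ℝⁿ with g(x') > 0. Then {x : g(x) ≥ 0} ⊆ {x : f(x) ≥ 0} if and only if there exists a real number t ≥ 0 such that f(x) - t·g(x) ≥ 0 for all x ∈ ℝⁿ. -/
/-!
Restricted to the line through a point `x` with `g x > 0` and a point `y` with `g y < 0`, both
`f` and `g` become quadratics in one variable. There `g` has a root `r` between the two points and
a second root (possibly at infinity), where `f ≥ 0`; interpolating `f` at these roots gives
`f y / g y ≤ f x / g x`. Hence `t = inf {f x / g x | g x > 0}`, which is `≥ 0` because `f ≥ 0`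
where `g > 0`, satisfies `f - t g ≥ 0` on both `{g > 0}` and `{g < 0}`.
-/

open MvPolynomial

open Filter Topology in
lemma leading_coeff_nonneg_of_quadratic_nonneg_on_Iic {a₂ a₁ a₀ r : ℝ}
    (h : ∀ s ≤ r, 0 ≤ a₂ * s ^ 2 + a₁ * s + a₀) : 0 ≤ a₂ := by
  have hlim : Tendsto (fun s : ℝ => a₂ + a₁ * s⁻¹ + a₀ * s⁻¹ ^ 2) atBot (𝓝 a₂) := by
    have h0 := tendsto_inv_atBot_zero (𝕜 := ℝ)
    simpa using ((h0.const_mul a₁).const_add a₂).add ((h0.pow 2).const_mul a₀)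
  refine ge_of_tendsto hlim ?_
  filter_upwards [eventually_le_atBot (min r (-1))] with s hs
  have hs0 : s ≠ 0 := by linarith [min_le_right r (-1)]
  have key : a₂ + a₁ * s⁻¹ + a₀ * s⁻¹ ^ 2 = (a₂ * s ^ 2 + a₁ * s + a₀) * s⁻¹ ^ 2 := by
    field_simp
  rw [key]
  exact mul_nonneg (h s (hs.trans (min_le_left _ _))) (sq_nonneg _)

/-- The left-hand side is `b₂ ^ 2 * a (-m / b₂)`, the value of `a` at the second root of
`(s - r) * (b₂ * s + m)` in homogeneous coordinates; when `b₂ = 0` that root is at infinity and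
the value is `a₂ * m ^ 2`. -/
lemma homogenized_nonneg_at_second_root {a₂ a₁ a₀ r b₂ m : ℝ} (hm : m < 0)
    (h : ∀ s, 0 ≤ (s - r) * (b₂ * s + m) → 0 ≤ a₂ * s ^ 2 + a₁ * s + a₀) :
    0 ≤ a₂ * m ^ 2 - a₁ * m * b₂ + a₀ * b₂ ^ 2 := by
  rcases eq_or_ne b₂ 0 with rfl | hb₂
  · have ha₂ : 0 ≤ a₂ := leading_coeff_nonneg_of_quadratic_nonneg_on_Iic (r := r) fun s hs =>
      h s (by nlinarith)
    simpa using mul_nonneg ha₂ (sq_nonneg m)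
  · have hq := h (-m / b₂) (by field_simp; simp)
    have key : a₂ * m ^ 2 - a₁ * m * b₂ + a₀ * b₂ ^ 2
        = (a₂ * (-m / b₂) ^ 2 + a₁ * (-m / b₂) + a₀) * b₂ ^ 2 := by
      field_simp; ring
    rw [key]
    exact mul_nonneg hq (sq_nonneg _)

lemma cross_le_of_factor_nonneg {a₂ a₁ a₀ r b₂ m : ℝ} (hr₀ : 0 < r) (hr₁ : r < 1)
    (hm : m < 0) (hb₂m : b₂ + m < 0)
    (h : ∀ s, 0 ≤ (s - r) * (b₂ * s + m) → 0 ≤ a₂ * s ^ 2 + a₁ * s + a₀) :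
    a₀ * ((1 - r) * (b₂ + m)) ≤ (a₂ + a₁ + a₀) * (-(r * m)) := by
  have har := h r (by simp)
  have hA := homogenized_nonneg_at_second_root hm h
  have hℓr : 0 < -(b₂ * r + m) := by nlinarith
  -- Lagrange interpolation of `a` at the two roots `r` and `-m / b₂` of the constraint.
  have key : -(b₂ * r + m) * ((a₂ + a₁ + a₀) * (-(r * m)) - a₀ * ((1 - r) * (b₂ + m))) =
      (a₂ * r ^ 2 + a₁ * r + a₀) * (m * (b₂ + m)) +
        (a₂ * m ^ 2 - a₁ * m * b₂ + a₀ * b₂ ^ 2) * (r * (1 - r)) := by ring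
  rw [← sub_nonneg]
  refine nonneg_of_mul_nonneg_right ?_ hℓr
  rw [key]
  exact add_nonneg (mul_nonneg har (mul_nonneg_of_nonpos_of_nonpos hm.le hb₂m.le))
    (mul_nonneg hA (by nlinarith))

lemma quadratic_cross_le {a₂ a₁ a₀ b₂ b₁ b₀ : ℝ}
    (h : ∀ s, 0 ≤ b₂ * s ^ 2 + b₁ * s + b₀ → 0 ≤ a₂ * s ^ 2 + a₁ * s + a₀)
    (hb₀ : 0 < b₀) (hb₁ : b₂ + b₁ + b₀ < 0) :
    a₀ * (b₂ + b₁ + b₀) ≤ (a₂ + a₁ + a₀) * b₀ := by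
  obtain ⟨r, ⟨hr₀, hr₁⟩, hr⟩ : ∃ r ∈ Set.Ioo (0 : ℝ) 1, b₂ * r ^ 2 + b₁ * r + b₀ = 0 :=
    intermediate_value_Ioo' zero_le_one (by fun_prop) (by simpa using ⟨hb₁, hb₀⟩)
  set m := b₂ * r + b₁
  have hfactor : ∀ s, b₂ * s ^ 2 + b₁ * s + b₀ = (s - r) * (b₂ * s + m) := fun s => by
    linear_combination hr
  have h0 : b₀ = -(r * m) := by linear_combination hfactor 0
  have h1 : b₂ + b₁ + b₀ = (1 - r) * (b₂ + m) := by linear_combination hfactor 1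
  have hm : m < 0 := by nlinarith
  have hb₂m : b₂ + m < 0 := by nlinarith
  rw [h1, h0]
  exact cross_le_of_factor_nonneg hr₀ hr₁ hm hb₂m fun s hs => h s (hfactor s ▸ hs)

lemma Polynomial.eval_eq_of_natDegree_le_two {R : Type*} [CommSemiring R] {q : Polynomial R}
    (hq : q.natDegree ≤ 2) (s : R) :
    q.eval s = q.coeff 2 * s ^ 2 + q.coeff 1 * s + q.coeff 0 := by
  rw [Polynomial.eval_eq_sum_range' (n := 3) (by omega)]
  simp only [Finset.sum_range_succ, Finset.sum_range_zero]
  ring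

namespace MvPolynomial

variable {σ R : Type*} [CommSemiring R]

lemma eval_aeval_affineLine (p : MvPolynomial σ R) (x v : σ → R) (s : R) :
    (aeval (fun i => Polynomial.C (v i) * Polynomial.X + Polynomial.C (x i)) p).eval s =
      eval (fun i => v i * s + x i) p := by
  rw [← Polynomial.coe_aeval_eq_eval, ← AlgHom.comp_apply, comp_aeval, ← coe_aeval_eq_eval]
  simp only [map_add, map_mul, Polynomial.aeval_C, Polynomial.aeval_X, Algebra.algebraMap_self,
    RingHom.id_apply]
  rfl

lemma exists_quadratic_eval_affineLine {p : MvPolynomial σ R} (hp : p.totalDegree ≤ 2)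
    (x v : σ → R) :
    ∃ c₂ c₁ c₀ : R, ∀ s, eval (fun i => v i * s + x i) p = c₂ * s ^ 2 + c₁ * s + c₀ := by
  set q := aeval (fun i => Polynomial.C (v i) * Polynomial.X + Polynomial.C (x i)) p
  have hq : q.natDegree ≤ 2 := by
    simpa using aeval_natDegree_le p hp _ fun i => Polynomial.natDegree_linear_le
  exact ⟨q.coeff 2, q.coeff 1, q.coeff 0, fun s => by
    rw [← eval_aeval_affineLine, Polynomial.eval_eq_of_natDegree_le_two hq]⟩

lemma eval_mul_eval_le_of_quadratic {f g : MvPolynomial σ ℝ}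
    (hf : f.totalDegree ≤ 2) (hg : g.totalDegree ≤ 2)
    (hfg : ∀ z, 0 ≤ eval z g → 0 ≤ eval z f) {x y : σ → ℝ}
    (hx : 0 < eval x g) (hy : eval y g < 0) :
    eval x f * eval y g ≤ eval y f * eval x g := by
  obtain ⟨a₂, a₁, a₀, ha⟩ := exists_quadratic_eval_affineLine hf x (y - x)
  obtain ⟨b₂, b₁, b₀, hb⟩ := exists_quadratic_eval_affineLine hg x (y - x)
  have hline : ∀ s, 0 ≤ b₂ * s ^ 2 + b₁ * s + b₀ → 0 ≤ a₂ * s ^ 2 + a₁ * s + a₀ := by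
    intro s hs
    rw [← ha]
    exact hfg _ (by rwa [hb])
  have hfx : eval x f = a₀ := by simpa using ha 0
  have hfy : eval y f = a₂ + a₁ + a₀ := by simpa using ha 1
  have hgx : eval x g = b₀ := by simpa using hb 0
  have hgy : eval y g = b₂ + b₁ + b₀ := by simpa using hb 1
  rw [hgx] at hx
  rw [hgy] at hy
  rw [hfx, hfy, hgx, hgy]
  exact quadratic_cross_le hline hx hy

end MvPolynomial

lemma exists_nonneg_forall_sub_mul_nonneg {α : Type*} {F G : α → ℝ} {x₀ : α} (hx₀ : 0 < G x₀)
    (hFG : ∀ x, 0 ≤ G x → 0 ≤ F x)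
    (hcross : ∀ x y, 0 < G x → G y < 0 → F x * G y ≤ F y * G x) :
    ∃ t, 0 ≤ t ∧ ∀ x, 0 ≤ F x - t * G x := by
  -- `t` is the infimum of `F / G` over `{G > 0}`; `hcross` puts `F / G` on `{G < 0}` below it.
  set T := (fun x => F x / G x) '' {x | 0 < G x}
  have hT : T.Nonempty := ⟨_, Set.mem_image_of_mem _ hx₀⟩
  have hT₀ : BddBelow T := ⟨0, by
    rintro _ ⟨x, hx, rfl⟩
    exact div_nonneg (hFG x hx.le) hx.le⟩
  refine ⟨sInf T, le_csInf hT fun _ ⟨x, hx, hxt⟩ => hxt ▸ div_nonneg (hFG x hx.le) hx.le,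
    fun y => ?_⟩
  rcases lt_trichotomy (G y) 0 with hy | hy | hy
  · have : F y / G y ≤ sInf T := le_csInf hT <| by
      rintro _ ⟨x, hx, rfl⟩
      rw [div_le_iff_of_neg hy, div_mul_eq_mul_div, div_le_iff₀ hx]
      exact hcross x y hx hy
    rw [div_le_iff_of_neg hy] at this
    linarith
  · simpa [hy] using hFG y hy.ge
  · have : sInf T ≤ F y / G y := csInf_le hT₀ ⟨y, hy, rfl⟩
    rw [le_div_iff₀ hy] at this
    linarith

theorem stmt_1 (n : ℕ) (f g : MvPolynomial (Fin n) ℝ)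
    (hf : f.totalDegree ≤ 2) (hg : g.totalDegree ≤ 2)
    (x' : Fin n → ℝ) (hx' : 0 < eval x' g) :
    {x : Fin n → ℝ | 0 ≤ eval x g} ⊆ {x : Fin n → ℝ | 0 ≤ eval x f} ↔
      ∃ t : ℝ, 0 ≤ t ∧ ∀ x : Fin n → ℝ, 0 ≤ eval x f - t * eval x g := by
  constructor
  · intro hsub
    have hfg : ∀ z, 0 ≤ eval z g → 0 ≤ eval z f := fun z hz => hsub hz
    exact exists_nonneg_forall_sub_mul_nonneg hx' hfg
      fun x y hx hy => eval_mul_eval_le_of_quadratic hf hg hfg hx hy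
  · rintro ⟨t, ht, hft⟩ x (hx : 0 ≤ eval x g)
    show 0 ≤ eval x f
    linarith [hft x, mul_nonneg ht hx]
end

section
/- Let f, g be real quadratic forms in n variables, and suppose there exists x' ∈ ℝⁿ with g(x') > 0. Then {x : g(x) ≥ 0} ⊆ {x : f(x) ≥ 0} if and only if there exists a real number t ≥ 0 such that f(x) - t·g(x) ≥ 0 for all x ∈ ℝⁿ. -/
/-!
Let `u` and `y` satisfy `g u < 0 < g y`. Along the line `s ↦ u + s • y`, `g` is a quadratic in `s`
with one negative and one positive root, where `f ≥ 0` by hypothesis. The combination of these two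
inequalities that cancels the mixed term of `f`, together with Vieta's formula for the product of
the roots, gives `f u / g u ≤ f y / g y`. Hence `t = inf {f y / g y | g y > 0}`, which is `≥ 0` and
finite since `g x' > 0`, satisfies `t g ≤ f` on both cones `g > 0` and `g < 0`.
-/

open MvPolynomial

theorem Finsupp.exists_eq_single_add_single_of_degree_eq_two {σ : Type*} {d : σ →₀ ℕ}
    (hd : d.degree = 2) : ∃ a b : σ, d = single a 1 + single b 1 := by
  classical
  obtain ⟨a, b, hab⟩ := Multiset.card_eq_two.mp ((card_toMultiset d).trans hd)
  refine ⟨a, b, ?_⟩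
  rw [← toMultiset_toFinsupp d, hab, Multiset.insert_eq_cons, ← Multiset.singleton_add,
    Multiset.toFinsupp_add, Multiset.toFinsupp_singleton, Multiset.toFinsupp_singleton]

theorem MvPolynomial.IsHomogeneous.exists_quadraticMap_eval_eq {σ R : Type*} [CommSemiring R]
    {p : MvPolynomial σ R} (hp : p.IsHomogeneous 2) :
    ∃ Q : QuadraticMap R (σ → R) R, ∀ x, Q x = eval x p := by
  let IsQuadratic (q : MvPolynomial σ R) := ∃ Q : QuadraticMap R (σ → R) R, ∀ x, Q x = eval x q
  have monomial_isQuadratic : ∀ d ∈ p.support, IsQuadratic (monomial d (coeff d p)) := by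
    intro d hd
    have hdeg : d.degree = 2 := by
      by_contra h
      exact mem_support_iff.mp hd (hp.coeff_eq_zero h)
    obtain ⟨a, b, rfl⟩ := Finsupp.exists_eq_single_add_single_of_degree_eq_two hdeg
    refine ⟨coeff (Finsupp.single a 1 + Finsupp.single b 1) p • QuadraticMap.proj a b, fun x => ?_⟩
    simp only [smul_apply, QuadraticMap.proj_apply, smul_eq_mul, monomial_single_add,
      pow_one, map_mul, eval_X, eval_monomial, pow_zero, Finsupp.prod_single_index]
    ring
  rw [p.as_sum]
  refine Finset.sum_induction _ IsQuadratic ?_ ⟨0, by simp⟩ monomial_isQuadratic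
  rintro q r ⟨Q, hQ⟩ ⟨Q', hQ'⟩
  exact ⟨Q + Q', by simp [hQ, hQ']⟩

namespace QuadraticMap

theorem map_add_smul {R M N : Type*} [CommRing R] [AddCommGroup M] [AddCommGroup N] [Module R M]
    [Module R N] (Q : QuadraticMap R M N) (x y : M) (s : R) :
    Q (x + s • y) = Q x + s • polar Q x y + (s * s) • Q y := by
  rw [← polar_smul_right, ← QuadraticMap.map_smul, polar]
  abel

end QuadraticMap

theorem exists_quadratic_roots_neg_pos {a b c : ℝ} (ha : 0 < a) (hc : c < 0) :
    ∃ s₁ s₂ : ℝ, s₁ < 0 ∧ 0 < s₂ ∧ a * (s₁ * s₁) + b * s₁ + c = 0 ∧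
      a * (s₂ * s₂) + b * s₂ + c = 0 := by
  have hdisc : 0 ≤ discrim a b c := by unfold discrim; nlinarith
  set D := √(discrim a b c)
  have hD : discrim a b c = D * D := (Real.mul_self_sqrt hdisc).symm
  have hbD : |b| < D := by
    apply abs_lt_of_sq_lt_sq _ (Real.sqrt_nonneg _)
    unfold discrim at hD; nlinarith
  refine ⟨(-b - D) / (2 * a), (-b + D) / (2 * a), ?_, ?_, ?_, ?_⟩
  · exact div_neg_of_neg_of_pos (by linarith [(abs_lt.mp hbD).1]) (by positivity)
  · exact div_pos (by linarith [(abs_lt.mp hbD).2]) (by positivity)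
  · exact (quadratic_eq_zero_iff ha.ne' hD _).mpr (Or.inr rfl)
  · exact (quadratic_eq_zero_iff ha.ne' hD _).mpr (Or.inl rfl)

theorem mul_le_mul_of_nonneg_at_quadratic_roots {a b c a' b' c' : ℝ} (ha : 0 < a) (hc : c < 0)
    (h : ∀ s, a * (s * s) + b * s + c = 0 → 0 ≤ a' * (s * s) + b' * s + c') :
    c * a' ≤ c' * a := by
  obtain ⟨s₁, s₂, hs₁, hs₂, hr₁, hr₂⟩ := exists_quadratic_roots_neg_pos (b := b) ha hc
  have vieta : a * (s₁ * s₂) = c := by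
    have : a * (s₁ + s₂) = -b := by
      apply mul_left_cancel₀ (sub_ne_zero.mpr (hs₁.trans hs₂).ne)
      linear_combination hr₁ - hr₂
    linear_combination s₁ * this - hr₁
  set P := fun s => a' * (s * s) + b' * s + c'
  have combination : 0 ≤ s₂ * P s₁ + -s₁ * P s₂ :=
    add_nonneg (mul_nonneg hs₂.le (h s₁ hr₁)) (mul_nonneg (neg_nonneg.mpr hs₁.le) (h s₂ hr₂))
  have scaled : a * (s₂ * P s₁ + -s₁ * P s₂) = (s₂ - s₁) * (c' * a - c * a') := by
    linear_combination (s₁ - s₂) * a' * vieta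
  have := nonneg_of_mul_nonneg_right (scaled ▸ mul_nonneg ha.le combination) (by linarith)
  linarith

namespace QuadraticMap

variable {V : Type*} [AddCommGroup V] [Module ℝ V] {Qf Qg : QuadraticMap ℝ V ℝ}

theorem mul_le_mul_of_nonneg_on_isotropic (H : ∀ x, Qg x = 0 → 0 ≤ Qf x) {u y : V}
    (hu : Qg u < 0) (hy : 0 < Qg y) : Qg u * Qf y ≤ Qf u * Qg y := by
  refine mul_le_mul_of_nonneg_at_quadratic_roots (b := polar Qg u y) (b' := polar Qf u y) hy hu
    fun s hs => ?_
  have hline := H (u + s • y)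
  simp only [map_add_smul, smul_eq_mul] at hline
  linear_combination hline (by linear_combination hs)

theorem s_lemma {x' : V} (hx' : 0 < Qg x') :
    (∀ x, 0 ≤ Qg x → 0 ≤ Qf x) ↔ ∃ t, 0 ≤ t ∧ ∀ x, t * Qg x ≤ Qf x := by
  refine ⟨fun H => ?_, fun ⟨t, ht, hle⟩ x hx => (mul_nonneg ht hx).trans (hle x)⟩
  set T := (fun y => Qf y / Qg y) '' {y | 0 < Qg y}
  have hT : T.Nonempty := ⟨_, x', hx', rfl⟩
  have hT0 : ∀ r ∈ T, 0 ≤ r := by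
    rintro _ ⟨y, hy, rfl⟩
    exact div_nonneg (H y (le_of_lt hy)) (le_of_lt hy)
  refine ⟨sInf T, le_csInf hT hT0, fun x => ?_⟩
  rcases lt_trichotomy (Qg x) 0 with hneg | hzero | hpos
  · rw [← div_le_iff_of_neg hneg]
    refine le_csInf hT ?_
    rintro _ ⟨y, hy, rfl⟩
    rw [div_le_iff_of_neg hneg, div_mul_eq_mul_div, div_le_iff₀ hy, mul_comm]
    exact mul_le_mul_of_nonneg_on_isotropic (fun z hz => H z hz.ge) hneg hy
  · simpa [hzero] using H x hzero.ge
  · rw [← le_div_iff₀ hpos]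
    exact csInf_le ⟨0, hT0⟩ ⟨x, hpos, rfl⟩

end QuadraticMap

theorem stmt_2 (n : ℕ) (f g : MvPolynomial (Fin n) ℝ)
    (hf : f.IsHomogeneous 2) (hg : g.IsHomogeneous 2)
    (x' : Fin n → ℝ) (hx' : 0 < eval x' g) :
    {x : Fin n → ℝ | 0 ≤ eval x g} ⊆ {x : Fin n → ℝ | 0 ≤ eval x f} ↔
      ∃ t : ℝ, 0 ≤ t ∧ ∀ x : Fin n → ℝ, 0 ≤ eval x f - t * eval x g := by
  obtain ⟨Qf, hQf⟩ := hf.exists_quadraticMap_eval_eq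
  obtain ⟨Qg, hQg⟩ := hg.exists_quadraticMap_eval_eq
  simp only [← hQf, ← hQg, Set.ofPred_subset_ofPred, sub_nonneg] at hx' ⊢
  exact QuadraticMap.s_lemma hx'
end

section
/- For any two real quadratic forms f₁, f₂ in n variables, the image of the map φ : ℝⁿ → ℝ², x ↦ (f₁(x), f₂(x)), is a convex subset of ℝ². -/
open MvPolynomial

lemma deg2_struct {n : ℕ} (d : Fin n →₀ ℕ) (hd : (d.sum fun _ e => e) = 2) :
    ∃ i j : Fin n, d = Finsupp.single i 1 + Finsupp.single j 1 := by
  classical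
  have hcard : Multiset.card (Finsupp.toMultiset d) = 2 := by
    rw [Finsupp.card_toMultiset]; exact hd
  obtain ⟨i, j, hij⟩ := Multiset.card_eq_two.mp hcard
  refine ⟨i, j, ?_⟩
  have h2 : Multiset.toFinsupp (Finsupp.toMultiset d)
      = Multiset.toFinsupp ({i, j} : Multiset (Fin n)) := by rw [hij]
  rw [Finsupp.toMultiset_toFinsupp] at h2
  rw [h2]
  ext a
  simp [Multiset.toFinsupp_apply, Multiset.count_cons, Multiset.count_singleton,
    Finsupp.single_apply, add_comm]
  rcases eq_or_ne a i with rfl | hai <;> rcases eq_or_ne a j with rfl | haj <;> simp_all [eq_comm]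

lemma eval_mon2 {n : ℕ} (i j : Fin n) (c : ℝ) (z : Fin n → ℝ) :
    eval z (monomial (Finsupp.single i 1 + Finsupp.single j 1) c) = c * (z i * z j) := by
  rw [eval_monomial, Finsupp.prod_add_index' (fun a => pow_zero (z a)) (fun a b₁ b₂ => pow_add (z a) b₁ b₂)]
  simp [Finsupp.prod_single_index]

lemma eval_quad {n : ℕ} {f : MvPolynomial (Fin n) ℝ} (hf : f.IsHomogeneous 2)
    (a b : ℝ) (x y : Fin n → ℝ) :
    eval (fun i => a * x i + b * y i) f
      = a^2 * eval x f
        + a * b * (eval (fun i => x i + y i) f - eval x f - eval y f)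
        + b^2 * eval y f := by
  have hrep : ∀ z : Fin n → ℝ, eval z f = ∑ d ∈ f.support, eval z (monomial d (coeff d f)) := by
    intro z
    conv_lhs => rw [f.as_sum]
    rw [map_sum]
  rw [hrep, hrep x, hrep y, hrep (fun i => x i + y i)]
  rw [Finset.mul_sum, ← Finset.sum_sub_distrib, ← Finset.sum_sub_distrib, Finset.mul_sum,
    Finset.mul_sum, ← Finset.sum_add_distrib, ← Finset.sum_add_distrib]
  apply Finset.sum_congr rfl
  intro d hd
  have hdeg : (d.sum fun _ e => e) = 2 := by
    simpa [Finsupp.weight_apply, smul_eq_mul] using hf (MvPolynomial.mem_support_iff.mp hd)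
  obtain ⟨i, j, rfl⟩ := deg2_struct d hdeg
  simp only [eval_mon2]
  ring

lemma eval_scale {n : ℕ} {f : MvPolynomial (Fin n) ℝ} (hf : f.IsHomogeneous 2)
    (c : ℝ) (x : Fin n → ℝ) :
    eval (fun i => c * x i) f = c^2 * eval x f := by
  have h := eval_quad hf c 0 x x
  simpa using h

lemma dines_pos {n : ℕ} {f₁ f₂ : MvPolynomial (Fin n) ℝ}
    (h₁ : f₁.IsHomogeneous 2) (h₂ : f₂.IsHomogeneous 2)
    (x y : Fin n → ℝ) (b : ℝ) (hb0 : 0 ≤ b) (hb1 : b ≤ 1)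
    (hD : 0 < eval x f₁ * eval y f₂ - eval x f₂ * eval y f₁) :
    ∃ z, eval z f₁ = (1 - b) * eval x f₁ + b * eval y f₁ ∧
      eval z f₂ = (1 - b) * eval x f₂ + b * eval y f₂ := by
  obtain ⟨ε, hε2, hεK⟩ : ∃ ε : ℝ, ε ^ 2 = 1 ∧ 0 ≤ ε * ((eval y f₂ - eval x f₂) * (eval (fun i => x i + y i) f₁ - eval x f₁ - eval y f₁) + (eval x f₁ - eval y f₁) * (eval (fun i => x i + y i) f₂ - eval x f₂ - eval y f₂)) := by
    rcases le_or_gt 0 (((eval y f₂ - eval x f₂) * (eval (fun i => x i + y i) f₁ - eval x f₁ - eval y f₁) + (eval x f₁ - eval y f₁) * (eval (fun i => x i + y i) f₂ - eval x f₂ - eval y f₂))) with h | h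
    · exact ⟨1, one_pow 2, by rw [one_mul]; exact h⟩
    · exact ⟨-1, by norm_num, by rw [neg_one_mul]; linarith⟩
  have hQ : ∀ (f : MvPolynomial (Fin n) ℝ), f.IsHomogeneous 2 → ∀ s : ℝ,
      eval (fun i => Real.cos s * (ε * x i) + Real.sin s * y i) f
        = (Real.cos s)^2 * eval x f
          + Real.cos s * Real.sin s * (ε * (eval (fun i => x i + y i) f - eval x f - eval y f))
          + (Real.sin s)^2 * eval y f := by
    intro f hf s
    have ex : eval (fun i => ε * x i) f = eval x f := by
      rw [eval_scale hf, hε2, one_mul]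
    have exy : eval (fun i => ε * x i + y i) f
        = eval x f + ε * (eval (fun i => x i + y i) f - eval x f - eval y f) + eval y f := by
      have e1 : eval (fun i => ε * x i + 1 * y i) f
          = ε^2 * eval x f + ε * 1 * (eval (fun i => x i + y i) f - eval x f - eval y f) + 1^2 * eval y f :=
        eval_quad hf ε 1 x y
      simp only [one_mul, one_pow, mul_one] at e1
      rw [e1]
      linear_combination (eval x f) * hε2
    have e0 : eval (fun i => Real.cos s * (ε * x i) + Real.sin s * y i) f
        = (Real.cos s)^2 * eval (fun i => ε * x i) f
          + Real.cos s * Real.sin s * (eval (fun i => ε * x i + y i) f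
              - eval (fun i => ε * x i) f - eval y f)
          + (Real.sin s)^2 * eval y f := eval_quad hf (Real.cos s) (Real.sin s) (fun i => ε * x i) y
    rw [e0, ex, exy]
    ring
  have hcont1 : Continuous fun t : ℝ => eval (fun i => Real.cos t * (ε * x i) + Real.sin t * y i) f₁ :=
    (MvPolynomial.continuous_eval f₁).comp (continuous_pi fun i =>
      (Real.continuous_cos.mul continuous_const).add (Real.continuous_sin.mul continuous_const))
  have hcont2 : Continuous fun t : ℝ => eval (fun i => Real.cos t * (ε * x i) + Real.sin t * y i) f₂ :=
    (MvPolynomial.continuous_eval f₂).comp (continuous_pi fun i =>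
      (Real.continuous_cos.mul continuous_const).add (Real.continuous_sin.mul continuous_const))
  have hden_pos : ∀ s ∈ Set.Icc (0:ℝ) (Real.pi/2), 0 < ((eval y f₂ - eval x f₂) * eval (fun i => Real.cos s * (ε * x i) + Real.sin s * y i) f₁ + (eval x f₁ - eval y f₁) * eval (fun i => Real.cos s * (ε * x i) + Real.sin s * y i) f₂) := by
    intro s hs
    have hcos : 0 ≤ Real.cos s :=
      Real.cos_nonneg_of_mem_Icc ⟨by linarith [Real.pi_pos, hs.1], hs.2⟩
    have hsin : 0 ≤ Real.sin s :=
      Real.sin_nonneg_of_nonneg_of_le_pi hs.1 (by linarith [Real.pi_pos, hs.2])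
    have hform : ((eval y f₂ - eval x f₂) * eval (fun i => Real.cos s * (ε * x i) + Real.sin s * y i) f₁ + (eval x f₁ - eval y f₁) * eval (fun i => Real.cos s * (ε * x i) + Real.sin s * y i) f₂) = (eval x f₁ * eval y f₂ - eval x f₂ * eval y f₁) + Real.cos s * Real.sin s * (ε * ((eval y f₂ - eval x f₂) * (eval (fun i => x i + y i) f₁ - eval x f₁ - eval y f₁) + (eval x f₁ - eval y f₁) * (eval (fun i => x i + y i) f₂ - eval x f₂ - eval y f₂))) := by
      rw [hQ f₁ h₁ s, hQ f₂ h₂ s]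
      have hp := Real.sin_sq_add_cos_sq s
      linear_combination (eval x f₁ * eval y f₂ - eval x f₂ * eval y f₁) * hp
    rw [hform]
    have hnn : 0 ≤ Real.cos s * Real.sin s * (ε * ((eval y f₂ - eval x f₂) * (eval (fun i => x i + y i) f₁ - eval x f₁ - eval y f₁) + (eval x f₁ - eval y f₁) * (eval (fun i => x i + y i) f₂ - eval x f₂ - eval y f₂))) :=
      mul_nonneg (mul_nonneg hcos hsin) hεK
    linarith [hD]
  have hrcont : ContinuousOn (fun t : ℝ => (-(eval x f₂) * eval (fun i => Real.cos t * (ε * x i) + Real.sin t * y i) f₁ + eval x f₁ * eval (fun i => Real.cos t * (ε * x i) + Real.sin t * y i) f₂) / ((eval y f₂ - eval x f₂) * eval (fun i => Real.cos t * (ε * x i) + Real.sin t * y i) f₁ + (eval x f₁ - eval y f₁) * eval (fun i => Real.cos t * (ε * x i) + Real.sin t * y i) f₂)) (Set.Icc 0 (Real.pi/2)) := by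
    apply ContinuousOn.div
    · exact ((continuous_const.mul hcont1).add (continuous_const.mul hcont2)).continuousOn
    · exact ((continuous_const.mul hcont1).add (continuous_const.mul hcont2)).continuousOn
    · intro s hs; exact (hden_pos s hs).ne'
  have h0 : (fun t : ℝ => (-(eval x f₂) * eval (fun i => Real.cos t * (ε * x i) + Real.sin t * y i) f₁ + eval x f₁ * eval (fun i => Real.cos t * (ε * x i) + Real.sin t * y i) f₂) / ((eval y f₂ - eval x f₂) * eval (fun i => Real.cos t * (ε * x i) + Real.sin t * y i) f₁ + (eval x f₁ - eval y f₁) * eval (fun i => Real.cos t * (ε * x i) + Real.sin t * y i) f₂)) 0 = 0 := by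
    show (-(eval x f₂) * eval (fun i => Real.cos (0:ℝ) * (ε * x i) + Real.sin (0:ℝ) * y i) f₁ + eval x f₁ * eval (fun i => Real.cos (0:ℝ) * (ε * x i) + Real.sin (0:ℝ) * y i) f₂) / ((eval y f₂ - eval x f₂) * eval (fun i => Real.cos (0:ℝ) * (ε * x i) + Real.sin (0:ℝ) * y i) f₁ + (eval x f₁ - eval y f₁) * eval (fun i => Real.cos (0:ℝ) * (ε * x i) + Real.sin (0:ℝ) * y i) f₂) = 0
    have hq1 : eval (fun i => Real.cos (0:ℝ) * (ε * x i) + Real.sin (0:ℝ) * y i) f₁ = eval x f₁ := by rw [hQ f₁ h₁ 0]; simp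
    have hq2 : eval (fun i => Real.cos (0:ℝ) * (ε * x i) + Real.sin (0:ℝ) * y i) f₂ = eval x f₂ := by rw [hQ f₂ h₂ 0]; simp
    rw [hq1, hq2, show (-(eval x f₂) * eval x f₁ + eval x f₁ * eval x f₂) = 0 by ring, zero_div]
  have hpi : (fun t : ℝ => (-(eval x f₂) * eval (fun i => Real.cos t * (ε * x i) + Real.sin t * y i) f₁ + eval x f₁ * eval (fun i => Real.cos t * (ε * x i) + Real.sin t * y i) f₂) / ((eval y f₂ - eval x f₂) * eval (fun i => Real.cos t * (ε * x i) + Real.sin t * y i) f₁ + (eval x f₁ - eval y f₁) * eval (fun i => Real.cos t * (ε * x i) + Real.sin t * y i) f₂)) (Real.pi/2) = 1 := by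
    show (-(eval x f₂) * eval (fun i => Real.cos (Real.pi/2) * (ε * x i) + Real.sin (Real.pi/2) * y i) f₁ + eval x f₁ * eval (fun i => Real.cos (Real.pi/2) * (ε * x i) + Real.sin (Real.pi/2) * y i) f₂) / ((eval y f₂ - eval x f₂) * eval (fun i => Real.cos (Real.pi/2) * (ε * x i) + Real.sin (Real.pi/2) * y i) f₁ + (eval x f₁ - eval y f₁) * eval (fun i => Real.cos (Real.pi/2) * (ε * x i) + Real.sin (Real.pi/2) * y i) f₂) = 1
    have hq1 : eval (fun i => Real.cos (Real.pi/2) * (ε * x i) + Real.sin (Real.pi/2) * y i) f₁ = eval y f₁ := by rw [hQ f₁ h₁ (Real.pi/2)]; simp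
    have hq2 : eval (fun i => Real.cos (Real.pi/2) * (ε * x i) + Real.sin (Real.pi/2) * y i) f₂ = eval y f₂ := by rw [hQ f₂ h₂ (Real.pi/2)]; simp
    rw [hq1, hq2, show (-(eval x f₂) * eval y f₁ + eval x f₁ * eval y f₂) = (eval x f₁ * eval y f₂ - eval x f₂ * eval y f₁) by ring,
      show ((eval y f₂ - eval x f₂) * eval y f₁ + (eval x f₁ - eval y f₁) * eval y f₂) = (eval x f₁ * eval y f₂ - eval x f₂ * eval y f₁) by ring]
    exact div_self hD.ne'
  have hmem : b ∈ Set.Icc ((fun t : ℝ => (-(eval x f₂) * eval (fun i => Real.cos t * (ε * x i) + Real.sin t * y i) f₁ + eval x f₁ * eval (fun i => Real.cos t * (ε * x i) + Real.sin t * y i) f₂) / ((eval y f₂ - eval x f₂) * eval (fun i => Real.cos t * (ε * x i) + Real.sin t * y i) f₁ + (eval x f₁ - eval y f₁) * eval (fun i => Real.cos t * (ε * x i) + Real.sin t * y i) f₂)) 0)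
      ((fun t : ℝ => (-(eval x f₂) * eval (fun i => Real.cos t * (ε * x i) + Real.sin t * y i) f₁ + eval x f₁ * eval (fun i => Real.cos t * (ε * x i) + Real.sin t * y i) f₂) / ((eval y f₂ - eval x f₂) * eval (fun i => Real.cos t * (ε * x i) + Real.sin t * y i) f₁ + (eval x f₁ - eval y f₁) * eval (fun i => Real.cos t * (ε * x i) + Real.sin t * y i) f₂)) (Real.pi/2)) := by
    rw [h0, hpi]; exact ⟨hb0, hb1⟩
  obtain ⟨s, hs, hFs⟩ :=
    intermediate_value_Icc (by linarith [Real.pi_pos] : (0:ℝ) ≤ Real.pi/2) hrcont hmem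
  have hkey : (-(eval x f₂) * eval (fun i => Real.cos s * (ε * x i) + Real.sin s * y i) f₁ + eval x f₁ * eval (fun i => Real.cos s * (ε * x i) + Real.sin s * y i) f₂) = b * ((eval y f₂ - eval x f₂) * eval (fun i => Real.cos s * (ε * x i) + Real.sin s * y i) f₁ + (eval x f₁ - eval y f₁) * eval (fun i => Real.cos s * (ε * x i) + Real.sin s * y i) f₂) := by
    have h : (-(eval x f₂) * eval (fun i => Real.cos s * (ε * x i) + Real.sin s * y i) f₁ + eval x f₁ * eval (fun i => Real.cos s * (ε * x i) + Real.sin s * y i) f₂) / ((eval y f₂ - eval x f₂) * eval (fun i => Real.cos s * (ε * x i) + Real.sin s * y i) f₁ + (eval x f₁ - eval y f₁) * eval (fun i => Real.cos s * (ε * x i) + Real.sin s * y i) f₂) = b := hFs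
    rw [div_eq_iff (hden_pos s hs).ne'] at h
    exact h
  refine ⟨fun i => Real.sqrt ((eval x f₁ * eval y f₂ - eval x f₂ * eval y f₁) / ((eval y f₂ - eval x f₂) * eval (fun i => Real.cos s * (ε * x i) + Real.sin s * y i) f₁ + (eval x f₁ - eval y f₁) * eval (fun i => Real.cos s * (ε * x i) + Real.sin s * y i) f₂)) * (Real.cos s * (ε * x i) + Real.sin s * y i),
    ?_, ?_⟩
  · have h' : eval (fun i => Real.sqrt ((eval x f₁ * eval y f₂ - eval x f₂ * eval y f₁) / ((eval y f₂ - eval x f₂) * eval (fun i => Real.cos s * (ε * x i) + Real.sin s * y i) f₁ + (eval x f₁ - eval y f₁) * eval (fun i => Real.cos s * (ε * x i) + Real.sin s * y i) f₂))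
        * (Real.cos s * (ε * x i) + Real.sin s * y i)) f₁
        = ((eval x f₁ * eval y f₂ - eval x f₂ * eval y f₁) / ((eval y f₂ - eval x f₂) * eval (fun i => Real.cos s * (ε * x i) + Real.sin s * y i) f₁ + (eval x f₁ - eval y f₁) * eval (fun i => Real.cos s * (ε * x i) + Real.sin s * y i) f₂)) * eval (fun i => Real.cos s * (ε * x i) + Real.sin s * y i) f₁ := by
      rw [show eval (fun i => Real.sqrt ((eval x f₁ * eval y f₂ - eval x f₂ * eval y f₁) / ((eval y f₂ - eval x f₂) * eval (fun i => Real.cos s * (ε * x i) + Real.sin s * y i) f₁ + (eval x f₁ - eval y f₁) * eval (fun i => Real.cos s * (ε * x i) + Real.sin s * y i) f₂))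
          * (Real.cos s * (ε * x i) + Real.sin s * y i)) f₁
          = (Real.sqrt ((eval x f₁ * eval y f₂ - eval x f₂ * eval y f₁) / ((eval y f₂ - eval x f₂) * eval (fun i => Real.cos s * (ε * x i) + Real.sin s * y i) f₁ + (eval x f₁ - eval y f₁) * eval (fun i => Real.cos s * (ε * x i) + Real.sin s * y i) f₂)))^2 * eval (fun i => Real.cos s * (ε * x i) + Real.sin s * y i) f₁ from eval_scale h₁ _ _,
        Real.sq_sqrt (div_nonneg hD.le (hden_pos s hs).le)]
    rw [h', div_mul_eq_mul_div, div_eq_iff (hden_pos s hs).ne']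
    linear_combination (eval y f₁ - eval x f₁) * hkey
  · have h' : eval (fun i => Real.sqrt ((eval x f₁ * eval y f₂ - eval x f₂ * eval y f₁) / ((eval y f₂ - eval x f₂) * eval (fun i => Real.cos s * (ε * x i) + Real.sin s * y i) f₁ + (eval x f₁ - eval y f₁) * eval (fun i => Real.cos s * (ε * x i) + Real.sin s * y i) f₂))
        * (Real.cos s * (ε * x i) + Real.sin s * y i)) f₂
        = ((eval x f₁ * eval y f₂ - eval x f₂ * eval y f₁) / ((eval y f₂ - eval x f₂) * eval (fun i => Real.cos s * (ε * x i) + Real.sin s * y i) f₁ + (eval x f₁ - eval y f₁) * eval (fun i => Real.cos s * (ε * x i) + Real.sin s * y i) f₂)) * eval (fun i => Real.cos s * (ε * x i) + Real.sin s * y i) f₂ := by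
      rw [show eval (fun i => Real.sqrt ((eval x f₁ * eval y f₂ - eval x f₂ * eval y f₁) / ((eval y f₂ - eval x f₂) * eval (fun i => Real.cos s * (ε * x i) + Real.sin s * y i) f₁ + (eval x f₁ - eval y f₁) * eval (fun i => Real.cos s * (ε * x i) + Real.sin s * y i) f₂))
          * (Real.cos s * (ε * x i) + Real.sin s * y i)) f₂
          = (Real.sqrt ((eval x f₁ * eval y f₂ - eval x f₂ * eval y f₁) / ((eval y f₂ - eval x f₂) * eval (fun i => Real.cos s * (ε * x i) + Real.sin s * y i) f₁ + (eval x f₁ - eval y f₁) * eval (fun i => Real.cos s * (ε * x i) + Real.sin s * y i) f₂)))^2 * eval (fun i => Real.cos s * (ε * x i) + Real.sin s * y i) f₂ from eval_scale h₂ _ _,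
        Real.sq_sqrt (div_nonneg hD.le (hden_pos s hs).le)]
    rw [h', div_mul_eq_mul_div, div_eq_iff (hden_pos s hs).ne']
    linear_combination (eval y f₂ - eval x f₂) * hkey

theorem stmt_3 (n : ℕ) (f₁ f₂ : MvPolynomial (Fin n) ℝ)
    (h₁ : f₁.IsHomogeneous 2) (h₂ : f₂.IsHomogeneous 2) :
    Convex ℝ (Set.range fun x : Fin n → ℝ => (eval x f₁, eval x f₂)) := by
  rintro p ⟨x, rfl⟩ q ⟨y, rfl⟩ a b ha hb hab
  have hb1 : b ≤ 1 := by linarith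
  have ha' : a = 1 - b := by linarith
  subst ha'
  suffices h : ∃ z, eval z f₁ = (1 - b) * eval x f₁ + b * eval y f₁ ∧
      eval z f₂ = (1 - b) * eval x f₂ + b * eval y f₂ by
    obtain ⟨z, hz1, hz2⟩ := h
    refine ⟨z, ?_⟩
    simp only [Prod.smul_mk, smul_eq_mul, Prod.mk_add_mk, Prod.mk.injEq]
    exact ⟨hz1, hz2⟩
  rcases lt_trichotomy (eval x f₁ * eval y f₂ - eval x f₂ * eval y f₁) 0 with hD | hD | hD
  · obtain ⟨z, hz1, hz2⟩ := dines_pos h₁ h₂ y x (1 - b)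
      (by linarith) (by linarith) (by nlinarith [hD])
    exact ⟨z, by rw [hz1]; ring, by rw [hz2]; ring⟩
  · have scale : ∀ (w : Fin n → ℝ) (s : ℝ), 0 ≤ s →
        ∃ z, eval z f₁ = s * eval w f₁ ∧ eval z f₂ = s * eval w f₂ := by
      intro w s hsn
      refine ⟨fun i => Real.sqrt s * w i, ?_, ?_⟩
      · rw [eval_scale h₁, Real.sq_sqrt hsn]
      · rw [eval_scale h₂, Real.sq_sqrt hsn]
    by_cases hu : eval x f₁ = 0 ∧ eval x f₂ = 0
    · obtain ⟨z, hz1, hz2⟩ := scale y b hb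
      exact ⟨z, by rw [hz1, hu.1]; ring, by rw [hz2, hu.2]; ring⟩
    · have hvc : ∃ c : ℝ, eval y f₁ = c * eval x f₁ ∧ eval y f₂ = c * eval x f₂ := by
        by_cases h1 : eval x f₁ = 0
        · have h2 : eval x f₂ ≠ 0 := fun h => hu ⟨h1, h⟩
          refine ⟨eval y f₂ / eval x f₂, ?_, by field_simp⟩
          have hz : eval x f₂ * eval y f₁ = 0 := by linear_combination eval y f₂ * h1 - hD
          have hy1 : eval y f₁ = 0 := by
            rcases mul_eq_zero.mp hz with h | h
            · exact absurd h h2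
            · exact h
          rw [hy1, h1]; ring
        · refine ⟨eval y f₁ / eval x f₁, by field_simp, ?_⟩
          field_simp
          linear_combination hD
      obtain ⟨c, hc1, hc2⟩ := hvc
      rcases le_or_gt 0 (1 - b + b * c) with hsgn | hsgn
      · obtain ⟨z, hz1, hz2⟩ := scale x (1 - b + b * c) hsgn
        exact ⟨z, by rw [hz1, hc1]; ring, by rw [hz2, hc2]; ring⟩
      · have hc0 : c < 0 := by
          by_contra hcc
          push_neg at hcc
          nlinarith [mul_nonneg hb hcc]
        obtain ⟨z, hz1, hz2⟩ := scale y ((1 - b + b * c) / c)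
          (div_nonneg_iff.mpr (Or.inr ⟨by linarith, hc0.le⟩))
        refine ⟨z, ?_, ?_⟩
        · rw [hz1, hc1, div_mul_eq_mul_div, div_eq_iff hc0.ne]; ring
        · rw [hz2, hc2, div_mul_eq_mul_div, div_eq_iff hc0.ne]; ring
  · obtain ⟨z, hz1, hz2⟩ := dines_pos h₁ h₂ x y b hb hb1 hD
    exact ⟨z, hz1, hz2⟩
end

section
/- Let f₁, f₂ be real quadratic forms in n variables and α₁, α₂ ∈ ℝ. There exists x ∈ ℝⁿ with f₁(x) = α₁ and f₂(x) = α₂ if and only if there exists a symmetric positive semidefinite n×n matrix Q with tr(A₁Q) = α₁ and tr(A₂Q) = α₂, where A₁, A₂ are the symmetric matrices representing f₁, f₂. -/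
/-!
The joint range `{(f₁ x, f₂ x)}` of two real quadratic forms is closed under addition (Dines).
Rotating a pair `(u, v)` within its span keeps `f₁ u + f₁ v` and `f₂ u + f₂ v`, and for a suitable
angle makes `u, v` orthogonal for `f₁`. Then `f₁ (u ± v) = f₁ u + f₁ v`, while
`f₂ (u ± v) = f₂ u + f₂ v ± 2 B₂ (u, v)`; joining `u + v` to `u - v` by a path inside this level
set of `f₁`, the intermediate value theorem gives a point where `f₂` takes the value
`f₂ u + f₂ v` as well. A positive semidefinite `Q` is a sum of rank-one matrices `x xᵀ`, and
`tr (A x xᵀ) = xᵀ A x`, so the trace conditions say that `(α₁, α₂)` is a sum of points of the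
joint range.
-/

open Matrix Set

namespace Real

/- The conclusion says that `(p + q, P + R)` is attained by the pair of binary forms
`p a² + q c²` and `P a² + 2 b a c + R c²`, which take the values `(p, P)` and `(q, R)` at the two
basis vectors. -/

variable (p q P R b : ℝ)

theorem exists_quad_eq_add_of_path (α : ℝ → ℝ) (hα : ContinuousOn α (Icc (-1) 1))
    (hα_one : α 1 = 1) (hα_neg_one : α (-1) = 1)
    (hlevel : ∀ c ∈ Icc (-1 : ℝ) 1, α c ^ 2 * p + c ^ 2 * q = p + q) :
    ∃ a c : ℝ, a ^ 2 * p + c ^ 2 * q = p + q ∧ a ^ 2 * P + c ^ 2 * R + 2 * a * c * b = P + R := by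
  set g : ℝ → ℝ := fun c => α c ^ 2 * P + c ^ 2 * R + 2 * α c * c * b
  have hg : ContinuousOn g (uIcc (-1) 1) := by
    rw [uIcc_of_le (by norm_num)]; fun_prop
  have hmem : P + R ∈ uIcc (g (-1)) (g 1) := by
    simp only [g, hα_one, hα_neg_one, mem_uIcc]
    rcases le_total b 0 with hb | hb
    · right; constructor <;> linarith
    · left; constructor <;> linarith
  obtain ⟨c, hc, hgc⟩ := intermediate_value_uIcc hg hmem
  rw [uIcc_of_le (by norm_num)] at hc
  exact ⟨α c, c, hlevel c hc, hgc⟩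

theorem exists_quad_eq_add_of_mul_add_nonneg (hp : p ≠ 0) (hpq : 0 ≤ p * (p + q)) :
    ∃ a c : ℝ, a ^ 2 * p + c ^ 2 * q = p + q ∧ a ^ 2 * P + c ^ 2 * R + 2 * a * c * b = P + R := by
  have ht : 0 ≤ 1 + q / p := by
    have : 1 + q / p = p * (p + q) / p ^ 2 := by field_simp
    rw [this]; positivity
  have hrad : ∀ c ∈ Icc (-1 : ℝ) 1, 0 ≤ 1 + (1 - c ^ 2) * (q / p) := by
    intro c ⟨hc₁, hc₂⟩
    nlinarith [mul_nonneg (by nlinarith : (0 : ℝ) ≤ 1 - c ^ 2) ht, sq_nonneg c]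
  refine exists_quad_eq_add_of_path p q P R b (fun c => √(1 + (1 - c ^ 2) * (q / p)))
    (by fun_prop) (by simp) (by simp) fun c hc => ?_
  rw [sq_sqrt (hrad c hc)]
  field_simp
  ring

theorem exists_quad_eq_add :
    ∃ a c : ℝ, a ^ 2 * p + c ^ 2 * q = p + q ∧ a ^ 2 * P + c ^ 2 * R + 2 * a * c * b = P + R := by
  by_cases hpq : p = 0 ∧ q = 0
  · obtain ⟨rfl, rfl⟩ := hpq
    exact exists_quad_eq_add_of_path 0 0 P R b (fun _ => 1) continuousOn_const rfl rfl
      fun _ _ => by ring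
  -- `p (p + q) + q (p + q) = (p + q) ^ 2 ≥ 0`, so one of the two summands qualifies
  by_cases hp : p ≠ 0 ∧ 0 ≤ p * (p + q)
  · exact exists_quad_eq_add_of_mul_add_nonneg p q P R b hp.1 hp.2
  · have hq : q ≠ 0 := by
      rintro rfl
      exact hp ⟨fun h => hpq ⟨h, rfl⟩, by simpa using mul_self_nonneg p⟩
    have hqp : 0 ≤ q * (q + p) := by
      by_cases hp0 : p = 0
      · simp [hp0, mul_self_nonneg]
      · nlinarith [sq_nonneg (p + q), not_and.mp hp hp0]
    obtain ⟨a, c, h₁, h₂⟩ := exists_quad_eq_add_of_mul_add_nonneg q p R P b hq hqp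
    exact ⟨c, a, by linear_combination h₁, by linear_combination h₂⟩

end Real

namespace LinearMap.BilinForm

variable {V : Type*} [AddCommGroup V] [Module ℝ V] {B B₁ B₂ : LinearMap.BilinForm ℝ V}

theorem IsSymm.apply_smul_add_smul (hB : B.IsSymm) (u v : V) (a b c d : ℝ) :
    B (a • u + b • v) (c • u + d • v) =
      a * c * B u u + (a * d + b * c) * B u v + b * d * B v v := by
  simp only [map_add, map_smul, LinearMap.add_apply, LinearMap.smul_apply, smul_eq_mul,
    hB.eq v u]
  ring

theorem IsSymm.apply_rotate_add (hB : B.IsSymm) (u v : V) {c s : ℝ} (hcs : c ^ 2 + s ^ 2 = 1) :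
    B (c • u + s • v) (c • u + s • v) + B (-s • u + c • v) (-s • u + c • v) =
      B u u + B v v := by
  rw [hB.apply_smul_add_smul, hB.apply_smul_add_smul]
  linear_combination (B u u + B v v) * hcs

theorem IsSymm.exists_rotate_orthogonal (hB : B.IsSymm) (u v : V) :
    ∃ c s : ℝ, c ^ 2 + s ^ 2 = 1 ∧ B (c • u + s • v) (-s • u + c • v) = 0 := by
  set h : ℝ → ℝ := fun θ => B (Real.cos θ • u + Real.sin θ • v) (-Real.sin θ • u + Real.cos θ • v)
  have hh : h = fun θ => Real.cos θ * Real.sin θ * (B v v - B u u) +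
      (Real.cos θ ^ 2 - Real.sin θ ^ 2) * B u v := by
    ext θ
    simp only [h, hB.apply_smul_add_smul]
    ring
  have hmem : (0 : ℝ) ∈ uIcc (h 0) (h (Real.pi / 2)) := by
    simp only [hh, Real.cos_zero, Real.sin_zero, Real.cos_pi_div_two, Real.sin_pi_div_two,
      mem_uIcc]
    rcases le_total (B u v) 0 with huv | huv
    · left; constructor <;> linarith
    · right; constructor <;> linarith
  obtain ⟨θ, -, hθ⟩ := intermediate_value_uIcc (by rw [hh]; fun_prop) hmem
  exact ⟨Real.cos θ, Real.sin θ, Real.cos_sq_add_sin_sq θ, hθ⟩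

theorem exists_apply_self_eq_add (h₁ : B₁.IsSymm) (h₂ : B₂.IsSymm) (u v : V) :
    ∃ z, B₁ z z = B₁ u u + B₁ v v ∧ B₂ z z = B₂ u u + B₂ v v := by
  obtain ⟨c, s, hcs, horth⟩ := h₁.exists_rotate_orthogonal u v
  set x := c • u + s • v
  set y := -s • u + c • v
  obtain ⟨a, d, ha₁, ha₂⟩ := Real.exists_quad_eq_add (B₁ x x) (B₁ y y) (B₂ x x) (B₂ y y) (B₂ x y)
  refine ⟨a • x + d • y, ?_, ?_⟩
  · rw [h₁.apply_smul_add_smul, ← h₁.apply_rotate_add u v hcs, horth]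
    linear_combination ha₁
  · rw [h₂.apply_smul_add_smul, ← h₂.apply_rotate_add u v hcs]
    linear_combination ha₂

theorem exists_apply_self_eq_sum (h₁ : B₁.IsSymm) (h₂ : B₂.IsSymm) {ι : Type*} (s : Finset ι)
    (w : ι → V) :
    ∃ z, B₁ z z = ∑ i ∈ s, B₁ (w i) (w i) ∧ B₂ z z = ∑ i ∈ s, B₂ (w i) (w i) := by
  obtain ⟨z, hz⟩ : ∑ i ∈ s, (B₁ (w i) (w i), B₂ (w i) (w i)) ∈
      Set.range fun z => (B₁ z z, B₂ z z) := by
    refine Finset.sum_induction _ (· ∈ Set.range _) ?_ ⟨0, by simp⟩ fun i _ => ⟨w i, rfl⟩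
    rintro _ _ ⟨u, rfl⟩ ⟨v, rfl⟩
    obtain ⟨z, hz₁, hz₂⟩ := exists_apply_self_eq_add h₁ h₂ u v
    exact ⟨z, Prod.ext hz₁ hz₂⟩
  simp only [Prod.ext_iff, Prod.fst_sum, Prod.snd_sum] at hz
  exact ⟨z, hz⟩

end LinearMap.BilinForm

theorem Matrix.trace_mul_vecMulVec {n R : Type*} [Fintype n] [CommSemiring R]
    (A : Matrix n n R) (x y : n → R) : (A * vecMulVec x y).trace = y ⬝ᵥ A *ᵥ x := by
  rw [mul_vecMulVec, trace_vecMulVec, dotProduct_comm]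

theorem stmt_4 (n : ℕ) (A₁ A₂ : Matrix (Fin n) (Fin n) ℝ)
    (h₁ : A₁.IsSymm) (h₂ : A₂.IsSymm) (α₁ α₂ : ℝ) :
    (∃ x : Fin n → ℝ, x ⬝ᵥ (A₁ *ᵥ x) = α₁ ∧ x ⬝ᵥ (A₂ *ᵥ x) = α₂) ↔
      ∃ Q : Matrix (Fin n) (Fin n) ℝ, Q.PosSemidef ∧
        (A₁ * Q).trace = α₁ ∧ (A₂ * Q).trace = α₂ := by
  constructor
  · rintro ⟨x, rfl, rfl⟩
    refine ⟨vecMulVec x x, ?_, trace_mul_vecMulVec _ _ _, trace_mul_vecMulVec _ _ _⟩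
    simpa using posSemidef_vecMulVec_self_star x
  · rintro ⟨Q, hQ, rfl, rfl⟩
    obtain ⟨m, v, rfl⟩ := posSemidef_iff_eq_sum_vecMulVec.mp hQ
    simp only [star_trivial, Matrix.mul_sum, trace_sum, trace_mul_vecMulVec,
      ← toBilin'_apply']
    exact LinearMap.BilinForm.exists_apply_self_eq_sum (isSymm_toBilin'_iff_isSymm.mpr h₁)
      (isSymm_toBilin'_iff_isSymm.mpr h₂) _ v
end

section
/- Let L be an affine subspace of the space of real symmetric n×n matrices such that S = L ∩ {positive semidefinite matrices} is nonempty. If the codimension of L is strictly less than (r+1)(r+2)/2 for some r ∈ ℕ₀, then there exists a matrix A ∈ S with rank(A) ≤ r. -/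
/-!
Take `A` of minimal rank `k` in `L ∩ PSD` and suppose `k > r`. The symmetric matrices `B` with
`ker A ⊆ ker B` form a space of dimension `k(k+1)/2 ≥ (r+1)(r+2)/2`, so by the codimension
hypothesis it meets the direction of `L` in some `B ≠ 0`. Writing `A = S²` and `B = SMS`, pick
the eigenvalue `μ` of `M` of largest modulus: `1 - μ⁻¹M` is positive semidefinite and singular,
hence so is `A - μ⁻¹B = S(1 - μ⁻¹M)S ∈ L`, whose kernel strictly contains `ker A`. This
contradicts the minimality of `k`.
-/

open Matrix Module
open scoped ComplexOrder

theorem Submodule.inf_ne_bot_of_finrank_lt_add {K V : Type*} [DivisionRing K] [AddCommGroup V]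
    [Module K V] [FiniteDimensional K V] {s t T : Submodule K V} (hs : s ≤ T) (ht : t ≤ T)
    (h : finrank K T < finrank K s + finrank K t) : s ⊓ t ≠ ⊥ := by
  intro hst
  have hsup := Submodule.finrank_sup_add_finrank_inf_eq s t
  rw [hst, finrank_bot] at hsup
  have := Submodule.finrank_mono (sup_le hs ht)
  omega

namespace Matrix

section Symmetric

variable {R ι : Type*} [CommSemiring R]

variable (R ι) in
def symmetricSubmodule : Submodule R (Matrix ι ι R) where
  carrier := {A | A.IsSymm}
  add_mem' := IsSymm.add
  zero_mem' := isSymm_zero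
  smul_mem' c _ hA := hA.smul c

variable (R ι) in
def sym2EquivSymmetricSubmodule : (Sym2 ι → R) ≃ₗ[R] symmetricSubmodule R ι where
  toFun g := ⟨of fun i j => g s(i, j), IsSymm.ext fun i j => by simp [Sym2.eq_swap]⟩
  invFun A := Sym2.lift ⟨fun i j => (A : Matrix ι ι R) i j, fun i j => A.2.apply j i⟩
  map_add' _ _ := rfl
  map_smul' _ _ := rfl
  left_inv g := funext fun z => by induction z using Sym2.ind; rfl
  right_inv _ := rfl

theorem finrank_symmetricSubmodule [Fintype ι] [StrongRankCondition R] :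
    finrank R (symmetricSubmodule R ι) = Fintype.card ι * (Fintype.card ι + 1) / 2 := by
  rw [← (sym2EquivSymmetricSubmodule R ι).finrank_eq, finrank_fintype_fun_eq_card, Sym2.card,
    Nat.choose_two_right, Nat.add_sub_cancel, Nat.mul_comm]

end Symmetric

section Kernel

variable {R k l m n : Type*} [CommSemiring R] [Fintype n]

def vanishingOnKer (A : Matrix m n R) : Submodule R (Matrix l n R) where
  carrier := {B | LinearMap.ker A.mulVecLin ≤ LinearMap.ker B.mulVecLin}
  add_mem' {B C} hB hC v hv := by
    simp [show B *ᵥ v = 0 from hB hv, show C *ᵥ v = 0 from hC hv]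
  zero_mem' v _ := by simp
  smul_mem' c B hB v hv := by simp [show B *ᵥ v = 0 from hB hv]

theorem mul_eq_zero_of_ker_le [Fintype k] [DecidableEq k] {A : Matrix m n R} {B : Matrix l n R}
    {N : Matrix n k R} (hker : LinearMap.ker A.mulVecLin ≤ LinearMap.ker B.mulVecLin)
    (hAN : A * N = 0) : B * N = 0 :=
  ext_of_mulVec_single fun i => by
    rw [← mulVec_mulVec, zero_mulVec]
    exact hker (show A *ᵥ (N *ᵥ Pi.single i 1) = 0 by rw [mulVec_mulVec, hAN, zero_mulVec])

theorem rank_lt_rank_of_ker_lt {K : Type*} [Field K] {A B : Matrix m n K}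
    (h : LinearMap.ker A.mulVecLin < LinearMap.ker B.mulVecLin) : B.rank < A.rank := by
  have hA := LinearMap.finrank_range_add_finrank_ker A.mulVecLin
  have hB := LinearMap.finrank_range_add_finrank_ker B.mulVecLin
  have := Submodule.finrank_lt_finrank_of_lt h
  rw [rank, rank]
  omega

theorem finrank_symmetricSubmodule_le_finrank_inf_vanishingOnKer [Fintype k] [DecidableEq k]
    {K : Type*} [Field K] {A : Matrix n n K} {V : Matrix n k K} (hV : Vᵀ * V = 1)
    (hker : LinearMap.ker A.mulVecLin ≤ LinearMap.ker Vᵀ.mulVecLin) :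
    finrank K (symmetricSubmodule K k) ≤
      finrank K ↥(symmetricSubmodule K n ⊓ vanishingOnKer A) := by
  let Φ := mulLeftLinearMap n K V ∘ₗ mulRightLinearMap k K Vᵀ
  have hΦ : ∀ X ∈ symmetricSubmodule K k,
      Φ X ∈ symmetricSubmodule K n ⊓ vanishingOnKer A := by
    intro X hX
    have hX : X.IsSymm := hX
    refine ⟨?_, fun v hv => ?_⟩
    · change (V * (X * Vᵀ)).IsSymm
      rw [IsSymm, transpose_mul, transpose_mul, transpose_transpose, hX.eq, Matrix.mul_assoc]
    · change (V * (X * Vᵀ)) *ᵥ v = 0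
      rw [← mulVec_mulVec, ← mulVec_mulVec, show Vᵀ *ᵥ v = 0 from hker hv, mulVec_zero,
        mulVec_zero]
  have hΦinv : ∀ X, Vᵀ * Φ X * V = X := fun X => by
    simp only [Φ, LinearMap.comp_apply, mulLeftLinearMap_apply, mulRightLinearMap_apply,
      ← Matrix.mul_assoc, hV, Matrix.one_mul]
    rw [Matrix.mul_assoc, hV, Matrix.mul_one]
  refine LinearMap.finrank_le_finrank_of_injective (f := Φ.restrict hΦ) fun X Y hXY => ?_
  rw [Subtype.ext_iff, ← hΦinv X, ← hΦinv Y]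
  exact congrArg (Vᵀ * · * V) (congrArg Subtype.val hXY)

end Kernel

section Spectral

variable {n 𝕜 : Type*} [Fintype n] [DecidableEq n] [RCLike 𝕜]

theorem cfc_mul_cfc (A : Matrix n n 𝕜) (f g : ℝ → ℝ) :
    cfc f A * cfc g A = cfc (fun x => f x * g x) A :=
  (cfc_mul f g A (finite_real_spectrum.continuousOn f) (finite_real_spectrum.continuousOn g)).symm

theorem IsHermitian.exists_transpose_mul_eq_one_and_ker_le {A : Matrix n n ℝ}
    (hA : A.IsHermitian) : ∃ V : Matrix n {i // hA.eigenvalues i ≠ 0} ℝ,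
      Vᵀ * V = 1 ∧ LinearMap.ker A.mulVecLin ≤ LinearMap.ker Vᵀ.mulVecLin := by
  set U : Matrix n n ℝ := ↑hA.eigenvectorUnitary
  have hUU : Uᵀ * U = 1 := by
    simpa [U, star_eq_conjTranspose, conjTranspose_eq_transpose_of_trivial] using
      Unitary.coe_star_mul_self hA.eigenvectorUnitary
  have hUA : Uᵀ * A = diagonal hA.eigenvalues * Uᵀ := by
    conv_lhs => rw [hA.spectral_theorem, Unitary.conjStarAlgAut_apply]
    simp [U, RCLike.ofReal_real_eq_id, star_eq_conjTranspose,
      conjTranspose_eq_transpose_of_trivial, ← Matrix.mul_assoc, hUU]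
  refine ⟨U.submatrix id Subtype.val, ?_, fun v hv => funext fun a => ?_⟩
  · rw [transpose_submatrix, ← submatrix_mul _ _ _ _ _ Function.bijective_id, hUU,
      submatrix_one _ Subtype.val_injective]
  · have := congrFun (congrArg (· *ᵥ v) hUA) a
    simp only [← mulVec_mulVec, show A *ᵥ v = 0 from hv, mulVec_zero, mulVec_diagonal] at this
    exact (mul_eq_zero.mp this.symm).resolve_left a.2

theorem IsHermitian.rank_mul_succ_div_two_le_finrank {A : Matrix n n ℝ} (hA : A.IsHermitian) :
    A.rank * (A.rank + 1) / 2 ≤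
      finrank ℝ ↥(symmetricSubmodule ℝ n ⊓ vanishingOnKer A) := by
  obtain ⟨V, hV, hker⟩ := hA.exists_transpose_mul_eq_one_and_ker_le
  rw [hA.rank_eq_card_non_zero_eigs, ← finrank_symmetricSubmodule (R := ℝ)]
  exact finrank_symmetricSubmodule_le_finrank_inf_vanishingOnKer hV hker

theorem IsHermitian.exists_posSemidef_one_add_smul_mulVec_eq_zero {M : Matrix n n 𝕜}
    (hM : M.IsHermitian) (hM0 : M ≠ 0) :
    ∃ (t : ℝ) (w : n → 𝕜), w ≠ 0 ∧ (1 + t • M).PosSemidef ∧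
      (1 + t • M) *ᵥ w = 0 := by
  have hM' : IsSelfAdjoint M := hM
  obtain ⟨j, hj⟩ := Function.ne_iff.mp (hM.eigenvalues_eq_zero_iff.not.mpr hM0)
  obtain ⟨i, -, hi⟩ := Finset.exists_max_image Finset.univ (fun i => |hM.eigenvalues i|)
    ⟨j, Finset.mem_univ _⟩
  set μ := hM.eigenvalues i
  have hμ : μ ≠ 0 := fun h =>
    hj (abs_nonpos_iff.mp (by simpa [h] using hi j (Finset.mem_univ _)))
  refine ⟨-μ⁻¹, _, (WithLp.ofLp_eq_zero 2).ne.2 (hM.eigenvectorBasis.orthonormal.ne_zero i),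
    ?_, ?_⟩
  · have hcfc : 1 + (-μ⁻¹) • M = cfc (fun x => 1 + -μ⁻¹ * x) M := by
      rw [cfc_const_add (1 : ℝ) (fun x => -μ⁻¹ * x) M, cfc_const_mul_id (-μ⁻¹) M, map_one]
    open scoped MatrixOrder in
    rw [← nonneg_iff_posSemidef, hcfc]
    refine cfc_nonneg fun x hx => ?_
    obtain ⟨k, rfl⟩ := hM.spectrum_real_eq_range_eigenvalues ▸ hx
    have : hM.eigenvalues k / μ ≤ 1 := (le_abs_self _).trans <| by
      rw [abs_div]; exact div_le_one_of_le₀ (hi k (Finset.mem_univ _)) (abs_nonneg _)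
    rw [neg_mul, ← div_eq_inv_mul]
    linarith
  · rw [add_mulVec, one_mulVec, smul_mulVec, hM.mulVec_eigenvectorBasis, smul_smul,
      neg_mul, inv_mul_cancel₀ hμ, neg_one_smul, add_neg_cancel]

theorem PosSemidef.exists_eq_mul_mul_of_ker_le {A B : Matrix n n 𝕜} (hA : A.PosSemidef)
    (hB : B.IsHermitian) (hker : LinearMap.ker A.mulVecLin ≤ LinearMap.ker B.mulVecLin) :
    ∃ S M X : Matrix n n 𝕜, S.IsHermitian ∧ M.IsHermitian ∧ A = S * S ∧ B = S * M * S ∧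
      M = S * X := by
  set S := cfc Real.sqrt A
  -- thanks to `0⁻¹ = 0`, `R` is the Moore–Penrose inverse of `S`
  set R := cfc (fun x => (Real.sqrt x)⁻¹) A
  have hS : S.IsHermitian := cfc_predicate _ A
  have hR : R.IsHermitian := cfc_predicate _ A
  have hSS : S * S = A := by
    have hspec : ∀ x ∈ spectrum ℝ A, 0 ≤ x := by
      rw [hA.isHermitian.spectrum_real_eq_range_eigenvalues]
      rintro - ⟨i, rfl⟩
      exact hA.eigenvalues_nonneg i
    rw [cfc_mul_cfc, cfc_congr fun x hx => Real.mul_self_sqrt (hspec x hx)]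
    exact cfc_id' ℝ A (hA.isHermitian : IsSelfAdjoint A)
  have hSR : S * R = R * S := by rw [cfc_mul_cfc, cfc_mul_cfc]; simp only [mul_comm]
  have hSRS : S * R * S = S := by
    rw [cfc_mul_cfc, cfc_mul_cfc]; simp only [mul_inv_mul_cancel]; rfl
  have hRSR : R * S * R = R := by
    rw [cfc_mul_cfc, cfc_mul_cfc]
    simpa only [inv_inv] using congrArg (cfc · A) (funext fun x => mul_inv_mul_cancel (√x)⁻¹)
  -- `R * S` is the orthogonal projection onto the range of `A`; it fixes `B` as `ker A ⊆ ker B`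
  have hBRS : B * (R * S) = B := by
    have hAN : A * (1 - R * S) = 0 := by
      rw [mul_sub, mul_one, sub_eq_zero, ← hSS, mul_assoc, ← mul_assoc S R S, hSRS]
    have := mul_eq_zero_of_ker_le hker hAN
    rwa [mul_sub, mul_one, sub_eq_zero, eq_comm] at this
  have hSRB : S * R * B = B := by
    simpa only [conjTranspose_mul, hB.eq, hR.eq, hS.eq] using congrArg Matrix.conjTranspose hBRS
  refine ⟨S, R * B * R, R * R * B * R, hS, ?_, hSS.symm, ?_, ?_⟩
  · simp only [IsHermitian, conjTranspose_mul, hB.eq, hR.eq, mul_assoc]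
  · calc B = S * R * B * (R * S) := by rw [hSRB, hBRS]
      _ = S * (R * B * R) * S := by simp only [mul_assoc]
  · calc R * B * R = R * S * R * B * R := by rw [hRSR]
      _ = S * (R * R * B * R) := by rw [← hSR]; simp only [mul_assoc]

theorem PosSemidef.exists_posSemidef_add_smul_ker_lt {A B : Matrix n n 𝕜} (hA : A.PosSemidef)
    (hB : B.IsHermitian) (hB0 : B ≠ 0)
    (hker : LinearMap.ker A.mulVecLin ≤ LinearMap.ker B.mulVecLin) :
    ∃ t : ℝ, (A + t • B).PosSemidef ∧
      LinearMap.ker A.mulVecLin < LinearMap.ker (A + t • B).mulVecLin := by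
  obtain ⟨S, M, X, hS, hM, rfl, rfl, hMX⟩ := hA.exists_eq_mul_mul_of_ker_le hB hker
  have hM0 : M ≠ 0 := by rintro rfl; simp at hB0
  obtain ⟨t, w, hw0, hpsd, hw⟩ := hM.exists_posSemidef_one_add_smul_mulVec_eq_zero hM0
  have hpencil : S * S + t • (S * M * S) = S * (1 + t • M) * S := by
    simp only [mul_add, add_mul, mul_one, Matrix.mul_smul, Matrix.smul_mul]
  have hwS : w = S *ᵥ (X *ᵥ (-t • w)) := by
    have hw' : w + t • (M *ᵥ w) = 0 := by rwa [add_mulVec, one_mulVec, smul_mulVec] at hw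
    rw [mulVec_mulVec, ← hMX, mulVec_smul, neg_smul, eq_neg_iff_add_eq_zero, hw']
  set y := X *ᵥ (-t • w)
  refine ⟨t, ?_, SetLike.lt_iff_le_and_exists.mpr ⟨fun v hv => ?_, y, ?_, fun hy => hw0 ?_⟩⟩
  · simpa only [hpencil, hS.eq] using hpsd.mul_mul_conjTranspose_same S
  · have hBv : (S * M * S) *ᵥ v = 0 := hker hv
    rw [LinearMap.mem_ker, mulVecLin_apply] at hv ⊢
    rw [add_mulVec, smul_mulVec, hv, hBv, smul_zero, add_zero]
  · rw [LinearMap.mem_ker, mulVecLin_apply, hpencil, ← mulVec_mulVec, ← mulVec_mulVec, ← hwS,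
      hw, mulVec_zero]
  · rw [← congrArg (· * S) hS.eq, ker_mulVecLin_conjTranspose_mul_self, LinearMap.mem_ker,
      mulVecLin_apply] at hy
    rw [hwS, hy]

end Spectral

end Matrix

theorem stmt_6 (n r : ℕ) (L : AffineSubspace ℝ (Matrix (Fin n) (Fin n) ℝ))
    (hsymm : ∀ A ∈ L, A.IsSymm)
    (hne : ∃ A ∈ L, A.PosSemidef)
    (hcodim : n * (n + 1) / 2 < (r + 1) * (r + 2) / 2 + Module.finrank ℝ L.direction) :
    ∃ A ∈ L, A.PosSemidef ∧ A.rank ≤ r := by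
  classical
  have hex : ∃ k, ∃ A ∈ L, A.PosSemidef ∧ A.rank = k :=
    let ⟨A, hAL, hA⟩ := hne; ⟨_, A, hAL, hA, rfl⟩
  obtain ⟨A, hAL, hA, hk⟩ := Nat.find_spec hex
  refine ⟨A, hAL, hA, not_lt.mp fun hr => ?_⟩
  have hdir : L.direction ≤ symmetricSubmodule ℝ (Fin n) := fun B hB => show B.IsSymm by
    simpa using ((hsymm _ ((AffineSubspace.vadd_mem_iff_mem_direction _ hAL).mpr hB)).sub
      (hsymm A hAL))
  have hW := hA.isHermitian.rank_mul_succ_div_two_le_finrank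
  have hrank : (r + 1) * (r + 2) / 2 ≤ A.rank * (A.rank + 1) / 2 :=
    Nat.div_le_div_right (Nat.mul_le_mul hr (by omega))
  obtain ⟨B, ⟨⟨hBsymm, hBker⟩, hBL⟩, hB0⟩ := Submodule.exists_mem_ne_zero_of_ne_bot <|
    Submodule.inf_ne_bot_of_finrank_lt_add (s := symmetricSubmodule ℝ _ ⊓ vanishingOnKer A)
      inf_le_left hdir <| by
      rw [finrank_symmetricSubmodule, Fintype.card_fin]; omega
  obtain ⟨t, ht, hlt⟩ :=
    hA.exists_posSemidef_add_smul_ker_lt (isHermitian_iff_isSymm.mpr hBsymm) hB0 hBker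
  have htL : A + t • B ∈ L := by
    simpa [add_comm] using AffineSubspace.vadd_mem_of_mem_direction (L.direction.smul_mem t hBL) hAL
  exact (rank_lt_rank_of_ker_lt hlt).not_ge <|
    hk ▸ Nat.find_min' hex ⟨A + t • B, htL, ht, rfl⟩
end

section
/- Let q ∈ ℝ[x₁,…,xₙ] be a quadratic form such that q(x') > 0 for some x'. Then for every point x with q(x) ≥ 0 and every ε > 0, the open ball B_ε(x) intersects the interior of {y : q(y) ≥ 0}. -/
/-!
A quadratic form satisfies the parallelogram law
`q (x + t y) + q (x - t y) = 2 q x + 2 t² q y`, which is positive when `q x ≥ 0`, `q y > 0` and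
`t ≠ 0`. So one of the points `x ± t y`, which are arbitrarily close to `x`, lies in the open set
`{q > 0}` and hence in the interior of `{q ≥ 0}`.
-/

open MvPolynomial

namespace MvPolynomial

variable {σ R : Type*} [CommRing R]

theorem IsHomogeneous.eval_add_smul_of_one {ℓ : MvPolynomial σ R} (hℓ : ℓ.IsHomogeneous 1)
    (x y : σ → R) (t : R) : eval (x + t • y) ℓ = eval x ℓ + t * eval y ℓ := by
  rw [← mem_homogeneousSubmodule, homogeneousSubmodule_one_eq_span_X] at hℓ
  induction hℓ using Submodule.span_induction with
  | mem _ h => obtain ⟨i, rfl⟩ := h; simp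
  | zero => simp
  | add _ _ _ _ h₁ h₂ => simp only [map_add, h₁, h₂]; ring
  | smul c _ _ h => simp only [smul_eq_C_mul, map_mul, eval_C, h]; ring

-- A quadratic form is a sum of products of two linear forms.
theorem IsHomogeneous.eval_add_smul_add_eval_sub_smul {q : MvPolynomial σ R}
    (hq : q.IsHomogeneous 2) (x y : σ → R) (t : R) :
    eval (x + t • y) q + eval (x - t • y) q = 2 * eval x q + 2 * t ^ 2 * eval y q := by
  rw [← mem_homogeneousSubmodule, ← homogeneousSubmodule_one_pow, pow_two] at hq
  induction hq using Submodule.mul_induction_on' with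
  | mem_mul_mem ℓ hℓ m hm =>
    have hsub : x - t • y = x + (-t) • y := by rw [neg_smul, sub_eq_add_neg]
    simp only [map_mul, hsub, hℓ.eval_add_smul_of_one, hm.eval_add_smul_of_one]
    ring
  | add _ _ _ _ h₁ h₂ => simp only [map_add]; linear_combination h₁ + h₂

theorem IsHomogeneous.eval_add_smul_pos_or_eval_sub_smul_pos [LinearOrder R]
    [IsStrictOrderedRing R] {q : MvPolynomial σ R} (hq : q.IsHomogeneous 2) {x y : σ → R}
    (hx : 0 ≤ eval x q) (hy : 0 < eval y q) {t : R} (ht : t ≠ 0) :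
    0 < eval (x + t • y) q ∨ 0 < eval (x - t • y) q := by
  have hsum := hq.eval_add_smul_add_eval_sub_smul x y t
  have ht2 : 0 < t ^ 2 := sq_pos_of_ne_zero ht
  by_contra! h
  nlinarith [mul_pos ht2 hy]

end MvPolynomial

theorem stmt_9 (n : ℕ) (q : MvPolynomial (Fin n) ℝ) (hq : q.IsHomogeneous 2)
    (x' : Fin n → ℝ) (hx' : 0 < eval x' q) :
    ∀ x : Fin n → ℝ, 0 ≤ eval x q → ∀ ε > 0,
      (Metric.ball x ε ∩ interior {y : Fin n → ℝ | 0 ≤ eval y q}).Nonempty := by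
  intro x hx ε hε
  set t := ε / (‖x'‖ + 1)
  have ht : 0 < t := by positivity
  have hnear : ∀ s : ℝ, |s| = t → x + s • x' ∈ Metric.ball x ε := by
    intro s hs
    rw [Metric.mem_ball, dist_self_add_left, norm_smul, Real.norm_eq_abs, hs]
    calc t * ‖x'‖ < t * (‖x'‖ + 1) := by gcongr; linarith
      _ = ε := div_mul_cancel₀ ε (by positivity)
  have hinterior : {y | 0 < eval y q} ⊆ interior {y : Fin n → ℝ | 0 ≤ eval y q} :=
    (isOpen_lt continuous_const (continuous_eval q)).subset_interior_iff.mpr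
      fun _ ↦ le_of_lt (α := ℝ)
  rcases hq.eval_add_smul_pos_or_eval_sub_smul_pos hx hx' ht.ne' with h | h
  · exact ⟨_, hnear t (abs_of_pos ht), hinterior h⟩
  · rw [sub_eq_add_neg, ← neg_smul] at h
    exact ⟨_, hnear (-t) (by rw [abs_neg, abs_of_pos ht]), hinterior h⟩
end

section
/- Let p ∈ ℝ[x₁,…,xₙ] have even degree m and q ∈ ℝ[x₁,…,xₙ] have degree 2 with q(x') > 0 for some x' ∈ ℝⁿ. Let p̄, q̄ ∈ ℝ[x₁,…,x_{n+1}] be their homogenizations. If {x : q(x) ≥ 0} ⊆ {x : p(x) ≥ 0}, then {x : q̄(x) ≥ 0} ⊆ {x : p̄(x) ≥ 0}. -/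
open MvPolynomial

lemma my_eval_smul {σ : Type*} [Fintype σ] {m : ℕ} {φ : MvPolynomial σ ℝ}
    (hφ : φ.IsHomogeneous m) (c : ℝ) (z : σ → ℝ) :
    eval (c • z) φ = c ^ m * eval z φ := by
  rw [eval_eq, eval_eq, Finset.mul_sum]
  apply Finset.sum_congr rfl
  intro d hd
  have hdeg : ∑ i ∈ d.support, d i = m := by
    have := hφ (mem_support_iff.mp hd)
    simpa [Finsupp.weight, Finsupp.linearCombination, Finsupp.sum] using this
  rw [show (∏ i ∈ d.support, (c • z) i ^ d i) = (∏ i ∈ d.support, c ^ d i * z i ^ d i) by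
      apply Finset.prod_congr rfl; intro i _; simp [mul_pow],
    Finset.prod_mul_distrib, Finset.prod_pow_eq_pow_sum, hdeg]
  ring

lemma my_prod_map {σ : Type*} (d : σ →₀ ℕ) (g : σ → ℝ) :
    (d.toMultiset.map g).prod = ∏ k ∈ d.support, g k ^ d k := by
  show _ = d.prod fun a n => g a ^ n
  refine d.induction ?_ ?_
  · simp
  · intro a k f _ _ ih
    rw [Finsupp.toMultiset_add, Multiset.map_add, Multiset.prod_add, ih,
      Finsupp.toMultiset_single, Multiset.map_nsmul, Multiset.map_singleton,
      Multiset.prod_nsmul, Multiset.prod_singleton,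
      Finsupp.prod_add_index' (fun i => pow_zero (g i)) (fun i m n => pow_add (g i) m n)]
    simp [Finsupp.prod_single_index]

lemma my_parallelogram {σ : Type*} [Fintype σ] {φ : MvPolynomial σ ℝ}
    (hφ : φ.IsHomogeneous 2) (a b : σ → ℝ) :
    eval (a + b) φ + eval (a - b) φ = 2 * eval a φ + 2 * eval b φ := by
  rw [eval_eq, eval_eq, eval_eq, eval_eq, ← Finset.sum_add_distrib,
    Finset.mul_sum, Finset.mul_sum, ← Finset.sum_add_distrib]
  apply Finset.sum_congr rfl
  intro d hd
  have hcard : Multiset.card d.toMultiset = 2 := by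
    rw [Finsupp.card_toMultiset]
    have := hφ (mem_support_iff.mp hd)
    simpa [Finsupp.weight, Finsupp.linearCombination, Finsupp.sum] using this
  obtain ⟨i, j, hij⟩ := Multiset.card_eq_two.mp hcard
  have key : ∀ g : σ → ℝ, ∏ k ∈ d.support, g k ^ d k = g i * g j := by
    intro g
    rw [← my_prod_map, hij]
    simp
  rw [key, key, key, key]
  simp only [Pi.add_apply, Pi.sub_apply]
  ring

theorem stmt_10 (n m : ℕ) (hm : Even m)
    (p q : MvPolynomial (Fin n) ℝ)
    (hp : p.totalDegree = m) (hq : q.totalDegree = 2)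
    (x' : Fin n → ℝ) (hx' : 0 < eval x' q)
    (pbar qbar : MvPolynomial (Fin (n + 1)) ℝ)
    (hpbar : pbar.IsHomogeneous m) (hqbar : qbar.IsHomogeneous 2)
    (hpd : ∀ x : Fin n → ℝ, eval (Fin.snoc x 1) pbar = eval x p)
    (hqd : ∀ x : Fin n → ℝ, eval (Fin.snoc x 1) qbar = eval x q)
    (hincl : ∀ x : Fin n → ℝ, 0 ≤ eval x q → 0 ≤ eval x p) :
    ∀ y : Fin (n + 1) → ℝ, 0 ≤ eval y qbar → 0 ≤ eval y pbar := by
  -- Step 1: the claim for points with nonzero last coordinate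
  have claim1 : ∀ y : Fin (n + 1) → ℝ, y (Fin.last n) ≠ 0 →
      0 ≤ eval y qbar → 0 ≤ eval y pbar := by
    intro y hlast hyq
    set t : ℝ := y (Fin.last n) with ht
    set x : Fin n → ℝ := fun i => y i.castSucc / t with hx
    have hy : y = t • (Fin.snoc x 1 : Fin (n+1) → ℝ) := by
      funext k
      refine Fin.lastCases ?_ ?_ k
      · simp [Fin.snoc_last, ← ht]
      · intro i
        simp only [Pi.smul_apply, Fin.snoc_castSucc, smul_eq_mul, hx]
        field_simp
    have hq2 : eval y qbar = t ^ 2 * eval x q := by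
      rw [hy, my_eval_smul hqbar, hqd]
    have hxq : 0 ≤ eval x q := by
      rw [hq2] at hyq
      have ht2 : 0 < t ^ 2 := by positivity
      nlinarith
    have hxp : 0 ≤ eval x p := hincl x hxq
    have hp2 : eval y pbar = t ^ m * eval x p := by
      rw [hy, my_eval_smul hpbar, hpd]
    rw [hp2]
    exact mul_nonneg (hm.pow_nonneg t) hxp
  -- Step 2: general case
  intro y hyq
  by_cases hlast : y (Fin.last n) ≠ 0
  · exact claim1 y hlast hyq
  push_neg at hlast
  set v : Fin (n + 1) → ℝ := Fin.snoc x' 1 with hv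
  have hqv : eval v qbar = eval x' q := hqd x'
  -- for each s ≠ 0, one of the two perturbations works
  have key : ∀ s : ℝ, s ≠ 0 →
      0 ≤ max (eval (y + s • v) pbar) (eval (y - s • v) pbar) := by
    intro s hs
    have par := my_parallelogram hqbar y (s • v)
    have hsv : eval (s • v) qbar = s ^ 2 * eval x' q := by
      rw [my_eval_smul hqbar, hqv]
    have hpos : 0 < eval (s • v) qbar := by
      rw [hsv]
      have : 0 < s ^ 2 := by positivity
      nlinarith
    have hlast1 : (y + s • v) (Fin.last n) ≠ 0 := by
      simp [hlast, hv, Fin.snoc_last, hs]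
    have hlast2 : (y - s • v) (Fin.last n) ≠ 0 := by
      simp [hlast, hv, Fin.snoc_last, hs]
    by_cases h1 : 0 ≤ eval (y + s • v) qbar
    · exact le_max_of_le_left (claim1 _ hlast1 h1)
    · have h2 : 0 ≤ eval (y - s • v) qbar := by nlinarith
      exact le_max_of_le_right (claim1 _ hlast2 h2)
  -- pass to the limit s → 0
  set f : ℝ → ℝ := fun s => max (eval (y + s • v) pbar) (eval (y - s • v) pbar) with hf
  have c1 : Continuous fun s : ℝ => y + s • v :=
    continuous_const.add (continuous_id.smul continuous_const)
  have c2 : Continuous fun s : ℝ => y - s • v :=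
    continuous_const.sub (continuous_id.smul continuous_const)
  have hcont : Continuous f :=
    ((MvPolynomial.continuous_eval pbar).comp c1).max ((MvPolynomial.continuous_eval pbar).comp c2)
  have hf0 : f 0 = eval y pbar := by simp [hf]
  have htend : Filter.Tendsto f (nhdsWithin 0 {(0:ℝ)}ᶜ) (nhds (f 0)) :=
    (hcont.tendsto 0).mono_left nhdsWithin_le_nhds
  have : 0 ≤ f 0 :=
    ge_of_tendsto htend (Filter.eventually_of_mem self_mem_nhdsWithin
      (fun s hs => key s hs))
  rwa [hf0] at this
end

section
/- Let p, q ∈ ℝ[x] be univariate polynomials with deg(p) = 4, deg(q) = 2, {x : q(x) ≥ 0} ⊆ {x : p(x) ≥ 0}, and q(x') > 0 for some x' ∈ ℝ. Then there exists a nonnegative polynomial t ∈ ℝ[x] with deg(t) ≤ 2 such that p(x) − t(x)q(x) ≥ 0 for all x ∈ ℝ. -/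
set_option maxHeartbeats 1600000

open Polynomial Set Filter

section Helpers

lemma asy3 (a b c d M : ℝ) (H : ∀ x, M ≤ x → 0 ≤ a*x^3 + b*x^2 + c*x + d) : 0 ≤ a := by
  by_contra h
  push_neg at h
  set T : ℝ := max (max M 1) ((|b|+|c|+|d|+1)/(-a)) with hT
  have hT1 : (1:ℝ) ≤ T := le_trans (le_max_right M 1) (le_max_left _ _)
  have hTM : M ≤ T := le_trans (le_max_left M 1) (le_max_left _ _)
  have hTb : (|b|+|c|+|d|+1)/(-a) ≤ T := le_max_right _ _
  have ha' : 0 < -a := by linarith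
  have h2 : |b|+|c|+|d|+1 ≤ (-a) * T := by
    rw [div_le_iff₀ ha'] at hTb; linarith [hTb]
  have h3 := H T hTM
  have hb : b ≤ |b| := le_abs_self b
  have hc : c ≤ |c| := le_abs_self c
  have hd : d ≤ |d| := le_abs_self d
  have hb0 : 0 ≤ |b| := abs_nonneg b
  have hc0 : 0 ≤ |c| := abs_nonneg c
  have hd0 : 0 ≤ |d| := abs_nonneg d
  have hT0 : 0 < T := lt_of_lt_of_le one_pos hT1
  have e1 : T^2 * ((|b|+|c|+|d|+1)) ≤ T^2 * ((-a)*T) :=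
    mul_le_mul_of_nonneg_left h2 (sq_nonneg T)
  have e2 : b*T^2 ≤ |b| * T^2 := by nlinarith
  have hTsq : 1 ≤ T^2 := by nlinarith
  have e3a : c*T ≤ |c| * T := mul_le_mul_of_nonneg_right hc hT0.le
  have e3b : |c| * (1*T) ≤ |c| * (T*T) := by
    apply mul_le_mul_of_nonneg_left _ hc0
    nlinarith
  have e3 : c*T ≤ |c| * T^2 := by nlinarith [e3a, e3b]
  have e4a : |d| * 1 ≤ |d| * T^2 := mul_le_mul_of_nonneg_left hTsq hd0
  have e4 : d ≤ |d| * T^2 := by nlinarith [e4a]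
  nlinarith [sq_nonneg T]

lemma asy2 (a b c M : ℝ) (H : ∀ x, M ≤ x → 0 ≤ a*x^2 + b*x + c) : 0 ≤ a :=
  asy3 a b c 0 (max M 0) (by
    intro x hx
    have hx0 : 0 ≤ x := le_trans (le_max_right M 0) hx
    have := H x (le_trans (le_max_left M 0) hx)
    nlinarith)

lemma asy1 (b c M : ℝ) (H : ∀ x, M ≤ x → 0 ≤ b*x + c) : 0 ≤ b :=
  asy2 b c 0 (max M 0) (by
    intro x hx
    have hx0 : 0 ≤ x := le_trans (le_max_right M 0) hx
    have := H x (le_trans (le_max_left M 0) hx)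
    nlinarith)


/-- nonneg on [c,d) implies nonneg at d, by continuity -/
lemma endpointR (k : Polynomial ℝ) {c d : ℝ} (hcd : c < d)
    (H : ∀ x, c ≤ x → x < d → 0 ≤ k.eval x) : 0 ≤ k.eval d := by
  have hne : (nhdsWithin d (Iio d)).NeBot := by infer_instance
  have ht : Tendsto (fun x => k.eval x) (nhdsWithin d (Iio d)) (nhds (k.eval d)) :=
    (k.continuous.tendsto d).mono_left nhdsWithin_le_nhds
  refine ge_of_tendsto ht ?_
  have hmem : Ioi c ∈ nhdsWithin d (Iio d) :=
    nhdsWithin_le_nhds (Ioi_mem_nhds hcd)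
  filter_upwards [hmem, self_mem_nhdsWithin] with x hx1 hx2
  exact H x (le_of_lt hx1) hx2

lemma endpointL (k : Polynomial ℝ) {c d : ℝ} (hcd : c < d)
    (H : ∀ x, c < x → x ≤ d → 0 ≤ k.eval x) : 0 ≤ k.eval c := by
  have hne : (nhdsWithin c (Ioi c)).NeBot := by infer_instance
  have ht : Tendsto (fun x => k.eval x) (nhdsWithin c (Ioi c)) (nhds (k.eval c)) :=
    (k.continuous.tendsto c).mono_left nhdsWithin_le_nhds
  refine ge_of_tendsto ht ?_
  have hmem : Iio d ∈ nhdsWithin c (Ioi c) :=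
    nhdsWithin_le_nhds (Iio_mem_nhds hcd)
  filter_upwards [hmem, self_mem_nhdsWithin] with x hx1 hx2
  exact H x hx2 (le_of_lt hx1)

/-- expansion of eval for natDegree ≤ 3 -/
lemma eval3 (k : Polynomial ℝ) (h : k.natDegree ≤ 3) (x : ℝ) :
    k.eval x = k.coeff 0 + k.coeff 1 * x + k.coeff 2 * x^2 + k.coeff 3 * x^3 := by
  have h4 : k.natDegree < 4 := by omega
  rw [eval_eq_sum_range' (lt_of_lt_of_le h4 (by norm_num : (4:ℕ) ≤ 4))]
  simp [Finset.sum_range_succ]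

lemma eval2 (k : Polynomial ℝ) (h : k.natDegree ≤ 2) (x : ℝ) :
    k.eval x = k.coeff 0 + k.coeff 1 * x + k.coeff 2 * x^2 := by
  have h3 : k.coeff 3 = 0 := coeff_eq_zero_of_natDegree_lt (by omega)
  rw [eval3 k (by omega) x, h3]; ring

lemma eval1 (k : Polynomial ℝ) (h : k.natDegree ≤ 1) (x : ℝ) :
    k.eval x = k.coeff 0 + k.coeff 1 * x := by
  have h2 : k.coeff 2 = 0 := coeff_eq_zero_of_natDegree_lt (by omega)
  rw [eval2 k (by omega) x, h2]; ring

/-- root extraction -/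
lemma rootExtract (f : Polynomial ℝ) (hf : f ≠ 0) {z : ℝ} (hz : f.eval z = 0) :
    ∃ g : Polynomial ℝ, g ≠ 0 ∧ g.natDegree + 1 = f.natDegree ∧
      ∀ x, f.eval x = (x - z) * g.eval x := by
  obtain ⟨g, hg⟩ := (dvd_iff_isRoot).2 hz
  have hg0 : g ≠ 0 := by rintro rfl; simp at hg; exact hf hg
  refine ⟨g, hg0, ?_, ?_⟩
  · rw [hg, natDegree_mul (X_sub_C_ne_zero z) hg0, natDegree_X_sub_C]; ring
  · intro x; rw [hg]; simp


/-- pair block, both roots ≥ s -/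
lemma pair_same_x (r s z1 z2 : ℝ) (hrs : r < s) (h1 : s ≤ z1) (h2 : s ≤ z2) :
    ∃ lam : ℝ, 0 ≤ lam ∧ ∀ x : ℝ, 0 ≤ (z1-x)*(z2-x) - lam*((x-r)*(s-x)) := by
  set m : ℝ := (r+s)/2 with hm
  set l : ℝ := (s-r)/2 with hl
  have hl0 : 0 < l := by rw [hl]; linarith
  have ha : l ≤ z1 - m := by rw [hm, hl]; linarith
  have hb : l ≤ z2 - m := by rw [hm, hl]; linarith
  have hab : 0 < (z1-m)*(z2-m) + l^2 := by nlinarith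
  refine ⟨((z1-m)*(z2-m) - l^2)/(2*l^2), div_nonneg (by nlinarith) (by positivity), ?_⟩
  intro x
  have gkey : 0 ≤ 2*l^2*((z1-x)*(z2-x)) - ((z1-m)*(z2-m) - l^2)*((x-r)*(s-x)) := by
    have hXr : x - r = (x-m) + l := by rw [hm, hl]; ring
    have hXs : s - x = l - (x-m) := by rw [hm, hl]; ring
    rw [hXr, hXs]
    have hq1 : 0 ≤ ((z1-m)^2 - l^2) := by nlinarith
    have hq2 : 0 ≤ ((z2-m)^2 - l^2) := by nlinarith
    have hz1x : z1 - x = (z1-m) - (x-m) := by ring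
    have hz2x : z2 - x = (z2-m) - (x-m) := by ring
    rw [hz1x, hz2x]
    set A := z1 - m
    set B := z2 - m
    set X := x - m
    have key : 0 ≤ ((A*B+l^2)*X - l^2*(A+B))^2 + l^2*((A^2-l^2)*(B^2-l^2)) := by
      have := mul_nonneg hq1 hq2
      positivity
    have id2 : ((A*B+l^2)*X - l^2*(A+B))^2 + l^2*((A^2-l^2)*(B^2-l^2))
        = (A*B+l^2) * (2*l^2*((A - X)*(B - X)) - (A*B - l^2)*((X + l)*(l - X))) := by
      ring
    rw [id2] at key
    exact (mul_nonneg_iff_of_pos_left hab).1 key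
  have hexp : (z1-x)*(z2-x) - ((z1-m)*(z2-m) - l^2)/(2*l^2)*((x-r)*(s-x))
      = (2*l^2*((z1-x)*(z2-x)) - ((z1-m)*(z2-m) - l^2)*((x-r)*(s-x)))/(2*l^2) := by
    field_simp
  rw [hexp]
  positivity

/-- pair block, z1 ≥ s, z2 ≤ r (mixed) -/
lemma pair_mixed_x (r s z1 z2 : ℝ) (hrs : r < s) (h1 : s ≤ z1) (h2 : z2 ≤ r) :
    ∃ lam : ℝ, 0 ≤ lam ∧ ∀ x : ℝ, 0 ≤ (z1-x)*(x-z2) - lam*((x-r)*(s-x)) := by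
  set m : ℝ := (r+s)/2 with hm
  set l : ℝ := (s-r)/2 with hl
  have hl0 : 0 < l := by rw [hl]; linarith
  have ha : l ≤ z1 - m := by rw [hm, hl]; linarith
  have hb : z2 - m ≤ -l := by rw [hm, hl]; linarith
  have habneg : (z1-m)*(z2-m) + l^2 ≤ 0 := by nlinarith
  refine ⟨(l^2 - (z1-m)*(z2-m))/(2*l^2), div_nonneg (by nlinarith) (by positivity), ?_⟩
  intro x
  rcases eq_or_lt_of_le habneg with hdeg | hstrict
  · -- degenerate: z1-m = l, z2-m = -l
    have hA : z1 - m = l := by nlinarith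
    have hB : z2 - m = -l := by nlinarith
    have hlam : (l^2 - (z1-m)*(z2-m))/(2*l^2) = 1 := by
      rw [hA, hB]; field_simp; ring
    rw [hlam]
    have : (z1-x)*(x-z2) - 1*((x-r)*(s-x)) = 0 := by
      have e1 : z1 = m + l := by linarith
      have e2 : z2 = m - l := by linarith
      rw [e1, e2, hm, hl]; ring
    linarith [this]
  · have gkey : 0 ≤ 2*l^2*((z1-x)*(x-z2)) - (l^2 - (z1-m)*(z2-m))*((x-r)*(s-x)) := by
      have hXr : x - r = (x-m) + l := by rw [hm, hl]; ring
      have hXs : s - x = l - (x-m) := by rw [hm, hl]; ring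
      rw [hXr, hXs]
      have hq1 : 0 ≤ ((z1-m)^2 - l^2) := by nlinarith
      have hq2 : 0 ≤ ((z2-m)^2 - l^2) := by nlinarith
      have hz1x : z1 - x = (z1-m) - (x-m) := by ring
      have hz2x : x - z2 = (x-m) - (z2-m) := by ring
      rw [hz1x, hz2x]
      set A := z1 - m
      set B := z2 - m
      set X := x - m
      have hc : 0 < -(A*B + l^2) := by linarith
      have key : 0 ≤ ((-(A*B+l^2))*X + l^2*(A+B))^2 + l^2*((A^2-l^2)*(B^2-l^2)) := by
        have := mul_nonneg hq1 hq2
        positivity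
      have id2 : ((-(A*B+l^2))*X + l^2*(A+B))^2 + l^2*((A^2-l^2)*(B^2-l^2))
          = (-(A*B+l^2)) * (2*l^2*((A - X)*(X - B)) - (l^2 - A*B)*((X + l)*(l - X))) := by
        ring
      rw [id2] at key
      exact (mul_nonneg_iff_of_pos_left hc).1 key
    have hexp : (z1-x)*(x-z2) - (l^2 - (z1-m)*(z2-m))/(2*l^2)*((x-r)*(s-x))
        = (2*l^2*((z1-x)*(x-z2)) - (l^2 - (z1-m)*(z2-m))*((x-r)*(s-x)))/(2*l^2) := by
      field_simp
    rw [hexp]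
    positivity

/-- pair block, both roots inside [r,s] -/
lemma pair_inner_x (r s z1 z2 : ℝ) (hrs : r < s) (h1 : r ≤ z1) (h2 : z1 ≤ s)
    (h3 : r ≤ z2) (h4 : z2 ≤ s) :
    ∃ lam : ℝ, 0 ≤ lam ∧ ∀ x : ℝ, 0 ≤ (x-z1)*(x-z2) + lam*((x-r)*(s-x)) := by
  set m : ℝ := (r+s)/2 with hm
  set l : ℝ := (s-r)/2 with hl
  have hl0 : 0 < l := by rw [hl]; linarith
  have ha1 : -l ≤ z1 - m := by rw [hm, hl]; linarith
  have ha2 : z1 - m ≤ l := by rw [hm, hl]; linarith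
  have hb1 : -l ≤ z2 - m := by rw [hm, hl]; linarith
  have hb2 : z2 - m ≤ l := by rw [hm, hl]; linarith
  have habge : 0 ≤ (z1-m)*(z2-m) + l^2 := by nlinarith
  refine ⟨(l^2 - (z1-m)*(z2-m))/(2*l^2), div_nonneg (by nlinarith) (by positivity), ?_⟩
  intro x
  rcases eq_or_lt_of_le habge with hdeg | hstrict
  · -- degenerate: A² = l², A + B = 0
    have hprod : (z1-m)*(z2-m) = -l^2 := by linarith
    have hsq : (z1-m)^2*(z2-m)^2 = l^4 := by nlinarith [hprod]
    have hA2 : (z1-m)^2 = l^2 := by nlinarith [hsq, mul_le_mul_of_nonneg_left hb2 (le_of_lt hl0), sq_nonneg (z1-m), sq_nonneg (z2-m), mul_le_mul_of_nonneg_left (sq_le_sq' hb1 hb2) (sq_nonneg (z1-m))]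
    have hB2 : (z2-m)^2 = l^2 := by nlinarith [hsq, sq_nonneg (z1-m), sq_nonneg (z2-m), mul_le_mul_of_nonneg_left (sq_le_sq' ha1 ha2) (sq_nonneg (z2-m))]
    have hsum : (z1-m) + (z2-m) = 0 := by nlinarith [sq_nonneg ((z1-m)+(z2-m))]
    have hlam : (l^2 - (z1-m)*(z2-m))/(2*l^2) = 1 := by
      have : (z1-m)*(z2-m) = -l^2 := by linarith
      rw [this]; field_simp; ring
    rw [hlam]
    have : (x-z1)*(x-z2) + 1*((x-r)*(s-x)) = 0 := by
      have hz2 : z2 = 2*m - z1 := by linarith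
      have hxr : (x-r)*(s-x) = ((x-m)+l)*(l-(x-m)) := by rw [hm, hl]; ring
      rw [hz2, hxr]
      nlinarith [hA2]
    linarith [this]
  · have gkey : 0 ≤ 2*l^2*((x-z1)*(x-z2)) + (l^2 - (z1-m)*(z2-m))*((x-r)*(s-x)) := by
      have hXr : x - r = (x-m) + l := by rw [hm, hl]; ring
      have hXs : s - x = l - (x-m) := by rw [hm, hl]; ring
      rw [hXr, hXs]
      have hq1 : 0 ≤ (l^2 - (z1-m)^2) := by nlinarith
      have hq2 : 0 ≤ (l^2 - (z2-m)^2) := by nlinarith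
      have hz1x : x - z1 = (x-m) - (z1-m) := by ring
      have hz2x : x - z2 = (x-m) - (z2-m) := by ring
      rw [hz1x, hz2x]
      set A := z1 - m
      set B := z2 - m
      set X := x - m
      have hc : 0 < A*B + l^2 := hstrict
      have key : 0 ≤ ((A*B+l^2)*X - l^2*(A+B))^2 + l^2*((l^2-A^2)*(l^2-B^2)) := by
        have := mul_nonneg hq1 hq2
        positivity
      have id2 : ((A*B+l^2)*X - l^2*(A+B))^2 + l^2*((l^2-A^2)*(l^2-B^2))
          = (A*B+l^2) * (2*l^2*((X - A)*(X - B)) + (l^2 - A*B)*((X + l)*(l - X))) := by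
        ring
      rw [id2] at key
      exact (mul_nonneg_iff_of_pos_left hc).1 key
    have hexp : (x-z1)*(x-z2) + (l^2 - (z1-m)*(z2-m))/(2*l^2)*((x-r)*(s-x))
        = (2*l^2*((x-z1)*(x-z2)) + (l^2 - (z1-m)*(z2-m))*((x-r)*(s-x)))/(2*l^2) := by
      field_simp
    rw [hexp]
    positivity


/-- interval L2: quadratic nonneg on [r,s] dominates a multiple of (x-r)(s-x) -/
lemma core_L2_interval (k2 k1 k0 r s : ℝ) (hrs : r < s)
    (H : ∀ x, r ≤ x → x ≤ s → 0 ≤ k2*x^2 + k1*x + k0) :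
    ∃ lam : ℝ, 0 ≤ lam ∧ ∀ x : ℝ, 0 ≤ (k2*x^2 + k1*x + k0) - lam*((x-r)*(s-x)) := by
  set m : ℝ := (r+s)/2 with hm
  set l : ℝ := (s-r)/2 with hl
  have hl0 : 0 < l := by rw [hl]; linarith
  have hrm : r ≤ m := by rw [hm]; linarith
  have hms : m ≤ s := by rw [hm]; linarith
  have hKr : 0 ≤ k2*r^2 + k1*r + k0 := H r le_rfl (le_of_lt hrs)
  have hKs : 0 ≤ k2*s^2 + k1*s + k0 := H s (le_of_lt hrs) le_rfl
  have hKm : 0 ≤ k2*m^2 + k1*m + k0 := H m hrm hms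
  have idc : 2*((k2*m^2+k1*m+k0) + k2*l^2) = (k2*r^2+k1*r+k0) + (k2*s^2+k1*s+k0) := by
    rw [hm, hl]; ring
  have idb : 2*l*(2*k2*m+k1) = (k2*s^2+k1*s+k0) - (k2*r^2+k1*r+k0) := by
    rw [hm, hl]; ring
  by_cases hcase : k2*l^2 ≤ k2*m^2+k1*m+k0
  · -- lam = (Km - k2 l²)/(2 l²)
    refine ⟨((k2*m^2+k1*m+k0) - k2*l^2)/(2*l^2), div_nonneg (by linarith) (by positivity), ?_⟩
    intro x
    have hc' : 0 ≤ (k2*m^2+k1*m+k0) + k2*l^2 := by linarith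
    have gkey : 0 ≤ 2*l^2*(k2*x^2+k1*x+k0) - ((k2*m^2+k1*m+k0) - k2*l^2)*((x-r)*(s-x)) := by
      rcases eq_or_lt_of_le hc' with hdeg | hpos
      · -- c' = 0 : Kr = Ks = 0 and b1 = 0
        have hKr0 : k2*r^2+k1*r+k0 = 0 := by linarith
        have hKs0 : k2*s^2+k1*s+k0 = 0 := by linarith
        have hb1 : 2*k2*m+k1 = 0 := by
          have h0 : 2*l*(2*k2*m+k1) = 0 := by rw [idb, hKr0, hKs0]; ring
          rcases mul_eq_zero.mp h0 with h | h
          · exfalso; linarith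
          · exact h
        have id3 : 2*l^2*(k2*x^2+k1*x+k0) - ((k2*m^2+k1*m+k0) - k2*l^2)*((x-r)*(s-x))
            = ((k2*m^2+k1*m+k0) + k2*l^2)*((x-m)^2+l^2) + 2*l^2*(2*k2*m+k1)*(x-m) := by
          rw [hm, hl]; ring
        rw [id3, ← hdeg, hb1]; simp
      · have key : 0 ≤ (((k2*m^2+k1*m+k0) + k2*l^2)*(x-m) + l^2*(2*k2*m+k1))^2
            + l^2*((k2*r^2+k1*r+k0)*(k2*s^2+k1*s+k0)) := by
          have := mul_nonneg hKr hKs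
          positivity
        have id2 : (((k2*m^2+k1*m+k0) + k2*l^2)*(x-m) + l^2*(2*k2*m+k1))^2
            + l^2*((k2*r^2+k1*r+k0)*(k2*s^2+k1*s+k0))
            = ((k2*m^2+k1*m+k0) + k2*l^2) *
              (2*l^2*(k2*x^2+k1*x+k0) - ((k2*m^2+k1*m+k0) - k2*l^2)*((x-r)*(s-x))) := by
          rw [hm, hl]; ring
        rw [id2] at key
        exact (mul_nonneg_iff_of_pos_left hpos).1 key
    have hexp : (k2*x^2+k1*x+k0) - ((k2*m^2+k1*m+k0) - k2*l^2)/(2*l^2)*((x-r)*(s-x))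
        = (2*l^2*(k2*x^2+k1*x+k0) - ((k2*m^2+k1*m+k0) - k2*l^2)*((x-r)*(s-x)))/(2*l^2) := by
      field_simp
    rw [hexp]
    positivity
  · -- lam = 0, K nonneg on ℝ via vertex inside (r,s)
    push_neg at hcase
    have hk2 : 0 < k2 := by nlinarith
    have h2k2 : 0 < 2*k2 := by linarith
    have hb1u : 2*k2*m+k1 < 2*k2*l := by nlinarith
    have hb1l : -(2*k2*l) < 2*k2*m+k1 := by nlinarith
    have hv1 : r ≤ -k1/(2*k2) := by
      rw [le_div_iff₀ h2k2]
      have : r = m - l := by rw [hm, hl]; ring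
      nlinarith
    have hv2 : -k1/(2*k2) ≤ s := by
      rw [div_le_iff₀ h2k2]
      have : s = m + l := by rw [hm, hl]; ring
      nlinarith
    have hKv := H (-k1/(2*k2)) hv1 hv2
    refine ⟨0, le_rfl, ?_⟩
    intro x
    have idv : k2*x^2+k1*x+k0 = k2*(x - (-k1/(2*k2)))^2
        + (k2*(-k1/(2*k2))^2 + k1*(-k1/(2*k2)) + k0) := by
      field_simp
      ring
    rw [idv] at *
    nlinarith [sq_nonneg (x - (-k1/(2*k2))), hKv]

/-- exterior L2 -/
lemma core_L2_exterior (k2 k1 k0 r s : ℝ) (hrs : r < s)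
    (H : ∀ x : ℝ, (x ≤ r ∨ s ≤ x) → 0 ≤ k2*x^2 + k1*x + k0) :
    ∃ mu : ℝ, 0 ≤ mu ∧ ∀ x : ℝ, 0 ≤ (k2*x^2 + k1*x + k0) + mu*((x-r)*(s-x)) := by
  set m : ℝ := (r+s)/2 with hm
  set l : ℝ := (s-r)/2 with hl
  have hl0 : 0 < l := by rw [hl]; linarith
  have hKr : 0 ≤ k2*r^2 + k1*r + k0 := H r (Or.inl le_rfl)
  have hKs : 0 ≤ k2*s^2 + k1*s + k0 := H s (Or.inr le_rfl)
  have hk2 : 0 ≤ k2 := asy2 k2 k1 k0 s (fun x hx => H x (Or.inr hx))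
  have idc : 2*((k2*m^2+k1*m+k0) + k2*l^2) = (k2*r^2+k1*r+k0) + (k2*s^2+k1*s+k0) := by
    rw [hm, hl]; ring
  have idb : 2*l*(2*k2*m+k1) = (k2*s^2+k1*s+k0) - (k2*r^2+k1*r+k0) := by
    rw [hm, hl]; ring
  by_cases hcase : k2*m^2+k1*m+k0 < k2*l^2
  · -- mu = (k2 l² - Km)/(2 l²)
    refine ⟨(k2*l^2 - (k2*m^2+k1*m+k0))/(2*l^2), div_nonneg (by linarith) (by positivity), ?_⟩
    intro x
    have hc' : 0 ≤ (k2*m^2+k1*m+k0) + k2*l^2 := by linarith [hKr, hKs, idc]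
    have gkey : 0 ≤ 2*l^2*(k2*x^2+k1*x+k0) + (k2*l^2 - (k2*m^2+k1*m+k0))*((x-r)*(s-x)) := by
      rcases eq_or_lt_of_le hc' with hdeg | hpos
      · have hKr0 : k2*r^2+k1*r+k0 = 0 := by linarith
        have hKs0 : k2*s^2+k1*s+k0 = 0 := by linarith
        have hb1 : 2*k2*m+k1 = 0 := by
          have h0 : 2*l*(2*k2*m+k1) = 0 := by rw [idb, hKr0, hKs0]; ring
          rcases mul_eq_zero.mp h0 with h | h
          · exfalso; linarith
          · exact h
        have id3 : 2*l^2*(k2*x^2+k1*x+k0) + (k2*l^2 - (k2*m^2+k1*m+k0))*((x-r)*(s-x))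
            = ((k2*m^2+k1*m+k0) + k2*l^2)*((x-m)^2+l^2) + 2*l^2*(2*k2*m+k1)*(x-m) := by
          rw [hm, hl]; ring
        rw [id3, ← hdeg, hb1]; simp
      · have key : 0 ≤ (((k2*m^2+k1*m+k0) + k2*l^2)*(x-m) + l^2*(2*k2*m+k1))^2
            + l^2*((k2*r^2+k1*r+k0)*(k2*s^2+k1*s+k0)) := by
          have := mul_nonneg hKr hKs
          positivity
        have id2 : (((k2*m^2+k1*m+k0) + k2*l^2)*(x-m) + l^2*(2*k2*m+k1))^2
            + l^2*((k2*r^2+k1*r+k0)*(k2*s^2+k1*s+k0))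
            = ((k2*m^2+k1*m+k0) + k2*l^2) *
              (2*l^2*(k2*x^2+k1*x+k0) + (k2*l^2 - (k2*m^2+k1*m+k0))*((x-r)*(s-x))) := by
          rw [hm, hl]; ring
        rw [id2] at key
        exact (mul_nonneg_iff_of_pos_left hpos).1 key
    have hexp : (k2*x^2+k1*x+k0) + (k2*l^2 - (k2*m^2+k1*m+k0))/(2*l^2)*((x-r)*(s-x))
        = (2*l^2*(k2*x^2+k1*x+k0) + (k2*l^2 - (k2*m^2+k1*m+k0))*((x-r)*(s-x)))/(2*l^2) := by
      field_simp
    rw [hexp]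
    positivity
  · -- mu = 0 : K nonneg on ℝ
    push_neg at hcase
    refine ⟨0, le_rfl, ?_⟩
    intro x
    rcases eq_or_lt_of_le hk2 with hk20 | hk2pos
    · -- k2 = 0 : linear nonneg on two rays ⇒ k1 = 0
      have hk1r : 0 ≤ k1 := asy1 k1 k0 s (fun y hy => by
        have := H y (Or.inr hy); rw [← hk20] at this; linarith [this])
      have hk1l : 0 ≤ -k1 := asy1 (-k1) k0 (-r) (fun y hy => by
        have := H (-y) (Or.inl (by linarith)); rw [← hk20] at this; nlinarith [this])
      have hk10 : k1 = 0 := by linarith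
      have hk00 : 0 ≤ k0 := by
        have := H s (Or.inr le_rfl); rw [← hk20, hk10] at this; linarith [this]
      rw [← hk20, hk10]; nlinarith [hk00]
    · -- k2 > 0 : vertex argument
      have h2k2 : 0 < 2*k2 := by linarith
      set v : ℝ := -k1/(2*k2) with hv
      have idv : ∀ y : ℝ, k2*y^2+k1*y+k0 = k2*(y - v)^2 + (k2*v^2 + k1*v + k0) := by
        intro y; rw [hv]; field_simp; ring
      have hKv : 0 ≤ k2*v^2 + k1*v + k0 := by
        by_cases hvin : r < v ∧ v < s
        · -- inside: use Km ≥ k2 l² and |v-m| ≤ l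
          have hvm : (v-m)^2 ≤ l^2 := by
            have h1 : v - m ≤ l := by
              have : v < s := hvin.2
              rw [hm, hl]; linarith
            have h2 : -l ≤ v - m := by
              have : r < v := hvin.1
              rw [hm, hl]; linarith
            nlinarith
          have hKm' := idv m
          nlinarith [hcase, hvm, hKm']
        · push_neg at hvin
          rcases le_or_gt v r with hvr | hvr
          · have := H v (Or.inl hvr); linarith [this]
          · have := H v (Or.inr (hvin hvr)); linarith [this]
      rw [idv x]
      nlinarith [sq_nonneg (x - v), hKv]


lemma intervalAux (f : Polynomial ℝ) (hdeg : f.natDegree = 4) (r s : ℝ) (hrs : r < s)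
    (H : ∀ x, r ≤ x → x ≤ s → 0 ≤ f.eval x)
    (y0 : ℝ) (hy0 : s < y0) (hneg : f.eval y0 < 0) :
    ∃ τ : Polynomial ℝ, τ.natDegree ≤ 2 ∧ (∀ x, 0 ≤ τ.eval x) ∧
      ∀ x, 0 ≤ f.eval x - τ.eval x * ((x-r)*(s-x)) := by
  have hf0 : f ≠ 0 := fun h0 => by rw [h0] at hdeg; simp at hdeg
  obtain ⟨z1, hz1mem, hz1⟩ := intermediate_value_Icc' (le_of_lt hy0)
    (f.continuous.continuousOn : ContinuousOn (fun x => f.eval x) (Icc s y0))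
    (⟨le_of_lt hneg, H s (le_of_lt hrs) le_rfl⟩ : (0:ℝ) ∈ Icc (f.eval y0) (f.eval s))
  obtain ⟨g, hg0, hgdeg, hgeval⟩ := rootExtract f hf0 hz1
  set hp : Polynomial ℝ := -g with hhp
  have hpdeg : hp.natDegree = 3 := by rw [hhp, natDegree_neg]; omega
  have hp0 : hp ≠ 0 := by rw [hhp, neg_ne_zero]; exact hg0
  have hfeval : ∀ x, f.eval x = (z1 - x) * hp.eval x := by
    intro x; rw [hgeval x, hhp]; simp only [eval_neg]; ring
  have hz1s : s ≤ z1 := hz1mem.1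
  have hpI' : ∀ x, r ≤ x → x < s → 0 ≤ hp.eval x := by
    intro x hxr hxs
    have hfx := H x hxr (le_of_lt hxs)
    have hlt : 0 < z1 - x := by linarith
    by_contra hcc
    push_neg at hcc
    nlinarith [hfeval x, mul_pos hlt (neg_pos.2 hcc)]
  have hpI : ∀ x, r ≤ x → x ≤ s → 0 ≤ hp.eval x := by
    intro x hxr hxs
    rcases eq_or_lt_of_le hxs with heq | hlt
    · subst heq; exact endpointR hp hrs hpI'
    · exact hpI' x hxr hlt
  by_cases hc1 : ∃ y1, s < y1 ∧ hp.eval y1 < 0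
  · -- two roots on the right
    obtain ⟨y1, hy1s, hy1neg⟩ := hc1
    obtain ⟨z2, hz2mem, hz2⟩ := intermediate_value_Icc' (le_of_lt hy1s)
      (hp.continuous.continuousOn : ContinuousOn (fun x => hp.eval x) (Icc s y1))
      (⟨le_of_lt hy1neg, hpI s (le_of_lt hrs) le_rfl⟩ : (0:ℝ) ∈ Icc (hp.eval y1) (hp.eval s))
    obtain ⟨k', hk'0, hk'deg, hk'eval⟩ := rootExtract hp hp0 hz2
    set k : Polynomial ℝ := -k' with hkdef
    have hkdeg : k.natDegree ≤ 2 := by rw [hkdef, natDegree_neg]; omega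
    have hkeval : ∀ x, hp.eval x = (z2 - x) * k.eval x := by
      intro x; rw [hk'eval x, hkdef]; simp only [eval_neg]; ring
    have hfk : ∀ x, f.eval x = ((z1-x)*(z2-x)) * k.eval x := by
      intro x; rw [hfeval x, hkeval x]; ring
    have hz2s : s ≤ z2 := hz2mem.1
    have hkI' : ∀ x, r ≤ x → x < s → 0 ≤ k.eval x := by
      intro x hxr hxs
      have h1 := hpI x hxr (le_of_lt hxs)
      have hlt : 0 < z2 - x := by linarith
      by_contra hcc
      push_neg at hcc
      nlinarith [hkeval x, mul_pos hlt (neg_pos.2 hcc)]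
    have hkI : ∀ x, r ≤ x → x ≤ s → 0 ≤ k.eval x := by
      intro x hxr hxs
      rcases eq_or_lt_of_le hxs with heq | hlt
      · subst heq; exact endpointR k hrs hkI'
      · exact hkI' x hxr hlt
    obtain ⟨lam1, hlam1, hblock⟩ := pair_same_x r s z1 z2 hrs hz1s hz2s
    obtain ⟨lam2, hlam2, hkap⟩ := core_L2_interval (k.coeff 2) (k.coeff 1) (k.coeff 0) r s hrs
      (fun x hxr hxs => by
        have := hkI x hxr hxs; rw [eval2 k hkdeg x] at this; linarith)
    have hkapk : ∀ x, 0 ≤ k.eval x - lam2*((x-r)*(s-x)) := by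
      intro x; rw [eval2 k hkdeg x]; linarith [hkap x]
    refine ⟨C lam1 * (k - C lam2 * ((X - C r) * (C s - X)))
      + C lam2 * ((C z1 - X) * (C z2 - X) - C lam1 * ((X - C r) * (C s - X))), ?_, ?_, ?_⟩
    · apply le_trans (natDegree_add_le _ _)
      apply max_le
      · apply le_trans (natDegree_C_mul_le _ _)
        apply le_trans (natDegree_sub_le _ _)
        apply max_le hkdeg
        apply le_trans (natDegree_C_mul_le _ _)
        compute_degree
      · apply le_trans (natDegree_C_mul_le _ _)
        compute_degree
    · intro x
      have e : (C lam1 * (k - C lam2 * ((X - C r) * (C s - X)))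
          + C lam2 * ((C z1 - X) * (C z2 - X) - C lam1 * ((X - C r) * (C s - X)))).eval x
          = lam1*(k.eval x - lam2*((x-r)*(s-x)))
            + lam2*((z1-x)*(z2-x) - lam1*((x-r)*(s-x))) := by
        simp
      rw [e]
      exact add_nonneg (mul_nonneg hlam1 (hkapk x)) (mul_nonneg hlam2 (hblock x))
    · intro x
      have e : (C lam1 * (k - C lam2 * ((X - C r) * (C s - X)))
          + C lam2 * ((C z1 - X) * (C z2 - X) - C lam1 * ((X - C r) * (C s - X)))).eval x
          = lam1*(k.eval x - lam2*((x-r)*(s-x)))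
            + lam2*((z1-x)*(z2-x) - lam1*((x-r)*(s-x))) := by
        simp
      have idm : f.eval x - (C lam1 * (k - C lam2 * ((X - C r) * (C s - X)))
          + C lam2 * ((C z1 - X) * (C z2 - X) - C lam1 * ((X - C r) * (C s - X)))).eval x
            * ((x-r)*(s-x))
          = ((z1-x)*(z2-x) - lam1*((x-r)*(s-x))) * (k.eval x - lam2*((x-r)*(s-x)))
            + (lam1*lam2)*((x-r)*(s-x))^2 := by
        rw [hfk x, e]; ring
      rw [idm]
      exact add_nonneg (mul_nonneg (hblock x) (hkapk x))
        (mul_nonneg (mul_nonneg hlam1 hlam2) (sq_nonneg _))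
  · by_cases hc2 : ∃ y1, y1 < r ∧ hp.eval y1 < 0
    · -- one root right (z1), one root left (z2)
      obtain ⟨y1, hy1r, hy1neg⟩ := hc2
      obtain ⟨z2, hz2mem, hz2⟩ := intermediate_value_Icc (le_of_lt hy1r)
        (hp.continuous.continuousOn : ContinuousOn (fun x => hp.eval x) (Icc y1 r))
        (⟨le_of_lt hy1neg, hpI r le_rfl (le_of_lt hrs)⟩ : (0:ℝ) ∈ Icc (hp.eval y1) (hp.eval r))
      obtain ⟨k, hk0, hkdeg', hkeval⟩ := rootExtract hp hp0 hz2
      have hkdeg : k.natDegree ≤ 2 := by omega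
      have hfk : ∀ x, f.eval x = ((z1-x)*(x-z2)) * k.eval x := by
        intro x; rw [hfeval x, hkeval x]; ring
      have hz2r : z2 ≤ r := hz2mem.2
      have hkI' : ∀ x, r < x → x ≤ s → 0 ≤ k.eval x := by
        intro x hxr hxs
        have h1 := hpI x (le_of_lt hxr) hxs
        have hlt : 0 < x - z2 := by linarith
        by_contra hcc
        push_neg at hcc
        nlinarith [hkeval x, mul_pos hlt (neg_pos.2 hcc)]
      have hkI : ∀ x, r ≤ x → x ≤ s → 0 ≤ k.eval x := by
        intro x hxr hxs
        rcases eq_or_lt_of_le hxr with heq | hlt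
        · subst heq; exact endpointL k hrs (fun y hy1 hy2 => hkI' y hy1 hy2)
        · exact hkI' x hlt hxs
      obtain ⟨lam1, hlam1, hblock⟩ := pair_mixed_x r s z1 z2 hrs hz1s hz2r
      obtain ⟨lam2, hlam2, hkap⟩ := core_L2_interval (k.coeff 2) (k.coeff 1) (k.coeff 0) r s hrs
        (fun x hxr hxs => by
          have := hkI x hxr hxs; rw [eval2 k hkdeg x] at this; linarith)
      have hkapk : ∀ x, 0 ≤ k.eval x - lam2*((x-r)*(s-x)) := by
        intro x; rw [eval2 k hkdeg x]; linarith [hkap x]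
      refine ⟨C lam1 * (k - C lam2 * ((X - C r) * (C s - X)))
        + C lam2 * ((C z1 - X) * (X - C z2) - C lam1 * ((X - C r) * (C s - X))), ?_, ?_, ?_⟩
      · apply le_trans (natDegree_add_le _ _)
        apply max_le
        · apply le_trans (natDegree_C_mul_le _ _)
          apply le_trans (natDegree_sub_le _ _)
          apply max_le hkdeg
          apply le_trans (natDegree_C_mul_le _ _)
          compute_degree
        · apply le_trans (natDegree_C_mul_le _ _)
          compute_degree
      · intro x
        have e : (C lam1 * (k - C lam2 * ((X - C r) * (C s - X)))
            + C lam2 * ((C z1 - X) * (X - C z2) - C lam1 * ((X - C r) * (C s - X)))).eval x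
            = lam1*(k.eval x - lam2*((x-r)*(s-x)))
              + lam2*((z1-x)*(x-z2) - lam1*((x-r)*(s-x))) := by
          simp
        rw [e]
        exact add_nonneg (mul_nonneg hlam1 (hkapk x)) (mul_nonneg hlam2 (hblock x))
      · intro x
        have e : (C lam1 * (k - C lam2 * ((X - C r) * (C s - X)))
            + C lam2 * ((C z1 - X) * (X - C z2) - C lam1 * ((X - C r) * (C s - X)))).eval x
            = lam1*(k.eval x - lam2*((x-r)*(s-x)))
              + lam2*((z1-x)*(x-z2) - lam1*((x-r)*(s-x))) := by
          simp
        have idm : f.eval x - (C lam1 * (k - C lam2 * ((X - C r) * (C s - X)))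
            + C lam2 * ((C z1 - X) * (X - C z2) - C lam1 * ((X - C r) * (C s - X)))).eval x
              * ((x-r)*(s-x))
            = ((z1-x)*(x-z2) - lam1*((x-r)*(s-x))) * (k.eval x - lam2*((x-r)*(s-x)))
              + (lam1*lam2)*((x-r)*(s-x))^2 := by
          rw [hfk x, e]; ring
        rw [idm]
        exact add_nonneg (mul_nonneg (hblock x) (hkapk x))
          (mul_nonneg (mul_nonneg hlam1 hlam2) (sq_nonneg _))
    · -- hp nonneg on ℝ
      push_neg at hc1 hc2
      have hall : ∀ x, 0 ≤ hp.eval x := by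
        intro x
        rcases le_or_gt x s with hxs | hxs
        · rcases le_or_gt r x with hrx | hrx
          · exact hpI x hrx hxs
          · exact hc2 x hrx
        · exact hc1 x hxs
      have hc3pos : 0 ≤ hp.coeff 3 := by
        apply asy3 (hp.coeff 3) (hp.coeff 2) (hp.coeff 1) (hp.coeff 0) 0
        intro x _
        have := hall x
        rw [eval3 hp (le_of_eq hpdeg) x] at this
        linarith
      have hc3neg : 0 ≤ -hp.coeff 3 := by
        apply asy3 (-hp.coeff 3) (hp.coeff 2) (-hp.coeff 1) (hp.coeff 0) 0
        intro x _
        have h' : hp.eval (-x) = hp.coeff 0 - hp.coeff 1*x + hp.coeff 2*x^2 - hp.coeff 3*x^3 := by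
          rw [eval3 hp (le_of_eq hpdeg) (-x)]; ring
        have := hall (-x)
        rw [h'] at this
        linarith
      have hc3 : hp.coeff 3 = 0 := by linarith
      have hd2 : hp.natDegree ≤ 2 := by
        rw [natDegree_le_iff_coeff_eq_zero]
        intro N hN
        by_cases hN3 : N = 3
        · rw [hN3]; exact hc3
        · exact coeff_eq_zero_of_natDegree_lt (by omega)
      refine ⟨C (1/(s-r)) * hp, ?_, ?_, ?_⟩
      · exact le_trans (natDegree_C_mul_le _ _) hd2
      · intro x
        simp only [eval_mul, eval_C]
        have h1 : (0:ℝ) ≤ 1/(s-r) := le_of_lt (one_div_pos.2 (by linarith))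
        exact mul_nonneg h1 (hall x)
      · intro x
        have hkey : 0 ≤ (z1-x)*(s-r) - (x-r)*(s-x) := by nlinarith [sq_nonneg (s-x)]
        have idm : f.eval x - (C (1/(s-r)) * hp).eval x * ((x-r)*(s-x))
            = (1/(s-r)) * (hp.eval x * ((z1-x)*(s-r) - (x-r)*(s-x))) := by
          simp only [eval_mul, eval_C]
          rw [hfeval x]
          have hsr : s - r ≠ 0 := by linarith
          field_simp
        rw [idm]
        have h1 : (0:ℝ) ≤ 1/(s-r) := le_of_lt (one_div_pos.2 (by linarith))
        exact mul_nonneg h1 (mul_nonneg (hall x) hkey)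


lemma intervalCase (f : Polynomial ℝ) (hdeg : f.natDegree = 4) (r s : ℝ) (hrs : r < s)
    (H : ∀ x, r ≤ x → x ≤ s → 0 ≤ f.eval x) :
    ∃ τ : Polynomial ℝ, τ.natDegree ≤ 2 ∧ (∀ x, 0 ≤ τ.eval x) ∧
      ∀ x, 0 ≤ f.eval x - τ.eval x * ((x-r)*(s-x)) := by
  by_cases hglob : ∀ x, 0 ≤ f.eval x
  · exact ⟨0, by simp, by simp, fun x => by simpa using hglob x⟩
  · push_neg at hglob
    obtain ⟨y0, hy0⟩ := hglob
    rcases lt_or_ge s y0 with hcase | hcase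
    · exact intervalAux f hdeg r s hrs H y0 hcase hy0
    · have hy0r : y0 < r := by
        by_contra hcon; push_neg at hcon; exact absurd (H y0 hcon hcase) (not_le.2 hy0)
      have hFdeg : (f.comp (-X)).natDegree = 4 := by
        rw [natDegree_comp]; simp [hdeg]
      have hFeval : ∀ x : ℝ, (f.comp (-X)).eval x = f.eval (-x) := by
        intro x; simp [eval_comp]
      have hH' : ∀ x, -s ≤ x → x ≤ -r → 0 ≤ (f.comp (-X)).eval x := by
        intro x h1 h2; rw [hFeval]; exact H (-x) (by linarith) (by linarith)
      have hFneg : (f.comp (-X)).eval (-y0) < 0 := by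
        rw [hFeval]; simpa using hy0
      obtain ⟨τ', hτd, hτpos, hτineq⟩ := intervalAux (f.comp (-X)) hFdeg (-s) (-r)
        (by linarith) hH' (-y0) (by linarith) hFneg
      refine ⟨τ'.comp (-X), ?_, ?_, ?_⟩
      · rw [natDegree_comp]; simpa using hτd
      · intro x
        have e : (τ'.comp (-X)).eval x = τ'.eval (-x) := by simp [eval_comp]
        rw [e]; exact hτpos (-x)
      · intro x
        have := hτineq (-x)
        rw [hFeval (-x), neg_neg] at this
        have e2 : (-x - -s)*(-r - -x) = (x-r)*(s-x) := by ring
        rw [e2] at this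
        have e : (τ'.comp (-X)).eval x = τ'.eval (-x) := by simp [eval_comp]
        rw [e]; exact this

lemma exteriorCase (f : Polynomial ℝ) (hdeg : f.natDegree = 4) (r s : ℝ) (hrs : r < s)
    (H : ∀ x : ℝ, (x ≤ r ∨ s ≤ x) → 0 ≤ f.eval x) :
    ∃ τ : Polynomial ℝ, τ.natDegree ≤ 2 ∧ (∀ x, 0 ≤ τ.eval x) ∧
      ∀ x, 0 ≤ f.eval x + τ.eval x * ((x-r)*(s-x)) := by
  have hf0 : f ≠ 0 := fun h0 => by rw [h0] at hdeg; simp at hdeg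
  by_cases hglob : ∀ x, 0 ≤ f.eval x
  · refine ⟨0, by simp, by simp, fun x => by simpa using hglob x⟩
  · push_neg at hglob
    obtain ⟨x0, hx0⟩ := hglob
    have hx0r : r < x0 := by
      by_contra hcon; push_neg at hcon; exact absurd (H x0 (Or.inl hcon)) (not_le.2 hx0)
    have hx0s : x0 < s := by
      by_contra hcon; push_neg at hcon; exact absurd (H x0 (Or.inr hcon)) (not_le.2 hx0)
    -- roots z1 ∈ [r,x0), z2 ∈ (x0,s]
    obtain ⟨z1, hz1mem, hz1⟩ := intermediate_value_Icc' (le_of_lt hx0r)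
      (f.continuous.continuousOn : ContinuousOn (fun x => f.eval x) (Icc r x0))
      (⟨le_of_lt hx0, H r (Or.inl le_rfl)⟩ : (0:ℝ) ∈ Icc (f.eval x0) (f.eval r))
    obtain ⟨z2, hz2mem, hz2⟩ := intermediate_value_Icc (le_of_lt hx0s)
      (f.continuous.continuousOn : ContinuousOn (fun x => f.eval x) (Icc x0 s))
      (⟨le_of_lt hx0, H s (Or.inr le_rfl)⟩ : (0:ℝ) ∈ Icc (f.eval x0) (f.eval s))
    have hz1x0 : z1 < x0 := lt_of_le_of_ne hz1mem.2 (fun h => by rw [h] at hz1; simp at hz1; linarith [hz1, hx0])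
    have hz2x0 : x0 < z2 := lt_of_le_of_ne hz2mem.1 (fun h => by rw [← h] at hz2; simp at hz2; linarith [hz2, hx0])
    obtain ⟨g, hg0, hgdeg, hgeval⟩ := rootExtract f hf0 hz1
    have hgz2 : g.eval z2 = 0 := by
      have h1 : f.eval z2 = 0 := hz2
      rw [hgeval z2] at h1
      rcases mul_eq_zero.mp h1 with h | h
      · exfalso; have : z1 < z2 := lt_trans hz1x0 hz2x0; linarith [sub_eq_zero.mp h]
      · exact h
    obtain ⟨k, hk0, hkdeg', hkeval⟩ := rootExtract g hg0 hgz2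
    have hkdeg : k.natDegree ≤ 2 := by omega
    have hfk : ∀ x, f.eval x = ((x-z1)*(x-z2)) * k.eval x := by
      intro x; rw [hgeval x, hkeval x]; ring
    have hz1r : r ≤ z1 := hz1mem.1
    have hz2s : z2 ≤ s := hz2mem.2
    have hz1s : z1 ≤ s := le_trans hz1mem.2 (le_of_lt hx0s)
    have hz2r : r ≤ z2 := le_trans (le_of_lt hx0r) (le_of_lt hz2x0)
    -- k ≥ 0 on exterior
    have hkR' : ∀ x, s < x → 0 ≤ k.eval x := by
      intro x hx
      have h1 := H x (Or.inr (le_of_lt hx))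
      have hpos : 0 < (x-z1)*(x-z2) := by nlinarith
      by_contra hcc
      push_neg at hcc
      nlinarith [hfk x, mul_pos hpos (neg_pos.2 hcc)]
    have hkL' : ∀ x, x < r → 0 ≤ k.eval x := by
      intro x hx
      have h1 := H x (Or.inl (le_of_lt hx))
      have hpos : 0 < (x-z1)*(x-z2) := by nlinarith
      by_contra hcc
      push_neg at hcc
      nlinarith [hfk x, mul_pos hpos (neg_pos.2 hcc)]
    have hkext : ∀ x : ℝ, (x ≤ r ∨ s ≤ x) → 0 ≤ k.eval x := by
      intro x hx
      rcases hx with hx | hx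
      · rcases eq_or_lt_of_le hx with heq | hlt
        · subst heq; exact endpointR k (show x - 1 < x by linarith) (fun y _ hy2 => hkL' y hy2)
        · exact hkL' x hlt
      · rcases eq_or_lt_of_le hx with heq | hlt
        · rw [← heq]; exact endpointL k (show s < s + 1 by linarith) (fun y hy1 _ => hkR' y hy1)
        · exact hkR' x hlt
    obtain ⟨lam, hlam, hblock⟩ := pair_inner_x r s z1 z2 hrs hz1r hz1s hz2r hz2s
    obtain ⟨mu, hmu, hkapc⟩ := core_L2_exterior (k.coeff 2) (k.coeff 1) (k.coeff 0) r s hrs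
      (fun x hx => by have := hkext x hx; rw [eval2 k hkdeg x] at this; linarith)
    have hkap : ∀ x, 0 ≤ k.eval x + mu*((x-r)*(s-x)) := by
      intro x; rw [eval2 k hkdeg x]; linarith [hkapc x]
    refine ⟨C lam * (k + C mu * ((X - C r) * (C s - X)))
      + C mu * ((X - C z1) * (X - C z2) + C lam * ((X - C r) * (C s - X))), ?_, ?_, ?_⟩
    · apply le_trans (natDegree_add_le _ _)
      apply max_le
      · apply le_trans (natDegree_C_mul_le _ _)
        apply le_trans (natDegree_add_le _ _)
        apply max_le hkdeg
        apply le_trans (natDegree_C_mul_le _ _)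
        compute_degree
      · apply le_trans (natDegree_C_mul_le _ _)
        compute_degree
    · intro x
      have e : (C lam * (k + C mu * ((X - C r) * (C s - X)))
          + C mu * ((X - C z1) * (X - C z2) + C lam * ((X - C r) * (C s - X)))).eval x
          = lam*(k.eval x + mu*((x-r)*(s-x)))
            + mu*((x-z1)*(x-z2) + lam*((x-r)*(s-x))) := by
        simp
      rw [e]
      exact add_nonneg (mul_nonneg hlam (hkap x)) (mul_nonneg hmu (hblock x))
    · intro x
      have e : (C lam * (k + C mu * ((X - C r) * (C s - X)))
          + C mu * ((X - C z1) * (X - C z2) + C lam * ((X - C r) * (C s - X)))).eval x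
          = lam*(k.eval x + mu*((x-r)*(s-x)))
            + mu*((x-z1)*(x-z2) + lam*((x-r)*(s-x))) := by
        simp
      have idm : f.eval x + (C lam * (k + C mu * ((X - C r) * (C s - X)))
          + C mu * ((X - C z1) * (X - C z2) + C lam * ((X - C r) * (C s - X)))).eval x
            * ((x-r)*(s-x))
          = ((x-z1)*(x-z2) + lam*((x-r)*(s-x))) * (k.eval x + mu*((x-r)*(s-x)))
            + (lam*mu)*((x-r)*(s-x))^2 := by
        rw [hfk x, e]; ring
      rw [idm]
      exact add_nonneg (mul_nonneg (hblock x) (hkap x))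
        (mul_nonneg (mul_nonneg hlam hmu) (sq_nonneg _))

lemma quadFactor (q : Polynomial ℝ) (hq : q.natDegree = 2) (x0 xp : ℝ)
    (h0 : q.eval x0 < 0) (h1 : 0 < q.eval xp) :
    ∃ a r s : ℝ, a ≠ 0 ∧ r < s ∧ ∀ x, q.eval x = a*((x-r)*(x-s)) := by
  have hq0 : q ≠ 0 := fun h => by rw [h] at h1; simp at h1
  have hne : x0 ≠ xp := fun h => by rw [h] at h0; linarith
  -- find a root between x0 and xp
  have hroot : ∃ z : ℝ, q.eval z = 0 := by
    rcases lt_or_gt_of_ne hne with hlt | hgt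
    · obtain ⟨z, _, hz⟩ := intermediate_value_Icc (le_of_lt hlt)
        (q.continuous.continuousOn : ContinuousOn (fun x => q.eval x) (Icc x0 xp))
        (⟨le_of_lt h0, le_of_lt h1⟩ : (0:ℝ) ∈ Icc (q.eval x0) (q.eval xp))
      exact ⟨z, hz⟩
    · obtain ⟨z, _, hz⟩ := intermediate_value_Icc' (le_of_lt hgt)
        (q.continuous.continuousOn : ContinuousOn (fun x => q.eval x) (Icc xp x0))
        (⟨le_of_lt h0, le_of_lt h1⟩ : (0:ℝ) ∈ Icc (q.eval x0) (q.eval xp))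
      exact ⟨z, hz⟩
  obtain ⟨z1, hz1⟩ := hroot
  obtain ⟨g, hg0, hgdeg, hgeval⟩ := rootExtract q hq0 hz1
  have hgdeg1 : g.natDegree = 1 := by omega
  have hc1 : g.coeff 1 ≠ 0 := by
    have := leadingCoeff_ne_zero.2 hg0
    rwa [leadingCoeff, hgdeg1] at this
  set z2 : ℝ := -g.coeff 0 / g.coeff 1 with hz2
  have hgz : ∀ x, g.eval x = g.coeff 1 * (x - z2) := by
    intro x
    rw [eval1 g (le_of_eq hgdeg1) x, hz2]
    field_simp
    ring
  have hqfac : ∀ x, q.eval x = g.coeff 1 * ((x-z1)*(x-z2)) := by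
    intro x; rw [hgeval x, hgz x]; ring
  have hz12 : z1 ≠ z2 := by
    intro h
    rw [← h] at hqfac
    have e0 := hqfac x0
    have e1 := hqfac xp
    rcases le_or_gt 0 (g.coeff 1) with hc | hc
    · nlinarith [mul_nonneg hc (mul_self_nonneg (x0 - z1)), e0, h0]
    · nlinarith [mul_nonneg (le_of_lt (neg_pos.2 hc)) (mul_self_nonneg (xp - z1)), e1, h1]
  refine ⟨g.coeff 1, min z1 z2, max z1 z2, hc1, min_lt_max.2 hz12, ?_⟩
  intro x
  rw [hqfac x]
  rcases le_total z1 z2 with h | h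
  · rw [min_eq_left h, max_eq_right h]
  · rw [min_eq_right h, max_eq_left h]; ring

end Helpers


theorem stmt_11 (p q : Polynomial ℝ)
    (hp : p.natDegree = 4) (hq : q.natDegree = 2)
    (hincl : ∀ x : ℝ, 0 ≤ q.eval x → 0 ≤ p.eval x)
    (x' : ℝ) (hx' : 0 < q.eval x') :
    ∃ t : Polynomial ℝ, t.natDegree ≤ 2 ∧ (∀ x : ℝ, 0 ≤ t.eval x) ∧
      ∀ x : ℝ, 0 ≤ p.eval x - t.eval x * q.eval x := by
  by_cases hglob : ∀ x : ℝ, 0 ≤ p.eval x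
  · exact ⟨0, by simp, by simp, fun x => by simpa using hglob x⟩
  · push_neg at hglob
    obtain ⟨x0, hx0⟩ := hglob
    have hqx0 : q.eval x0 < 0 := by
      by_contra hcon; push_neg at hcon; exact absurd (hincl x0 hcon) (not_le.2 hx0)
    obtain ⟨a, r, s, ha, hrs, hqf⟩ := quadFactor q hq x0 x' hqx0 hx'
    rcases lt_or_gt_of_ne ha with haneg | hapos
    · -- a < 0 : S = [r,s]
      have H : ∀ x, r ≤ x → x ≤ s → 0 ≤ p.eval x := by
        intro x h1 h2
        apply hincl
        rw [hqf x]
        nlinarith [mul_nonneg (sub_nonneg.2 h1) (sub_nonneg.2 h2)]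
      obtain ⟨τ, hτd, hτpos, hτineq⟩ := intervalCase p hp r s hrs H
      refine ⟨C (-a)⁻¹ * τ, le_trans (natDegree_C_mul_le _ _) hτd, ?_, ?_⟩
      · intro x
        simp only [eval_mul, eval_C]
        exact mul_nonneg (le_of_lt (inv_pos.2 (neg_pos.2 haneg))) (hτpos x)
      · intro x
        have h2 := hτineq x
        rw [hqf x]
        simp only [eval_mul, eval_C]
        have e : (-a)⁻¹ * τ.eval x * (a*((x-r)*(x-s))) = τ.eval x * ((x-r)*(s-x)) := by
          have ha' : -a ≠ 0 := by intro h; apply ha; linarith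
          field_simp
          ring
        rw [e]
        linarith [h2]
    · -- a > 0 : S = exterior
      have H : ∀ x : ℝ, (x ≤ r ∨ s ≤ x) → 0 ≤ p.eval x := by
        intro x hx
        apply hincl
        rw [hqf x]
        rcases hx with hx | hx
        · nlinarith [mul_nonneg (sub_nonneg.2 hx : (0:ℝ) ≤ r - x) (by linarith : (0:ℝ) ≤ s - x)]
        · nlinarith [mul_nonneg (by linarith : (0:ℝ) ≤ x - r) (sub_nonneg.2 hx : (0:ℝ) ≤ x - s)]
      obtain ⟨τ, hτd, hτpos, hτineq⟩ := exteriorCase p hp r s hrs H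
      refine ⟨C a⁻¹ * τ, le_trans (natDegree_C_mul_le _ _) hτd, ?_, ?_⟩
      · intro x
        simp only [eval_mul, eval_C]
        exact mul_nonneg (le_of_lt (inv_pos.2 hapos)) (hτpos x)
      · intro x
        have h2 := hτineq x
        rw [hqf x]
        simp only [eval_mul, eval_C]
        have e : a⁻¹ * τ.eval x * (a*((x-r)*(x-s))) = -(τ.eval x * ((x-r)*(s-x))) := by
          field_simp
          ring
        rw [e]
        linarith [h2]
end

section
/- Let f be a 4-form and g a quadratic form in ℝ[x₁,x₂], with g(x') > 0 for some x' ∈ ℝ². Then {x : g(x) ≥ 0} ⊆ {x : f(x) ≥ 0} if and only if there exists a nonnegative homogeneous polynomial t ∈ ℝ[x₁,x₂] of degree at most 2 such that f(x) − t(x)g(x) ≥ 0 for all x ∈ ℝ². -/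
/-!
If `f` is negative somewhere, then `g` takes both signs, so after an invertible linear change of
coordinates `y = N x` it becomes `y₀ y₁`. The hypothesis then says that the dehomogenised quartic
`p(s) = f(s, 1)` (in the new coordinates) is nonnegative for `s ≥ 0`, and by the Pólya–Szegő
theorem `p = P² + s Q²` with `deg Q ≤ 1`. Homogenising, `f = P(y)² + y₀ y₁ Q(y)² = P² + g Q²`,
so `t = Q²` works; if `f ≥ 0` everywhere, `t = 0` does.

Pólya–Szegő is proved by induction on the degree: the polynomials `P² + X Q²` are closed under
multiplication, and a polynomial nonnegative on `[0, ∞)` has a factor `X - r` with `r ≤ 0`,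
a factor `(X - r)²`, or a factor that is a positive definite quadratic.
-/

open Set Topology
open scoped Polynomial Matrix

lemma nonneg_on_closure_of_nonneg_off_point {X : Type*} [TopologicalSpace X] {h : X → ℝ}
    (hh : Continuous h) {U : Set X} (hU : IsOpen U) (r : X) [(𝓝[≠] r).NeBot]
    (H : ∀ s ∈ U, s ≠ r → 0 ≤ h s) : ∀ s ∈ closure U, 0 ≤ h s := by
  have hU' : closure U ⊆ closure (U ∩ {r}ᶜ) :=
    closure_minimal ((dense_compl_singleton r).open_subset_closure_inter hU) isClosed_closure
  exact fun s hs ↦ closure_minimal (fun s hs ↦ H s hs.1 hs.2) (isClosed_le continuous_const hh)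
    (hU' hs)

lemma Continuous.pos_of_forall_ne_zero {h : ℝ → ℝ} (hh : Continuous h) (hne : ∀ x, h x ≠ 0)
    {a : ℝ} (ha : 0 < h a) (x : ℝ) : 0 < h x := by
  by_contra! hx
  obtain ⟨c, hc⟩ := intermediate_value_univ x a hh ⟨hx, ha.le⟩
  exact hne c hc

namespace Polynomial

variable {R : Type*} [CommRing R]

def IsSqAddXMulSq (p : R[X]) : Prop := ∃ P Q : R[X], p = P ^ 2 + X * Q ^ 2

lemma IsSqAddXMulSq.mul {p q : R[X]} (hp : p.IsSqAddXMulSq) (hq : q.IsSqAddXMulSq) :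
    (p * q).IsSqAddXMulSq := by
  obtain ⟨P, Q, rfl⟩ := hp
  obtain ⟨P', Q', rfl⟩ := hq
  exact ⟨P * P' - X * Q * Q', P * Q' + Q * P', by ring⟩

lemma isSqAddXMulSq_X_sub_C {r : ℝ} (hr : r ≤ 0) : (X - C r).IsSqAddXMulSq := by
  refine ⟨C √(-r), 1, ?_⟩
  rw [← C_pow, Real.sq_sqrt (neg_nonneg.2 hr), C_neg]
  ring

lemma isSqAddXMulSq_of_natDegree_le_two {p : ℝ[X]} (hdeg : p.natDegree ≤ 2)
    (hp : ∀ x, 0 ≤ p.eval x) : p.IsSqAddXMulSq := by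
  set a := p.coeff 2
  set b := p.coeff 1
  set c := p.coeff 0
  have hp_eq : p = C a * X ^ 2 + C b * X + C c :=
    eq_quadratic_of_degree_le_two (natDegree_le_iff_degree_le.1 hdeg)
  have heval : ∀ x, 0 ≤ a * (x * x) + b * x + c := fun x ↦ by
    simpa [hp_eq, sq] using hp x
  have hdisc : b ^ 2 - 4 * a * c ≤ 0 := by simpa [discrim] using discrim_le_zero heval
  have hc : 0 ≤ c := by simpa using heval 0
  have ha : 0 ≤ a := by nlinarith [heval 1, heval (-1)]
  set α := √a
  set γ := √c
  have hb : 0 ≤ b + 2 * α * γ := by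
    have : (α * γ) ^ 2 = a * c := by rw [mul_pow, Real.sq_sqrt ha, Real.sq_sqrt hc]
    nlinarith [mul_nonneg (Real.sqrt_nonneg a) (Real.sqrt_nonneg c)]
  refine ⟨C α * X - C γ, C √(b + 2 * α * γ), ?_⟩
  have hC : ∀ y : ℝ, 0 ≤ y → C y = C √y ^ 2 := fun y hy ↦ by rw [← C_pow, Real.sq_sqrt hy]
  have hCb : C b = C √(b + 2 * α * γ) ^ 2 - 2 * C α * C γ := by
    rw [← hC _ hb]; simp only [map_add, map_mul, C_ofNat]; ring
  rw [hp_eq, hC a ha, hC c hc, hCb]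
  ring

lemma sq_X_sub_C_dvd_of_isLocalMin {p : ℝ[X]} {r : ℝ} (hp : p ≠ 0) (hr : p.IsRoot r)
    (hmin : IsLocalMin (fun x ↦ p.eval x) r) : (X - C r) ^ 2 ∣ p := by
  have hderiv : p.derivative.IsRoot r := by simpa using hmin.deriv_eq_zero
  exact (le_rootMultiplicity_iff hp).1 ((one_lt_rootMultiplicity_iff_isRoot hp).2 ⟨hr, hderiv⟩)

lemma eval_nonneg_of_eq_mul {p d q : ℝ[X]} (hpdq : p = d * q)
    (hp : ∀ s, 0 ≤ s → 0 ≤ p.eval s) (r : ℝ) (hd : ∀ s, 0 < s → s ≠ r → 0 < d.eval s) :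
    ∀ s, 0 ≤ s → 0 ≤ q.eval s := by
  have H : ∀ s ∈ Ioi (0 : ℝ), s ≠ r → 0 ≤ q.eval s := fun s hs hsr ↦
    nonneg_of_mul_nonneg_right (by simpa [hpdq] using hp s (le_of_lt hs)) (hd s hs hsr)
  intro s hs
  exact nonneg_on_closure_of_nonneg_off_point q.continuous isOpen_Ioi r H s
    (by rwa [closure_Ioi])

lemma exists_factor_of_nonneg {p : ℝ[X]} (hdeg : 0 < p.natDegree)
    (hp : ∀ s, 0 ≤ s → 0 ≤ p.eval s) :
    ∃ d q : ℝ[X], p = d * q ∧ 0 < d.natDegree ∧ d.IsSqAddXMulSq ∧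
      ∀ s, 0 ≤ s → 0 ≤ q.eval s := by
  have hp0 : p ≠ 0 := ne_zero_of_natDegree_gt hdeg
  by_cases hroot : ∃ r, p.IsRoot r
  · obtain ⟨r, hr⟩ := hroot
    rcases le_or_gt r 0 with hr0 | hr0
    · have hpq : p = (X - C r) * (p /ₘ (X - C r)) := (mul_divByMonic_eq_iff_isRoot.2 hr).symm
      refine ⟨X - C r, _, hpq, by simp, isSqAddXMulSq_X_sub_C hr0,
        eval_nonneg_of_eq_mul hpq hp r fun s hs _ ↦ ?_⟩
      simpa using hr0.trans_lt hs
    · have hmin : IsLocalMin (fun x ↦ p.eval x) r :=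
        Filter.eventually_of_mem (Ioi_mem_nhds hr0) fun x hx ↦ by
          simpa [hr.eq_zero] using hp x (le_of_lt hx)
      obtain ⟨q, hpq⟩ := sq_X_sub_C_dvd_of_isLocalMin hp0 hr hmin
      refine ⟨(X - C r) ^ 2, q, hpq, by simp [natDegree_pow], ⟨X - C r, 0, by ring⟩,
        eval_nonneg_of_eq_mul hpq hp r fun s _ hsr ↦ ?_⟩
      simpa using sq_pos_of_ne_zero (sub_ne_zero.2 hsr)
  · push Not at hroot
    obtain ⟨k, hk, hkp⟩ := exists_irreducible_of_natDegree_pos hdeg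
    have hk_root : ∀ x, k.eval x ≠ 0 := fun x hx ↦
      hroot x (eval_eq_zero_of_dvd_of_eval_eq_zero hkp hx)
    set d := C (k.eval 0)⁻¹ * k
    have hd_pos : ∀ x, 0 < d.eval x :=
      d.continuous.pos_of_forall_ne_zero (a := 0) (fun x ↦ by simp [d, hk_root])
        (by simp [d, hk_root])
    obtain ⟨q, hpq⟩ : d ∣ p := (C_mul_dvd (by simpa using hk_root 0)).2 hkp
    refine ⟨d, q, hpq, ?_, isSqAddXMulSq_of_natDegree_le_two ?_ fun x ↦ (hd_pos x).le,
      eval_nonneg_of_eq_mul hpq hp 0 fun s _ _ ↦ hd_pos s⟩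
    · simpa [d, natDegree_C_mul (inv_ne_zero (hk_root 0))] using hk.natDegree_pos
    · simpa [d, natDegree_C_mul (inv_ne_zero (hk_root 0))] using hk.natDegree_le_two

theorem isSqAddXMulSq_of_nonneg {p : ℝ[X]} (hp : ∀ s, 0 ≤ s → 0 ≤ p.eval s) :
    p.IsSqAddXMulSq := by
  induction hn : p.natDegree using Nat.strong_induction_on generalizing p with
  | _ n ih =>
  rcases Nat.eq_zero_or_pos n with rfl | hn0
  · refine isSqAddXMulSq_of_natDegree_le_two (by lia) fun x ↦ ?_
    rw [eq_C_of_natDegree_eq_zero hn, eval_C]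
    simpa [← coeff_zero_eq_eval_zero] using hp 0 le_rfl
  obtain ⟨d, q, rfl, hd, hdsq, hq⟩ := exists_factor_of_nonneg (hn ▸ hn0) hp
  have hq0 : q ≠ 0 := by rintro rfl; simp at hn; lia
  have hd0 : d ≠ 0 := by rintro rfl; simp at hd
  exact hdsq.mul (ih _ (by rw [← hn, natDegree_mul hd0 hq0]; lia) hq rfl)

lemma natDegree_le_natDegree_sq_add_X_mul_sq (P Q : ℝ[X]) :
    (P ^ 2).natDegree ≤ (P ^ 2 + X * Q ^ 2).natDegree ∧
      (X * Q ^ 2).natDegree ≤ (P ^ 2 + X * Q ^ 2).natDegree := by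
  by_cases h : P = 0 ∧ Q = 0
  · simp [h.1, h.2]
  -- both leading coefficients are squares, so they cannot cancel
  have hlc : (P ^ 2).leadingCoeff + (X * Q ^ 2).leadingCoeff ≠ 0 := by
    rw [mul_comm, leadingCoeff_mul_X, leadingCoeff_pow, leadingCoeff_pow]
    rcases not_and_or.1 h with h | h
    · have := leadingCoeff_ne_zero.2 h; positivity
    · have := leadingCoeff_ne_zero.2 h; positivity
  have hdeg := degree_add_eq_of_leadingCoeff_add_ne_zero hlc
  exact ⟨natDegree_le_natDegree (hdeg ▸ le_max_left _ _),
    natDegree_le_natDegree (hdeg ▸ le_max_right _ _)⟩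

end Polynomial

lemma discrim_pos_of_indefinite {a b c : ℝ} {x z : Fin 2 → ℝ}
    (hx : 0 < a * x 0 ^ 2 + b * x 0 * x 1 + c * x 1 ^ 2)
    (hz : a * z 0 ^ 2 + b * z 0 * z 1 + c * z 1 ^ 2 < 0) : 0 < discrim a b c := by
  set β := 2 * a * x 0 * z 0 + b * (x 0 * z 1 + x 1 * z 0) + 2 * c * x 1 * z 1
  set δ := x 0 * z 1 - x 1 * z 0
  have key : 4 * (a * x 0 ^ 2 + b * x 0 * x 1 + c * x 1 ^ 2) *
      (a * z 0 ^ 2 + b * z 0 * z 1 + c * z 1 ^ 2) = β ^ 2 - discrim a b c * δ ^ 2 := by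
    rw [discrim]; ring
  by_contra! hD
  nlinarith [mul_neg_of_pos_of_neg hx hz, mul_nonneg (neg_nonneg.2 hD) (sq_nonneg δ), sq_nonneg β]

lemma exists_det_ne_zero_eq_mul_of_discrim_pos {a b c : ℝ} (hD : 0 < discrim a b c) :
    ∃ N : Matrix (Fin 2) (Fin 2) ℝ, N.det ≠ 0 ∧
      ∀ y : Fin 2 → ℝ, a * y 0 ^ 2 + b * y 0 * y 1 + c * y 1 ^ 2 = (N *ᵥ y) 0 * (N *ᵥ y) 1 := by
  rcases eq_or_ne a 0 with rfl | ha
  · have hb : b ≠ 0 := by rintro rfl; simp [discrim] at hD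
    refine ⟨!![0, 1; b, c], by simpa [Matrix.det_fin_two_of] using hb, fun y ↦ ?_⟩
    simp [Matrix.mulVec, dotProduct, Fin.sum_univ_two]
    ring
  · set s := √(discrim a b c)
    have hs : s ^ 2 = b ^ 2 - 4 * a * c := by rw [Real.sq_sqrt hD.le, discrim]
    have hs0 : s ≠ 0 := (Real.sqrt_pos.2 hD).ne'
    -- `4 a (a y₀² + b y₀ y₁ + c y₁²) = (2 a y₀ + (b - s) y₁) (2 a y₀ + (b + s) y₁)`
    refine ⟨!![2 * a, b - s; 1 / 2, (b + s) / (4 * a)], ?_, fun y ↦ ?_⟩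
    · rwa [Matrix.det_fin_two_of, show 2 * a * ((b + s) / (4 * a)) - (b - s) * (1 / 2) = s by
        field_simp; ring]
    · simp [Matrix.mulVec, dotProduct, Fin.sum_univ_two]
      field_simp
      linear_combination 2 * y 1 ^ 2 * hs

namespace MvPolynomial

open Polynomial (homogenize homogenize_mul homogenize_add)

lemma natDegree_aeval_X_one_le {R : Type*} [CommSemiring R] {F : MvPolynomial (Fin 2) R}
    {n : ℕ} (hF : F.IsHomogeneous n) : (aeval (![.X, 1] : Fin 2 → R[X]) F).natDegree ≤ n := by
  rw [F.as_sum, map_sum]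
  refine Polynomial.natDegree_sum_le_of_forall_le _ _ fun d hd ↦ ?_
  have hdn : d 0 + d 1 = n := by
    simpa [Finsupp.weight_apply, Finsupp.sum_fintype] using hF (mem_support_iff.1 hd)
  simp only [aeval_monomial, Finsupp.prod_fintype d _ (fun _ ↦ pow_zero _), Fin.prod_univ_two]
  simp only [Matrix.cons_val_zero, Matrix.cons_val_one, one_pow, mul_one]
  exact (Polynomial.natDegree_C_mul_X_pow_le _ _).trans (by lia)

lemma eval_aeval_X_one {R : Type*} [CommSemiring R] (F : MvPolynomial (Fin 2) R) (s : R) :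
    (aeval (![.X, 1] : Fin 2 → R[X]) F).eval s = eval ![s, 1] F := by
  have hpt : (fun i ↦ (![.X, 1] i : R[X]).eval s) = ![s, 1] := by
    ext i; fin_cases i <;> simp
  rw [aeval_def, polynomial_eval_eval₂, hpt, Polynomial.algebraMap_eq,
    show (Polynomial.evalRingHom s).comp Polynomial.C = RingHom.id R from
      RingHom.ext fun _ ↦ by simp]
  rfl

theorem IsHomogeneous.exists_eq_sq_add_X_mul_X_mul_sq {F : MvPolynomial (Fin 2) ℝ} {m : ℕ}
    (hF : F.IsHomogeneous (2 * m + 2)) (h : ∀ s, 0 ≤ s → 0 ≤ eval ![s, 1] F) :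
    ∃ P Q : MvPolynomial (Fin 2) ℝ, Q.IsHomogeneous m ∧ F = P ^ 2 + X 0 * X 1 * Q ^ 2 := by
  set p := MvPolynomial.aeval (![.X, 1] : Fin 2 → ℝ[X]) F
  obtain ⟨P, Q, hPQ⟩ : p.IsSqAddXMulSq :=
    Polynomial.isSqAddXMulSq_of_nonneg fun s hs ↦ by rw [eval_aeval_X_one]; exact h s hs
  have hp := natDegree_aeval_X_one_le hF
  obtain ⟨hP, hQ⟩ := Polynomial.natDegree_le_natDegree_sq_add_X_mul_sq P Q
  rw [← hPQ] at hP hQ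
  have hPm : P.natDegree ≤ m + 1 := by
    rw [Polynomial.natDegree_pow] at hP; lia
  have hQm : Q.natDegree ≤ m := by
    rcases eq_or_ne Q 0 with rfl | hQ0
    · simp
    rw [Polynomial.natDegree_X_mul (pow_ne_zero 2 hQ0), Polynomial.natDegree_pow] at hQ; lia
  refine ⟨homogenize P (m + 1), homogenize Q m, Polynomial.isHomogeneous_homogenize _, ?_⟩
  have hP2 : homogenize (P ^ 2) (2 * m + 2) = homogenize P (m + 1) ^ 2 := by
    rw [sq, sq, ← homogenize_mul _ _ hPm hPm]; congr 1; ring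
  have hQ2 : homogenize (.X * Q ^ 2) (2 * m + 2) = X 0 * X 1 * homogenize Q m ^ 2 := by
    rw [sq, sq, show 2 * m + 2 = 2 + (m + m) by ring, homogenize_mul _ _ (by simp)
      (Polynomial.natDegree_mul_le.trans (by lia)), homogenize_mul _ _ hQm hQm,
      Polynomial.homogenize_X two_ne_zero]
    ring
  rw [← Polynomial.homogenize_eq_of_isHomogeneous hF hPQ, homogenize_add, hP2, hQ2]

lemma IsHomogeneous.exists_eval_eq_quadratic {R : Type*} [CommSemiring R]
    {g : MvPolynomial (Fin 2) R} (hg : g.IsHomogeneous 2) :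
    ∃ a b c : R, ∀ x, eval x g = a * x 0 ^ 2 + b * x 0 * x 1 + c * x 1 ^ 2 := by
  set q := MvPolynomial.aeval (![.X, 1] : Fin 2 → R[X]) g
  refine ⟨q.coeff 2, q.coeff 1, q.coeff 0, fun x ↦ ?_⟩
  rw [← Polynomial.homogenize_eq_of_isHomogeneous hg rfl]
  simp [Polynomial.homogenize, Finset.Nat.antidiagonal_succ, eval_monomial,
    Finsupp.prod_fintype, Fin.prod_univ_two]
  ring

lemma eval_aeval_toMvPolynomial {R m n : Type*} [CommSemiring R] [Fintype n]
    (M : Matrix m n R) (p : MvPolynomial m R) (x : n → R) :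
    eval x (aeval M.toMvPolynomial p) = eval (M *ᵥ x) p := by
  rw [aeval_def, eval_eval₂, algebraMap_eq,
    show (eval x).comp C = RingHom.id R from RingHom.ext fun _ ↦ eval_C _]
  simp [Matrix.toMvPolynomial_eval_eq_apply]

lemma IsHomogeneous.exists_det_ne_zero_eval_eq_mul {g : MvPolynomial (Fin 2) ℝ}
    (hg : g.IsHomogeneous 2) {x z : Fin 2 → ℝ} (hx : 0 < eval x g) (hz : eval z g < 0) :
    ∃ N : Matrix (Fin 2) (Fin 2) ℝ, N.det ≠ 0 ∧ ∀ y, eval y g = (N *ᵥ y) 0 * (N *ᵥ y) 1 := by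
  obtain ⟨a, b, c, hg_eq⟩ := hg.exists_eval_eq_quadratic
  obtain ⟨N, hN, hgN⟩ := exists_det_ne_zero_eq_mul_of_discrim_pos
    (discrim_pos_of_indefinite (hg_eq x ▸ hx) (hg_eq z ▸ hz))
  exact ⟨N, hN, fun y ↦ (hg_eq y).trans (hgN y)⟩

theorem IsHomogeneous.exists_eval_eq_sq_add_mul_sq {f g : MvPolynomial (Fin 2) ℝ} {m : ℕ}
    (hf : f.IsHomogeneous (2 * m + 2)) {N : Matrix (Fin 2) (Fin 2) ℝ} (hN : N.det ≠ 0)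
    (hg : ∀ x, eval x g = (N *ᵥ x) 0 * (N *ᵥ x) 1) (hfg : ∀ x, 0 ≤ eval x g → 0 ≤ eval x f) :
    ∃ P Q : MvPolynomial (Fin 2) ℝ, Q.IsHomogeneous m ∧
      ∀ x, eval x f = eval x P ^ 2 + eval x g * eval x Q ^ 2 := by
  have hNN : ∀ y, N *ᵥ (N⁻¹ *ᵥ y) = y := fun y ↦ by
    rw [Matrix.mulVec_mulVec, Matrix.mul_nonsing_inv _ hN.isUnit, Matrix.one_mulVec]
  have hF : (MvPolynomial.aeval N⁻¹.toMvPolynomial f).IsHomogeneous (2 * m + 2) := by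
    simpa using hf.aeval _ N⁻¹.toMvPolynomial_isHomogeneous
  obtain ⟨P, Q, hQ, hPQ⟩ := hF.exists_eq_sq_add_X_mul_X_mul_sq fun s hs ↦ by
    rw [eval_aeval_toMvPolynomial]
    exact hfg _ (by rw [hg, hNN]; simpa using hs)
  refine ⟨MvPolynomial.aeval N.toMvPolynomial P, MvPolynomial.aeval N.toMvPolynomial Q,
    by simpa using hQ.aeval _ N.toMvPolynomial_isHomogeneous, fun x ↦ ?_⟩
  have hf_eq : eval x f = eval (N *ᵥ x) (MvPolynomial.aeval N⁻¹.toMvPolynomial f) := by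
    rw [eval_aeval_toMvPolynomial, Matrix.mulVec_mulVec, Matrix.nonsing_inv_mul _ hN.isUnit,
      Matrix.one_mulVec]
  simp only [hf_eq, hPQ, hg, map_add, map_mul, map_pow, eval_X, eval_aeval_toMvPolynomial]

end MvPolynomial

open MvPolynomial

theorem stmt_12 (f g : MvPolynomial (Fin 2) ℝ)
    (hf : f.IsHomogeneous 4) (hg : g.IsHomogeneous 2)
    (x' : Fin 2 → ℝ) (hx' : 0 < eval x' g) :
    {x : Fin 2 → ℝ | 0 ≤ eval x g} ⊆ {x : Fin 2 → ℝ | 0 ≤ eval x f} ↔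
      ∃ t : MvPolynomial (Fin 2) ℝ, (∃ m ≤ 2, t.IsHomogeneous m) ∧
        (∀ x : Fin 2 → ℝ, 0 ≤ eval x t) ∧
        ∀ x : Fin 2 → ℝ, 0 ≤ eval x f - eval x t * eval x g := by
  refine ⟨fun hsub ↦ ?_, fun ⟨t, _, ht, hft⟩ x (hx : 0 ≤ eval x g) ↦ ?_⟩
  · by_cases hf_nonneg : ∀ x, 0 ≤ eval x f
    · exact ⟨0, ⟨0, by simp, isHomogeneous_zero _ _ _⟩, by simp, by simpa using hf_nonneg⟩
    push Not at hf_nonneg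
    obtain ⟨z, hz⟩ := hf_nonneg
    have hgz : eval z g < 0 := lt_of_not_ge fun h ↦ hz.not_ge (hsub h)
    obtain ⟨N, hN, hg_mul⟩ := hg.exists_det_ne_zero_eval_eq_mul hx' hgz
    obtain ⟨P, Q, hQ, hfPQ⟩ := hf.exists_eval_eq_sq_add_mul_sq (m := 1) hN hg_mul fun x hx ↦ hsub hx
    refine ⟨Q ^ 2, ⟨2, le_rfl, hQ.pow 2⟩, fun x ↦ by simp only [map_pow]; positivity, fun x ↦ ?_⟩
    rw [hfPQ, map_pow]
    linarith [sq_nonneg (eval x P)]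
  · show 0 ≤ eval x f
    nlinarith [hft x, mul_nonneg (ht x) hx]
end

section
/- Let f = x₁³x₃ + x₁³x₂ + x₂²x₃² and g = x₁x₃ + x₂x₃ + x₁x₂. Then there is no nonnegative homogeneous polynomial t ∈ ℝ[x₁,x₂,x₃] of degree 2 such that f(y) − t(y)g(y) ≥ 0 for all y ∈ ℝ³. -/
/-!
Write `t = a x₀² + b x₀x₁ + c x₀x₂ + d x₁² + e x₁x₂ + k x₂²`. On the line `(0, L, 1)` we have
`f = L²` and `g = L`, so `t(0, L, 1) = dL² + eL + k ≤ L` for all `L > 0`, which forces `d = 0`;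
symmetrically `k = 0`. Nonnegativity of `t` then kills `e`, `b` and `c`, leaving `t = a x₀²`.
Finally the point `(1, -1, -1)` gives `a ≥ 1`, while `(2, 1, 1)` gives `20 a ≤ 17`.
-/

open MvPolynomial Finsupp

namespace MvPolynomial

section Ternary

variable {R : Type*} [CommSemiring R]

noncomputable def ternaryExp (i j k : ℕ) : Fin 3 →₀ ℕ := single 0 i + single 1 j + single 2 k

@[simp] lemma ternaryExp_apply_zero (i j k : ℕ) : ternaryExp i j k 0 = i := by
  simp [ternaryExp]

@[simp] lemma ternaryExp_apply_one (i j k : ℕ) : ternaryExp i j k 1 = j := by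
  simp [ternaryExp]

@[simp] lemma ternaryExp_apply_two (i j k : ℕ) : ternaryExp i j k 2 = k := by
  simp [ternaryExp]

lemma eq_ternaryExp (d : Fin 3 →₀ ℕ) : d = ternaryExp (d 0) (d 1) (d 2) := by
  ext a; fin_cases a <;> simp

lemma ternaryExp_inj {i j k i' j' k' : ℕ} :
    ternaryExp i j k = ternaryExp i' j' k' ↔ i = i' ∧ j = j' ∧ k = k' := by
  refine ⟨fun h => ?_, by rintro ⟨rfl, rfl, rfl⟩; rfl⟩
  have h0 := DFunLike.congr_fun h 0
  have h1 := DFunLike.congr_fun h 1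
  have h2 := DFunLike.congr_fun h 2
  simp only [ternaryExp_apply_zero, ternaryExp_apply_one, ternaryExp_apply_two] at h0 h1 h2
  exact ⟨h0, h1, h2⟩

lemma degree_ternaryExp (i j k : ℕ) : (ternaryExp i j k).degree = i + j + k := by
  simp [ternaryExp, map_add]

lemma eval_monomial_ternaryExp (y : Fin 3 → R) (i j k : ℕ) (r : R) :
    eval y (monomial (ternaryExp i j k) r) = r * y 0 ^ i * y 1 ^ j * y 2 ^ k := by
  simp [eval_monomial, Finsupp.prod_fintype, Fin.prod_univ_three, mul_assoc]

lemma IsHomogeneous.eq_sum_monomial_of_degree_two {t : MvPolynomial (Fin 3) R}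
    (ht : t.IsHomogeneous 2) :
    t = monomial (ternaryExp 2 0 0) (coeff (ternaryExp 2 0 0) t)
      + monomial (ternaryExp 1 1 0) (coeff (ternaryExp 1 1 0) t)
      + monomial (ternaryExp 1 0 1) (coeff (ternaryExp 1 0 1) t)
      + monomial (ternaryExp 0 2 0) (coeff (ternaryExp 0 2 0) t)
      + monomial (ternaryExp 0 1 1) (coeff (ternaryExp 0 1 1) t)
      + monomial (ternaryExp 0 0 2) (coeff (ternaryExp 0 0 2) t) := by
  ext d
  rw [eq_ternaryExp d]
  by_cases hd : d 0 + d 1 + d 2 = 2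
  · have : (d 0 = 2 ∧ d 1 = 0 ∧ d 2 = 0) ∨ (d 0 = 1 ∧ d 1 = 1 ∧ d 2 = 0)
        ∨ (d 0 = 1 ∧ d 1 = 0 ∧ d 2 = 1) ∨ (d 0 = 0 ∧ d 1 = 2 ∧ d 2 = 0)
        ∨ (d 0 = 0 ∧ d 1 = 1 ∧ d 2 = 1) ∨ (d 0 = 0 ∧ d 1 = 0 ∧ d 2 = 2) := by omega
    rcases this with ⟨h0, h1, h2⟩ | ⟨h0, h1, h2⟩ | ⟨h0, h1, h2⟩ | ⟨h0, h1, h2⟩ | ⟨h0, h1, h2⟩ |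
      ⟨h0, h1, h2⟩ <;> simp [h0, h1, h2, coeff_monomial, ternaryExp_inj]
  · rw [ht.coeff_eq_zero (by rwa [degree_ternaryExp])]
    simp only [coeff_add, coeff_monomial, ternaryExp_inj]
    split_ifs <;> first | omega | simp

lemma IsHomogeneous.eval_eq_of_degree_two {t : MvPolynomial (Fin 3) R} (ht : t.IsHomogeneous 2)
    (y : Fin 3 → R) :
    eval y t = coeff (ternaryExp 2 0 0) t * y 0 ^ 2 + coeff (ternaryExp 1 1 0) t * (y 0 * y 1)
      + coeff (ternaryExp 1 0 1) t * (y 0 * y 2) + coeff (ternaryExp 0 2 0) t * y 1 ^ 2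
      + coeff (ternaryExp 0 1 1) t * (y 1 * y 2) + coeff (ternaryExp 0 0 2) t * y 2 ^ 2 := by
  conv_lhs => rw [ht.eq_sum_monomial_of_degree_two]
  simp only [eval_add, eval_monomial_ternaryExp]
  ring

end Ternary

end MvPolynomial

lemma eq_zero_of_forall_nonneg_add_mul {a b : ℝ} (h : ∀ s, 0 ≤ a + b * s) : b = 0 := by
  by_contra hb
  have := h (-(a + 1) / b)
  rw [mul_div_cancel₀ _ hb] at this
  linarith

lemma nonpos_of_forall_quadratic_nonpos {d e k : ℝ} (h : ∀ L > 0, d * L ^ 2 + e * L + k ≤ 0) :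
    d ≤ 0 := by
  by_contra! hd
  set L := (|e| + |k|) / d + 1
  have hL : 1 ≤ L := by simp only [L]; linarith [div_nonneg (by positivity : 0 ≤ |e| + |k|) hd.le]
  have hdL : d * L = |e| + |k| + d := by simp only [L]; field_simp
  have := h L (by linarith)
  nlinarith [le_abs_self e, neg_abs_le e, neg_abs_le k, abs_nonneg k]

theorem false_of_quadratic_multiplier (q : ℝ → ℝ → ℝ → ℝ) (a b c d e k : ℝ)
    (hq : ∀ x y z, q x y z =
      a * x ^ 2 + b * (x * y) + c * (x * z) + d * y ^ 2 + e * (y * z) + k * z ^ 2)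
    (hq_nonneg : ∀ x y z, 0 ≤ q x y z)
    (hcert : ∀ x y z, q x y z * (x * z + y * z + x * y) ≤ x ^ 3 * z + x ^ 3 * y + y ^ 2 * z ^ 2) :
    False := by
  have hd : d = 0 := by
    refine le_antisymm (nonpos_of_forall_quadratic_nonpos (e := e - 1) (k := k) fun L hL => ?_)
      (by simpa [hq] using hq_nonneg 0 1 0)
    have := hcert 0 L 1
    simp only [hq] at this
    nlinarith
  have hk : k = 0 := by
    refine le_antisymm (nonpos_of_forall_quadratic_nonpos (e := e - 1) (k := d) fun L hL => ?_)
      (by simpa [hq] using hq_nonneg 0 0 1)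
    have := hcert 0 1 L
    simp only [hq] at this
    nlinarith
  have he : e = 0 := by
    have h₁ := hq_nonneg 0 1 1
    have h₂ := hq_nonneg 0 1 (-1)
    simp only [hq, hd, hk] at h₁ h₂
    linarith
  have hb : b = 0 :=
    eq_zero_of_forall_nonneg_add_mul fun s => by simpa [hq, hd] using hq_nonneg 1 s 0
  have hc : c = 0 :=
    eq_zero_of_forall_nonneg_add_mul fun s => by simpa [hq, hk] using hq_nonneg 1 0 s
  have h₁ := hcert 1 (-1) (-1)
  have h₂ := hcert 2 1 1
  simp only [hq, hb, hc, hd, he, hk] at h₁ h₂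
  linarith

theorem stmt_13 :
    ¬ ∃ t : MvPolynomial (Fin 3) ℝ, t.IsHomogeneous 2 ∧
      (∀ y : Fin 3 → ℝ, 0 ≤ eval y t) ∧
      ∀ y : Fin 3 → ℝ,
        0 ≤ (y 0) ^ 3 * y 2 + (y 0) ^ 3 * y 1 + (y 1) ^ 2 * (y 2) ^ 2
          - eval y t * (y 0 * y 2 + y 1 * y 2 + y 0 * y 1) := by
  rintro ⟨t, ht, ht_nonneg, hcert⟩
  refine false_of_quadratic_multiplier (fun x y z => eval ![x, y, z] t) _ _ _ _ _ _
    (fun x y z => ht.eval_eq_of_degree_two _) (fun x y z => ht_nonneg _) fun x y z => ?_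
  simpa using hcert ![x, y, z]
end

section
/- Let f = x₁³x₃ + x₁³x₂ + x₂²x₃² and g = x₁x₃ + x₂x₃ + x₁x₂. Then for every even n and every nonnegative homogeneous polynomial t ∈ ℝ[x₁,x₂,x₃] of degree n, there exists y ∈ ℝ³ with f(y) − t(y)g(y) < 0. -/
/-!
On the line `y = s • (1, -1, 0)` we have `f = -s⁴` and `g = -s²`, so
`f - t g = s² (t(1,-1,0) sⁿ - s²)`, which is negative for a suitable `s ≠ 0` unless `n = 2` and
`t(1,-1,0) ≥ 1`. Near `e₂` and `e₃`, `f - t g = u (u - t(y))` with `u > 0` small, so we may also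
assume `t(e₂) = t(e₃) = 0`. A nonnegative quadratic form is invariant under translation by its
zeros, hence `t(1, 1, 1/2) = t(1, -1, 0) ≥ 1`, and `f - t g = 7/4 - 2 t(1, 1, 1/2) < 0` there.
-/
open MvPolynomial Filter Topology

namespace MvPolynomial

variable {σ R : Type*} [CommSemiring R]

theorem IsHomogeneous.eval_smul {t : MvPolynomial σ R} {n : ℕ} (ht : t.IsHomogeneous n)
    (r : R) (y : σ → R) : eval (r • y) t = r ^ n * eval y t := by
  rw [eval_eq, eval_eq, Finset.mul_sum]
  refine Finset.sum_congr rfl fun d hd => ?_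
  have hdeg : ∑ i ∈ d.support, d i = n := by
    rw [← Finsupp.degree_apply, Finsupp.degree_eq_weight_one]
    exact ht (mem_support_iff.mp hd)
  simp only [Pi.smul_apply, smul_eq_mul, mul_pow, Finset.prod_mul_distrib,
    Finset.prod_pow_eq_pow_sum, hdeg]
  ring

theorem _root_.Finsupp.exists_eq_single_add_single_of_degree_eq_two_s14 {d : σ →₀ ℕ}
    (hd : d.degree = 2) : ∃ i j, d = Finsupp.single i 1 + Finsupp.single j 1 := by
  obtain ⟨i, j, h⟩ := Multiset.card_eq_two.mp (by rw [Finsupp.card_toMultiset]; exact hd)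
  classical
  refine ⟨i, j, ?_⟩
  rw [← Finsupp.toMultiset_toFinsupp d, h, Multiset.insert_eq_cons, ← Multiset.singleton_add,
    Multiset.toFinsupp_add, Multiset.toFinsupp_singleton, Multiset.toFinsupp_singleton]

theorem IsHomogeneous.exists_quadraticMap {t : MvPolynomial σ R} (ht : t.IsHomogeneous 2) :
    ∃ Q : QuadraticMap R (σ → R) R, ∀ y, eval y t = Q y := by
  have hmem : t ∈ homogeneousSubmodule σ R 2 := ht
  rw [homogeneousSubmodule_eq_finsupp_supported, AddMonoidAlgebra.supported_eq_span_single] at hmem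
  clear ht
  induction hmem using Submodule.span_induction with
  | mem p hp =>
    obtain ⟨d, hd, rfl⟩ := hp
    obtain ⟨i, j, rfl⟩ := Finsupp.exists_eq_single_add_single_of_degree_eq_two_s14 hd
    refine ⟨QuadraticMap.linMulLin (LinearMap.proj i) (LinearMap.proj j), fun y => ?_⟩
    dsimp only
    rw [single_eq_monomial, ← one_mul (1 : R), ← monomial_mul, ← X, ← X]
    simp
  | zero => exact ⟨0, by simp⟩
  | add p q _ _ hp hq =>
    obtain ⟨P, hP⟩ := hp
    obtain ⟨Q, hQ⟩ := hq
    exact ⟨P + Q, by simp [hP, hQ]⟩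
  | smul a p _ hp =>
    obtain ⟨P, hP⟩ := hp
    exact ⟨a • P, by simp [hP]⟩

end MvPolynomial

theorem QuadraticMap.map_add_smul_of_nonneg_of_eq_zero {R M : Type*} [Field R] [LinearOrder R]
    [IsStrictOrderedRing R] [AddCommGroup M] [Module R M] {Q : QuadraticMap R M R}
    (hQ : ∀ x, 0 ≤ Q x) {v : M} (hv : Q v = 0) (x : M) (s : R) : Q (x + s • v) = Q x := by
  have hline : ∀ s : R, Q (x + s • v) = Q x + s * polar Q x v := fun s => by
    rw [QuadraticMap.map_add Q, QuadraticMap.map_smul, polar_smul_right, hv, smul_eq_mul,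
      smul_eq_mul]
    ring
  suffices hp : polar Q x v = 0 by rw [hline, hp, mul_zero, add_zero]
  by_contra hp
  have := hQ (x + (-(Q x + 1) / polar Q x v) • v)
  rw [hline, div_mul_cancel₀ _ hp] at this
  linarith

theorem exists_pos_lt_of_continuous {φ : ℝ → ℝ} (hφ : Continuous φ) (h0 : 0 < φ 0) :
    ∃ u > 0, u < φ u := by
  have hlim : Tendsto (fun u => φ u - u) (𝓝[>] 0) (𝓝 (φ 0 - 0)) :=
    ((hφ.sub continuous_id).tendsto 0).mono_left nhdsWithin_le_nhds
  obtain ⟨u, hpos, hu⟩ :=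
    ((hlim.eventually (lt_mem_nhds (by simpa using h0))).and self_mem_nhdsWithin).exists
  exact ⟨u, hu, sub_pos.mp hpos⟩

theorem exists_ne_zero_mul_pow_lt_sq {c : ℝ} (hc : 0 ≤ c) {n : ℕ} (hn : n ≠ 2) :
    ∃ s : ℝ, s ≠ 0 ∧ c * s ^ n < s ^ 2 := by
  rcases hn.lt_or_gt with hn | hn
  · refine ⟨c + 1, by positivity, ?_⟩
    calc c * (c + 1) ^ n ≤ c * (c + 1) ^ 1 := by gcongr <;> [linarith; omega]
      _ < (c + 1) ^ 2 := by nlinarith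
  · have hs : 0 < (c + 1)⁻¹ := by positivity
    have hs1 : (c + 1)⁻¹ ≤ 1 := inv_le_one_of_one_le₀ (by linarith)
    have hcs : c * (c + 1)⁻¹ < 1 := by rw [← div_eq_mul_inv, div_lt_one (by linarith)]; linarith
    refine ⟨(c + 1)⁻¹, hs.ne', ?_⟩
    calc c * (c + 1)⁻¹ ^ n ≤ c * (c + 1)⁻¹ ^ 3 :=
          mul_le_mul_of_nonneg_left (pow_le_pow_of_le_one hs.le hs1 hn) hc
      _ = c * (c + 1)⁻¹ * (c + 1)⁻¹ ^ 2 := by ring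
      _ < (c + 1)⁻¹ ^ 2 := mul_lt_of_lt_one_left (by positivity) hcs

def quarticF (y : Fin 3 → ℝ) : ℝ := y 0 ^ 3 * y 2 + y 0 ^ 3 * y 1 + y 1 ^ 2 * y 2 ^ 2

def quadraticG (y : Fin 3 → ℝ) : ℝ := y 0 * y 2 + y 1 * y 2 + y 0 * y 1

section

variable {t : MvPolynomial (Fin 3) ℝ}

theorem exists_neg_of_mul_pow_lt_sq {n : ℕ} (ht : t.IsHomogeneous n) {s : ℝ} (hs : s ≠ 0)
    (h : eval ![1, -1, 0] t * s ^ n < s ^ 2) :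
    ∃ y, quarticF y - eval y t * quadraticG y < 0 := by
  refine ⟨s • ![1, -1, 0], ?_⟩
  have hval : quarticF (s • ![1, -1, 0])
      - eval (s • ![1, -1, 0]) t * quadraticG (s • ![1, -1, 0])
      = s ^ 2 * (eval ![1, -1, 0] t * s ^ n - s ^ 2) := by
    simp only [ht.eval_smul, quarticF, quadraticG, Pi.smul_apply, smul_eq_mul, Matrix.cons_val]
    ring
  rw [hval]
  exact mul_neg_of_pos_of_neg (by positivity) (sub_neg.mpr h)

theorem exists_neg_of_eval_e₂_pos (h : 0 < eval ![0, 1, 0] t) :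
    ∃ y, quarticF y - eval y t * quadraticG y < 0 := by
  obtain ⟨u, hu, hlt⟩ := exists_pos_lt_of_continuous (φ := fun u => eval ![0, 1, u] t)
    ((continuous_eval t).comp (by fun_prop)) h
  refine ⟨![0, 1, u], ?_⟩
  have hval : quarticF ![0, 1, u] - eval ![0, 1, u] t * quadraticG ![0, 1, u]
      = u * (u - eval ![0, 1, u] t) := by
    simp only [quarticF, quadraticG, Matrix.cons_val]
    ring
  rw [hval]
  exact mul_neg_of_pos_of_neg hu (sub_neg.mpr hlt)

theorem exists_neg_of_eval_e₃_pos (h : 0 < eval ![0, 0, 1] t) :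
    ∃ y, quarticF y - eval y t * quadraticG y < 0 := by
  obtain ⟨u, hu, hlt⟩ := exists_pos_lt_of_continuous (φ := fun u => eval ![0, u, 1] t)
    ((continuous_eval t).comp (by fun_prop)) h
  refine ⟨![0, u, 1], ?_⟩
  have hval : quarticF ![0, u, 1] - eval ![0, u, 1] t * quadraticG ![0, u, 1]
      = u * (u - eval ![0, u, 1] t) := by
    simp only [quarticF, quadraticG, Matrix.cons_val]
    ring
  rw [hval]
  exact mul_neg_of_pos_of_neg hu (sub_neg.mpr hlt)

theorem exists_neg_of_isHomogeneous_two (ht : t.IsHomogeneous 2) (htnn : ∀ y, 0 ≤ eval y t)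
    (h₂ : eval ![0, 1, 0] t = 0) (h₃ : eval ![0, 0, 1] t = 0) (h : 1 ≤ eval ![1, -1, 0] t) :
    ∃ y, quarticF y - eval y t * quadraticG y < 0 := by
  obtain ⟨Q, hQ⟩ := ht.exists_quadraticMap
  simp only [hQ] at htnn h₂ h₃ h
  have hQy : Q ![1, 1, 1 / 2] = Q ![1, -1, 0] := by
    have e₁ : (![1, 1, 1 / 2] : Fin 3 → ℝ)
        = ![1, 0, 0] + (1 : ℝ) • ![0, 1, 0] + (1 / 2 : ℝ) • ![0, 0, 1] := by
      ext i; fin_cases i <;> simp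
    have e₂ : (![1, -1, 0] : Fin 3 → ℝ) = ![1, 0, 0] + (-1 : ℝ) • ![0, 1, 0] := by
      ext i; fin_cases i <;> simp
    rw [e₁, e₂, Q.map_add_smul_of_nonneg_of_eq_zero htnn h₃,
      Q.map_add_smul_of_nonneg_of_eq_zero htnn h₂, Q.map_add_smul_of_nonneg_of_eq_zero htnn h₂]
  refine ⟨![1, 1, 1 / 2], ?_⟩
  simp only [quarticF, quadraticG, hQ, hQy, Matrix.cons_val]
  linarith

end

theorem stmt_14_general (n : ℕ) (t : MvPolynomial (Fin 3) ℝ)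
    (ht : t.IsHomogeneous n) (htnn : ∀ y : Fin 3 → ℝ, 0 ≤ eval y t) :
    ∃ y : Fin 3 → ℝ,
      (y 0) ^ 3 * y 2 + (y 0) ^ 3 * y 1 + (y 1) ^ 2 * (y 2) ^ 2
        - eval y t * (y 0 * y 2 + y 1 * y 2 + y 0 * y 1) < 0 := by
  by_cases hline : ∃ s : ℝ, s ≠ 0 ∧ eval ![1, -1, 0] t * s ^ n < s ^ 2
  · obtain ⟨s, hs, h⟩ := hline
    exact exists_neg_of_mul_pow_lt_sq ht hs h
  push Not at hline
  obtain rfl : n = 2 := by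
    by_contra hn
    obtain ⟨s, hs, h⟩ := exists_ne_zero_mul_pow_lt_sq (htnn ![1, -1, 0]) hn
    exact (hline s hs).not_gt h
  rcases (htnn ![0, 1, 0]).eq_or_lt with h₂ | h₂
  · rcases (htnn ![0, 0, 1]).eq_or_lt with h₃ | h₃
    · exact exists_neg_of_isHomogeneous_two ht htnn h₂.symm h₃.symm
        (by simpa using hline 1 one_ne_zero)
    · exact exists_neg_of_eval_e₃_pos h₃
  · exact exists_neg_of_eval_e₂_pos h₂

theorem stmt_14 (n : ℕ) (hn : Even n) (t : MvPolynomial (Fin 3) ℝ)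
    (ht : t.IsHomogeneous n) (htnn : ∀ y : Fin 3 → ℝ, 0 ≤ eval y t) :
    ∃ y : Fin 3 → ℝ,
      (y 0) ^ 3 * y 2 + (y 0) ^ 3 * y 1 + (y 1) ^ 2 * (y 2) ^ 2
        - eval y t * (y 0 * y 2 + y 1 * y 2 + y 0 * y 1) < 0 :=
  stmt_14_general n t ht htnn
end

section
/- Let f = x₁³x₃ + x₁³x₂ + x₂²x₃² and g = x₁x₃ + x₂x₃ + x₁x₂. Then f does not belong to the preordering generated by g in ℝ[x₁,x₂,x₃]; that is, there are no sums of squares σ₁, σ₂ ∈ ℝ[x₁,x₂,x₃] with f = σ₁ + σ₂·g. -/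
/-!
Suppose `f = Σ pᵢ² + g Σ qⱼ²`. On a ray `t ↦ t • x` through a point `x` of the positive orthant,
where `g(x) > 0`, the identity reads `f(x) t⁴ = Σ pᵢ(tx)² + g(x) t² Σ qⱼ(tx)²` in `ℝ[t]`. The
extreme coefficients of a sum of squares with positive weights cannot cancel, so each `qⱼ(tx)` is a
multiple of `t`: every `qⱼ` is a linear form. Along the curves `(s², 1, 0)` and `(s², 0, 1)` the
identity becomes `s⁶ = Σ pᵢ² + s² Σ qⱼ²`, which by the same argument forces
`qⱼ(0, 1, 0) = qⱼ(0, 0, 1) = 0`, so `qⱼ = αⱼ x₀`. Then `f - (Σ αⱼ²) x₀² g = Σ pᵢ²` is nonnegative,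
but its values at `(1, -1, 0)` and `(1, 1, 1/2)` give `Σ αⱼ² ≥ 1` and `Σ αⱼ² ≤ 7/8`.
-/

open scoped Polynomial

theorem IsSumSq.exists_fin_sum_sq {R : Type*} [CommSemiring R] {s : R} (h : IsSumSq s) :
    ∃ (n : ℕ) (a : Fin n → R), s = ∑ i, a i ^ 2 := by
  induction h with
  | zero => exact ⟨0, Fin.elim0, by simp⟩
  | sq_add a _ ih =>
    obtain ⟨n, b, rfl⟩ := ih
    exact ⟨n + 1, Fin.cons a b, by simp [Fin.sum_univ_succ, sq]⟩

section WeightedSumSq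

variable {R : Type*} [CommRing R] [LinearOrder R] [IsStrictOrderedRing R]
  {ι : Type*} [Fintype ι] {w : ι → R}

theorem eq_zero_of_sum_mul_sq_eq_zero (hw : ∀ i, 0 < w i) {x : ι → R}
    (h : ∑ i, w i * x i ^ 2 = 0) (i : ι) : x i = 0 := by
  have hterm := (Finset.sum_eq_zero_iff_of_nonneg fun j _ ↦
    mul_nonneg (hw j).le (sq_nonneg (x j))).1 h i (Finset.mem_univ i)
  exact pow_eq_zero_iff two_ne_zero |>.1 ((mul_eq_zero.1 hterm).resolve_left (hw i).ne')

namespace Polynomial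

variable {c : ι → R[X]}

theorem coeff_eq_zero_of_coeff_sum_C_mul_sq_eq_zero (hw : ∀ i, 0 < w i) {N : ℕ}
    (hsq : ∀ i, (c i ^ 2).coeff (2 * N) = (c i).coeff N ^ 2)
    (h : (∑ i, C (w i) * c i ^ 2).coeff (2 * N) = 0) (i : ι) : (c i).coeff N = 0 := by
  simp only [finsetSum_coeff, coeff_C_mul, hsq] at h
  exact eq_zero_of_sum_mul_sq_eq_zero hw h i

theorem natDegree_le_of_natDegree_sum_C_mul_sq_le (hw : ∀ i, 0 < w i) {k : ℕ}
    (h : (∑ i, C (w i) * c i ^ 2).natDegree ≤ 2 * k) (i : ι) : (c i).natDegree ≤ k := by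
  suffices ∀ n, (∀ i, (c i).natDegree ≤ k + n) → ∀ i, (c i).natDegree ≤ k from
    this _ (fun i ↦ (Finset.le_sup (f := fun i ↦ (c i).natDegree) (Finset.mem_univ i)).trans
      (Nat.le_add_left _ _)) i
  intro n
  induction n with
  | zero => exact id
  | succ n ih =>
    intro hc
    refine ih fun i ↦ natDegree_le_pred (hc i) ?_
    refine coeff_eq_zero_of_coeff_sum_C_mul_sq_eq_zero hw (fun i ↦ ?_) ?_ i
    · exact coeff_pow_of_natDegree_le (hc i)
    · exact coeff_eq_zero_of_natDegree_lt (by omega)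

theorem X_pow_dvd_of_X_pow_dvd_sum_C_mul_sq (hw : ∀ i, 0 < w i) {k : ℕ}
    (h : X ^ (2 * k) ∣ ∑ i, C (w i) * c i ^ 2) (i : ι) : X ^ k ∣ c i := by
  induction k generalizing i with
  | zero => simp
  | succ k ih =>
    have hk : ∀ i, X ^ k ∣ c i := ih ((pow_dvd_pow X (by omega)).trans h)
    have hsq : ∀ i, (c i ^ 2).coeff (2 * k) = (c i).coeff k ^ 2 := fun i ↦ by
      obtain ⟨e, he⟩ := hk i
      rw [he, mul_pow, ← pow_mul, coeff_X_pow_mul', coeff_X_pow_mul', mul_comm k 2]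
      simp [sq, mul_coeff_zero]
    have hck := coeff_eq_zero_of_coeff_sum_C_mul_sq_eq_zero hw hsq
      (X_pow_dvd_iff.1 h _ (by omega)) i
    refine X_pow_dvd_iff.2 fun d hd ↦ ?_
    rcases (Nat.lt_succ_iff.1 hd).lt_or_eq with hd | rfl
    · exact X_pow_dvd_iff.1 (hk i) d hd
    · exact hck

theorem coeff_eq_zero_of_sum_C_mul_sq_eq_C_mul_X_pow (hw : ∀ i, 0 < w i) {r : R} {k : ℕ}
    (h : ∑ i, C (w i) * c i ^ 2 = C r * X ^ (2 * k)) (i : ι) {d : ℕ} (hd : d ≠ k) :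
    (c i).coeff d = 0 := by
  rcases hd.lt_or_gt with hlt | hgt
  · exact X_pow_dvd_iff.1 (X_pow_dvd_of_X_pow_dvd_sum_C_mul_sq hw (h ▸ dvd_mul_left _ _) i) d hlt
  · refine coeff_eq_zero_of_natDegree_lt (lt_of_le_of_lt ?_ hgt)
    exact natDegree_le_of_natDegree_sum_C_mul_sq_le hw (h ▸ natDegree_C_mul_X_pow_le r _) i

theorem coeff_apply_eq_zero_of_eq_sum_sq_add_mul_sum_sq {A : Type*} [CommRing A]
    (φ : A →+* R[X]) {κ : Type*} [Fintype κ] {a : ι → A} {b : κ → A} {f g : A} {r w : R}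
    (hw : 0 < w) {k l : ℕ} (hf : φ f = C r * X ^ (2 * (k + l))) (hg : φ g = C w * X ^ (2 * l))
    (h : f = ∑ i, a i ^ 2 + g * ∑ j, b j ^ 2) (j : κ) {d : ℕ} (hd : d ≠ k) :
    (φ (b j)).coeff d = 0 := by
  have hsum : ∑ x : ι ⊕ κ, C (Sum.elim (fun _ ↦ 1) (fun _ ↦ w) x) *
      Sum.elim (fun i ↦ φ (a i)) (fun j ↦ X ^ l * φ (b j)) x ^ 2 = C r * X ^ (2 * (k + l)) := by
    rw [Fintype.sum_sum_type, ← hf, h]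
    simp only [Sum.elim_inl, Sum.elim_inr, map_one, one_mul, map_add, map_mul, map_sum, map_pow,
      hg, Finset.mul_sum]
    congr 1
    refine Finset.sum_congr rfl fun j _ ↦ ?_
    ring
  have hpos : ∀ x : ι ⊕ κ, 0 < Sum.elim (fun _ ↦ (1 : R)) (fun _ ↦ w) x := by
    rintro (_ | _) <;> simp [hw]
  simpa [coeff_X_pow_mul] using
    coeff_eq_zero_of_sum_C_mul_sq_eq_C_mul_X_pow hpos hsum (Sum.inr j) (d := d + l) (by omega)

end Polynomial

end WeightedSumSq

namespace MvPolynomial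

section RayEval

variable {R σ : Type*} [CommRing R]

/-- The polynomial `t ↦ p (t • x)`. -/
noncomputable def rayEval (x : σ → R) : MvPolynomial σ R →ₐ[R] R[X] :=
  aeval fun i ↦ Polynomial.C (x i) * Polynomial.X

theorem rayEval_monomial (x : σ → R) (d : σ →₀ ℕ) (a : R) :
    rayEval x (monomial d a) = Polynomial.C (eval x (monomial d a)) * Polynomial.X ^ d.degree := by
  simp only [rayEval, aeval_monomial, eval_monomial, mul_pow, Finsupp.prod_mul, ← map_pow,
    Polynomial.algebraMap_eq, map_mul]
  rw [mul_assoc, map_finsuppProd, Finsupp.degree_apply, Finsupp.prod, Finsupp.prod,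
    Finset.prod_pow_eq_pow_sum]

theorem coeff_rayEval (x : σ → R) (p : MvPolynomial σ R) (n : ℕ) :
    (rayEval x p).coeff n = eval x (homogeneousComponent n p) := by
  induction p using MvPolynomial.induction_on' with
  | monomial d a =>
    rw [rayEval_monomial, Polynomial.coeff_C_mul_X_pow,
      homogeneousComponent_of_mem (isHomogeneous_monomial a rfl)]
    split_ifs <;> simp
  | add p q hp hq => simp [hp, hq]

theorem rayEval_of_isHomogeneous {p : MvPolynomial σ R} {n : ℕ} (hp : p.IsHomogeneous n)
    (x : σ → R) : rayEval x p = Polynomial.C (eval x p) * Polynomial.X ^ n := by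
  ext d
  rw [coeff_rayEval, Polynomial.coeff_C_mul_X_pow, homogeneousComponent_of_mem hp]
  split_ifs <;> simp

end RayEval

theorem isHomogeneous_of_homogeneousComponent_eq_zero {R σ : Type*} [CommSemiring R]
    {p : MvPolynomial σ R} {n : ℕ} (h : ∀ d ≠ n, homogeneousComponent d p = 0) :
    p.IsHomogeneous n := by
  intro m hm
  by_contra hne
  have hne' : m.degree ≠ n := by rwa [Finsupp.degree_eq_weight_one]
  apply hm
  simpa [h _ hne'] using (coeff_homogeneousComponent (φ := p) m.degree m).symm

theorem isHomogeneous_of_eq_sum_sq_add_mul_sum_sq {R σ : Type*} [Field R] [LinearOrder R]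
    [IsStrictOrderedRing R] {ι κ : Type*} [Fintype ι] [Fintype κ] {f g : MvPolynomial σ R}
    {k l : ℕ} (hf : f.IsHomogeneous (2 * (k + l))) (hg : g.IsHomogeneous (2 * l))
    (hg_pos : ∀ x : σ → R, (∀ i, 0 < x i) → 0 < eval x g)
    {a : ι → MvPolynomial σ R} {b : κ → MvPolynomial σ R}
    (h : f = ∑ i, a i ^ 2 + g * ∑ j, b j ^ 2) (j : κ) : (b j).IsHomogeneous k := by
  refine isHomogeneous_of_homogeneousComponent_eq_zero fun d hd ↦ ?_
  refine funext_set (fun _ ↦ Set.Ioi 0) (fun _ ↦ Set.Ioi_infinite 0) fun x hx ↦ ?_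
  rw [map_zero, ← coeff_rayEval]
  exact Polynomial.coeff_apply_eq_zero_of_eq_sum_sq_add_mul_sum_sq (rayEval x).toRingHom
    (hg_pos x fun i ↦ hx i (Set.mem_univ i)) (rayEval_of_isHomogeneous hf x)
    (rayEval_of_isHomogeneous hg x) h j hd

theorem IsHomogeneous.eval_eq_sum_mul_eval_single {R σ : Type*} [CommRing R] [Fintype σ]
    [DecidableEq σ] {q : MvPolynomial σ R} (hq : q.IsHomogeneous 1) (x : σ → R) :
    eval x q = ∑ i, x i * eval (Pi.single i 1) q := by
  have hspan : q ∈ Submodule.span R (Set.range X) :=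
    homogeneousSubmodule_one_eq_span_X (σ := σ) (R := R) ▸ hq
  clear hq
  induction hspan using Submodule.span_induction with
  | mem _ h =>
    obtain ⟨i, rfl⟩ := h
    simp [Pi.single_apply]
  | zero => simp
  | add p q _ _ hp hq => simp [hp, hq, mul_add, Finset.sum_add_distrib]
  | smul a p _ hp => simp [hp, Finset.mul_sum, mul_left_comm]

theorem coeff_zero_aeval {R σ : Type*} [CommRing R] (v : σ → R[X]) (p : MvPolynomial σ R) :
    (aeval v p).coeff 0 = eval (fun i ↦ (v i).coeff 0) p := by
  rw [Polynomial.coeff_zero_eq_eval_zero, ← Polynomial.coe_aeval_eq_eval, ← AlgHom.comp_apply,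
    comp_aeval, ← coe_aeval_eq_eval]
  simp [Polynomial.coeff_zero_eq_eval_zero]

end MvPolynomial

open MvPolynomial

noncomputable def quartic : MvPolynomial (Fin 3) ℝ :=
  X 0 ^ 3 * X 2 + X 0 ^ 3 * X 1 + X 1 ^ 2 * X 2 ^ 2

noncomputable def quadric : MvPolynomial (Fin 3) ℝ :=
  X 0 * X 2 + X 1 * X 2 + X 0 * X 1

theorem quartic_isHomogeneous : quartic.IsHomogeneous (2 * (1 + 1)) :=
  ((isHomogeneous_X_pow _ 3).mul (isHomogeneous_X _ _)).add
    ((isHomogeneous_X_pow _ 3).mul (isHomogeneous_X _ _)) |>.add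
    ((isHomogeneous_X_pow _ 2).mul (isHomogeneous_X_pow _ 2))

theorem quadric_isHomogeneous : quadric.IsHomogeneous (2 * 1) :=
  ((isHomogeneous_X ℝ 0).mul (isHomogeneous_X _ _)).add
    ((isHomogeneous_X _ _).mul (isHomogeneous_X _ _)) |>.add
    ((isHomogeneous_X _ _).mul (isHomogeneous_X _ _))

theorem eval_quadric_pos {x : Fin 3 → ℝ} (hx : ∀ i, 0 < x i) : 0 < eval x quadric := by
  have := hx 0; have := hx 1; have := hx 2
  simp only [quadric, map_add, map_mul, eval_X]
  positivity

theorem eval_single_eq_zero_of_quartic_eq {ι κ : Type*} [Fintype ι] [Fintype κ]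
    {p : ι → MvPolynomial (Fin 3) ℝ} {q : κ → MvPolynomial (Fin 3) ℝ}
    (h : quartic = ∑ i, p i ^ 2 + quadric * ∑ j, q j ^ 2) (j : κ) {i : Fin 3} (hi : i ≠ 0) :
    eval (Pi.single i 1) (q j) = 0 := by
  suffices key : ∃ v : Fin 3 → ℝ[X],
      aeval v quartic = Polynomial.C 1 * Polynomial.X ^ (2 * (2 + 1)) ∧
      aeval v quadric = Polynomial.C 1 * Polynomial.X ^ (2 * 1) ∧
      (fun k ↦ (v k).coeff 0) = Pi.single i 1 by
    obtain ⟨v, hf, hg, hv⟩ := key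
    rw [← hv, ← coeff_zero_aeval]
    exact Polynomial.coeff_apply_eq_zero_of_eq_sum_sq_add_mul_sum_sq (aeval v).toRingHom one_pos
      hf hg h j two_ne_zero.symm
  fin_cases i
  · exact absurd rfl hi
  · refine ⟨![Polynomial.X ^ 2, 1, 0], by simp [quartic]; ring, by simp [quadric], ?_⟩
    ext k; fin_cases k <;> simp
  · refine ⟨![Polynomial.X ^ 2, 0, 1], by simp [quartic]; ring, by simp [quadric], ?_⟩
    ext k; fin_cases k <;> simp

theorem stmt_15 :
    ¬ ∃ σ₁ σ₂ : MvPolynomial (Fin 3) ℝ, IsSumSq σ₁ ∧ IsSumSq σ₂ ∧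
      (X 0 : MvPolynomial (Fin 3) ℝ) ^ 3 * X 2 + (X 0) ^ 3 * X 1 + (X 1) ^ 2 * (X 2) ^ 2 =
        σ₁ + σ₂ * (X 0 * X 2 + X 1 * X 2 + X 0 * X 1) := by
  rintro ⟨σ₁, σ₂, h₁, h₂, h⟩
  obtain ⟨m, p, rfl⟩ := h₁.exists_fin_sum_sq
  obtain ⟨n, q, rfl⟩ := h₂.exists_fin_sum_sq
  replace h : quartic = ∑ i, p i ^ 2 + quadric * ∑ j, q j ^ 2 := by rw [mul_comm]; exact h
  obtain ⟨α, hq⟩ : ∃ α : Fin n → ℝ, ∀ j x, eval x (q j) = x 0 * α j := ⟨_, fun j x ↦ by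
    rw [(isHomogeneous_of_eq_sum_sq_add_mul_sum_sq quartic_isHomogeneous quadric_isHomogeneous
      (fun _ ↦ eval_quadric_pos) h j).eval_eq_sum_mul_eval_single, Fin.sum_univ_three,
      eval_single_eq_zero_of_quartic_eq h j one_ne_zero,
      eval_single_eq_zero_of_quartic_eq h j (i := 2) (by decide)]
    ring⟩
  have e₁ := congrArg (eval ![1, -1, 0]) h
  have e₂ := congrArg (eval ![1, 1, 1 / 2]) h
  simp only [quartic, quadric, map_add, map_mul, map_pow, map_sum, eval_X, hq, Matrix.cons_val,
    one_mul] at e₁ e₂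
  norm_num at e₁ e₂
  linarith [show 0 ≤ ∑ i, eval ![(1 : ℝ), -1, 0] (p i) ^ 2 by positivity,
    show 0 ≤ ∑ i, eval ![(1 : ℝ), 1, 1 / 2] (p i) ^ 2 by positivity]
end
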